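/- arXiv:2008.12183 — 11 statements merged into one kernel-verified Lean document; each statement's English description precedes it below -/
import Mathlib

section
/- Let n, k be odd positive integers with gcd(n,k)=1 and let d be an even positive integer such that ((3^k+1)/2)·d ≡ (3^n+1)/2 (mod 3^n−1). Then for the power function f(x)=x^d on F_{3^n} and c = −1 one has _cΔ_f ≤ 6; equivalently, for every a, b ∈ F_{3^n} the equation (x+a)^d + x^d = b has at most 6 solutions x ∈ F_{3^n}. -/
/-!
Put `q = 3 ^ n`, `M = 3 ^ k + 1` and, for a solution `x`, `u = x ^ (d / 2)` and
`v = (x + a) ^ (d / 2)`. Then `u² + v² = b`, and the congruence on `d` gives `u ^ M = χ(x) x` and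
`v ^ M = χ(x + a) (x + a)` for the quadratic character `χ`. As `n` is odd, `-1` is not a square
in `F`, so `z = u + i v` lives in the quadratic extension, where `z ^ q = z̄ = u - i v`. Hence
`z ^ (q + 1) = b`, while `z ^ M` and `z̄ ^ M` have sum `2 (u ^ M + v ^ M)` and product `b ^ M`:
on a class of solutions where `u ^ M + v ^ M` is fixed, `z ^ M` is one of two roots of a fixed
quadratic. Two such `z` differ by a `ζ` with `ζ ^ (q + 1) = ζ ^ M = 1`, so `ζ ^ 4 = 1` (as
`gcd(n, k) = 1` and `k` is odd), which leaves two values for `u ^ M`, hence for `x`. The same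
argument with `z ^ (3 ^ k + q)` and `ζ ^ 2 = 1` applies where `u ^ M - v ^ M` is fixed. So the
classes with `χ(x) = -χ(x + a)` have at most 2 elements and those with `χ(x) = χ(x + a)` at most
one. If `b ≠ a ^ d`, neither `0` nor `-a` is a solution; if `b = a ^ d`, the pair
`(a ^ (d / 2), 0)` coming from `x = 0` forces `u v = 0` on the class `χ(x + a) = χ(a) = -χ(x)`,
which is thus empty.
-/

theorem three_pow_mod_eight {m : ℕ} (hm : Odd m) : 3 ^ m % 8 = 3 := by
  obtain ⟨j, rfl⟩ := hm
  rw [pow_succ, pow_mul, Nat.mul_mod, Nat.pow_mod]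
  norm_num

theorem three_pow_mod_four {m : ℕ} (hm : Odd m) : 3 ^ m % 4 = 3 := by
  rw [← Nat.mod_mod_of_dvd _ (by norm_num : 4 ∣ 8), three_pow_mod_eight hm]

section Monoid

variable {M : Type*} [Monoid M] {x : M} {n k : ℕ}

theorem pow_pow_two_mul_sub_one_eq_one {p : ℕ} (h : x ^ (p ^ n + 1) = 1) :
    x ^ (p ^ (2 * n) - 1) = 1 := by
  rw [mul_comm, pow_mul, ← one_pow 2, Nat.sq_sub_sq, pow_mul, h, one_pow]

theorem pow_four_eq_one_of_pow_three_pow_add_one_eq_one (hnk : n.Coprime k) (hk : Odd k)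
    (hxn : x ^ (3 ^ n + 1) = 1) (hxk : x ^ (3 ^ k + 1) = 1) : x ^ 4 = 1 := by
  have h8 : x ^ 8 = 1 := by
    have := pow_gcd_eq_one.mpr
      ⟨pow_pow_two_mul_sub_one_eq_one hxn, pow_pow_two_mul_sub_one_eq_one hxk⟩
    rwa [Nat.pow_sub_one_gcd_pow_sub_one, Nat.gcd_mul_left, hnk] at this
  have hgcd : Nat.gcd 8 (3 ^ k + 1) = 4 := by
    rw [Nat.gcd_rec, Nat.add_mod, three_pow_mod_eight hk]
    rfl
  rw [← hgcd]
  exact pow_gcd_eq_one.mpr ⟨h8, hxk⟩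

theorem sq_eq_one_of_pow_three_pow_sub_one_eq_one (hnk : n.Coprime k) (hk : Odd k)
    (hxn : x ^ (3 ^ n + 1) = 1) (hxk : x ^ (3 ^ k - 1) = 1) : x ^ 2 = 1 := by
  have hcop : k.Coprime (2 * n) :=
    Nat.Coprime.mul_right (Nat.coprime_two_right.mpr hk) hnk.symm
  have := pow_gcd_eq_one.mpr ⟨hxk, pow_pow_two_mul_sub_one_eq_one hxn⟩
  rwa [Nat.pow_sub_one_gcd_pow_sub_one, hcop] at this

end Monoid

theorem eq_or_eq_of_add_eq_add_of_mul_eq_mul {R : Type*} [CommRing R] [NoZeroDivisors R]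
    {a b c d : R} (hs : a + b = c + d) (hp : a * b = c * d) : a = c ∨ a = d := by
  have : (a - c) * (a - d) = 0 := by linear_combination a * hs - hp
  rcases mul_eq_zero.mp this with h | h
  · exact .inl (sub_eq_zero.mp h)
  · exact .inr (sub_eq_zero.mp h)

theorem eq_or_eq_or_eq_or_eq_of_pow_four_eq_one {R : Type*} [CommRing R] [NoZeroDivisors R]
    {i ζ : R} (hi : i ^ 2 = -1) (h : ζ ^ 4 = 1) : ζ = 1 ∨ ζ = -1 ∨ ζ = i ∨ ζ = -i := by
  have : (ζ ^ 2 - 1) * (ζ ^ 2 - i ^ 2) = 0 := by linear_combination h - (ζ ^ 2 - 1) * hi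
  rcases mul_eq_zero.mp this with h | h
  · have := sq_eq_one_iff.mp (sub_eq_zero.mp h)
    tauto
  · have := sq_eq_sq_iff_eq_or_eq_neg.mp (sub_eq_zero.mp h)
    tauto

section Field

variable {K : Type*} [Field K] {n k : ℕ} {z z' : K}

theorem div_pow_eq_one_of_pow_eq {m : ℕ} (hz : z ≠ 0) (h : z' ^ m = z ^ m) :
    (z' / z) ^ m = 1 := by
  rw [div_pow, h, div_self (pow_ne_zero _ hz)]

theorem eq_or_eq_or_eq_or_eq_of_pow_eq_of_pow_eq {i : K} (hi : i ^ 2 = -1) (hnk : n.Coprime k)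
    (hk : Odd k) (hn : z' ^ (3 ^ n + 1) = z ^ (3 ^ n + 1))
    (hk' : z' ^ (3 ^ k + 1) = z ^ (3 ^ k + 1)) :
    z' = z ∨ z' = -z ∨ z' = i * z ∨ z' = -(i * z) := by
  rcases eq_or_ne z 0 with rfl | hz
  · exact .inl <| pow_eq_zero_iff (by positivity) |>.mp (hn.trans (zero_pow (by positivity)))
  have := eq_or_eq_or_eq_or_eq_of_pow_four_eq_one hi <|
    pow_four_eq_one_of_pow_three_pow_add_one_eq_one hnk hk
      (div_pow_eq_one_of_pow_eq hz hn) (div_pow_eq_one_of_pow_eq hz hk')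
  simpa only [div_eq_iff hz, one_mul, neg_mul] using this

theorem eq_or_eq_neg_of_pow_eq_of_pow_eq (hnk : n.Coprime k) (hk : Odd k)
    (hn : z' ^ (3 ^ n + 1) = z ^ (3 ^ n + 1))
    (hk' : z' ^ (3 ^ k + 3 ^ n) = z ^ (3 ^ k + 3 ^ n)) :
    z' = z ∨ z' = -z := by
  rcases eq_or_ne z 0 with rfl | hz
  · exact .inl <| pow_eq_zero_iff (by positivity) |>.mp (hn.trans (zero_pow (by positivity)))
  have hζn := div_pow_eq_one_of_pow_eq hz hn
  have hζk : (z' / z) ^ (3 ^ k - 1) = 1 := by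
    have := div_pow_eq_one_of_pow_eq hz hk'
    rwa [show 3 ^ k + 3 ^ n = 3 ^ k - 1 + (3 ^ n + 1) by
      have := Nat.one_le_pow k 3 (by norm_num); omega, pow_add, hζn, mul_one] at this
  have := sq_eq_one_iff.mp (sq_eq_one_of_pow_three_pow_sub_one_eq_one hnk hk hζn hζk)
  simpa only [div_eq_iff hz, one_mul, neg_mul] using this

end Field

section GaussianLift

variable {F K : Type*} [Field F] [Field K] (ι : F →+* K) {i : K}

theorem eq_and_eq_of_add_mul_eq (hiF : ∀ t, ι t ≠ i) {u v u' v' : F}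
    (h : ι u + i * ι v = ι u' + i * ι v') : u = u' ∧ v = v' := by
  by_cases hv : v = v'
  · subst hv
    exact ⟨ι.injective (add_right_cancel h), rfl⟩
  · refine absurd ?_ (hiF ((u' - u) / (v - v')))
    have : ι v - ι v' ≠ 0 := sub_ne_zero.mpr (ι.injective.ne hv)
    rw [map_div₀, map_sub, map_sub, div_eq_iff this]
    linear_combination -h

section

variable (hi : i ^ 2 = -1)
include hi

theorem add_mul_pow_three_pow [CharP K 3] {m : ℕ} (hm : Odd m) (u v : F) :
    (ι u + i * ι v) ^ 3 ^ m = ι (u ^ 3 ^ m) - i * ι (v ^ 3 ^ m) := by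
  have hi4 : i ^ 4 = 1 := by rw [show 4 = 2 * 2 from rfl, pow_mul, hi]; norm_num
  have hi' : i ^ 3 ^ m = -i := by
    rw [pow_eq_pow_mod _ hi4, three_pow_mod_four hm]
    linear_combination i * hi
  rw [add_pow_char_pow, mul_pow, hi', map_pow, map_pow]
  ring

theorem add_mul_mul_add_mul_neg (u v : F) :
    (ι u + i * ι v) * (ι u + i * ι (-v)) = ι (u ^ 2 + v ^ 2) := by
  simp only [map_neg, map_add, map_pow]
  linear_combination (-ι v ^ 2) * hi

theorem add_mul_pow_three_pow_eq_conj [CharP K 3] {n : ℕ} (hn : Odd n)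
    (hfix : ∀ x : F, x ^ 3 ^ n = x) (u v : F) :
    (ι u + i * ι v) ^ 3 ^ n = ι u + i * ι (-v) := by
  rw [add_mul_pow_three_pow ι hi hn, hfix, hfix, map_neg, mul_neg, sub_eq_add_neg]

theorem add_mul_pow_three_pow_add_one [CharP K 3] {n : ℕ} (hn : Odd n)
    (hfix : ∀ x : F, x ^ 3 ^ n = x) (u v : F) :
    (ι u + i * ι v) ^ (3 ^ n + 1) = ι (u ^ 2 + v ^ 2) := by
  rw [pow_succ, add_mul_pow_three_pow_eq_conj ι hi hn hfix, mul_comm,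
    add_mul_mul_add_mul_neg ι hi]

end

variable (hiF : ∀ t, ι t ≠ i) {n k : ℕ} (hnk : n.Coprime k) (hk : Odd k)
include hiF hnk hk

theorem pow_eq_or_pow_eq_of_add_mul_pow_eq (hi : i ^ 2 = -1) {u v s t : F}
    (hn' : (ι u + i * ι v) ^ (3 ^ n + 1) = (ι s + i * ι t) ^ (3 ^ n + 1))
    (hk' : (ι u + i * ι v) ^ (3 ^ k + 1) = (ι s + i * ι t) ^ (3 ^ k + 1)) :
    u ^ (3 ^ k + 1) = s ^ (3 ^ k + 1) ∨ u ^ (3 ^ k + 1) = t ^ (3 ^ k + 1) := by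
  have hM : Even (3 ^ k + 1) := (Odd.pow (by decide)).add_one
  have hfst (s' t' : F) (h : ι u + i * ι v = ι s' + i * ι t') : u = s' :=
    (eq_and_eq_of_add_mul_eq ι hiF h).1
  rcases eq_or_eq_or_eq_or_eq_of_pow_eq_of_pow_eq hi hnk hk hn' hk' with h | h | h | h
  · left; rw [hfst s t h]
  · left; rw [hfst (-s) (-t) (by rw [h, map_neg, map_neg]; ring), hM.neg_pow]
  · right; rw [hfst (-t) s (by rw [h, map_neg]; linear_combination ι t * hi), hM.neg_pow]
  · right; rw [hfst t (-s) (by rw [h, map_neg]; linear_combination -ι t * hi)]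

theorem pow_eq_of_add_mul_pow_eq {u v s t : F}
    (hn' : (ι u + i * ι v) ^ (3 ^ n + 1) = (ι s + i * ι t) ^ (3 ^ n + 1))
    (hk' : (ι u + i * ι v) ^ (3 ^ k + 3 ^ n) = (ι s + i * ι t) ^ (3 ^ k + 3 ^ n)) :
    u ^ (3 ^ k + 1) = s ^ (3 ^ k + 1) := by
  have hM : Even (3 ^ k + 1) := (Odd.pow (by decide)).add_one
  have hfst (s' t' : F) (h : ι u + i * ι v = ι s' + i * ι t') : u = s' :=
    (eq_and_eq_of_add_mul_eq ι hiF h).1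
  rcases eq_or_eq_neg_of_pow_eq_of_pow_eq hnk hk hn' hk' with h | h
  · rw [hfst s t h]
  · rw [hfst (-s) (-t) (by rw [h, map_neg, map_neg]; ring), hM.neg_pow]

end GaussianLift

section FiniteField

universe u

open Polynomial in
theorem exists_ringHom_sq_eq_neg_one {F : Type u} [Field F] (h : ¬IsSquare (-1 : F)) :
    ∃ (K : Type u) (_ : Field K) (ι : F →+* K) (i : K), i ^ 2 = -1 ∧ ∀ t, ι t ≠ i := by
  have : Fact (Irreducible (X ^ 2 + 1 : F[X])) := ⟨by
    simpa using X_pow_sub_C_irreducible_of_prime Nat.prime_two (a := -1)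
      fun b hb => h ⟨b, by rw [← hb, sq]⟩⟩
  have hi : AdjoinRoot.root (X ^ 2 + 1 : F[X]) ^ 2 = -1 :=
    eq_neg_of_add_eq_zero_left (by
      have := AdjoinRoot.eval₂_root (X ^ 2 + 1 : F[X])
      rw [eval₂_add, eval₂_pow, eval₂_X, eval₂_one] at this
      exact this)
  refine ⟨_, inferInstance, AdjoinRoot.of _, AdjoinRoot.root _, hi, fun t ht => h ⟨t, ?_⟩⟩
  apply (AdjoinRoot.of (X ^ 2 + 1 : F[X])).injective
  rw [map_neg, map_one, map_mul, ht, ← sq, hi]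

variable {F : Type*} [Field F] [Fintype F] {n k : ℕ}

theorem not_isSquare_neg_one_of_card (hcard : Fintype.card F = 3 ^ n) (hn : Odd n) :
    ¬IsSquare (-1 : F) := by
  rw [FiniteField.isSquare_neg_one_iff, hcard, three_pow_mod_four hn]
  exact fun h => h rfl

variable [CharP F 3] (hcard : Fintype.card F = 3 ^ n) (hn : Odd n) (hnk : n.Coprime k)
  (hk : Odd k)
include hcard hn hnk hk

theorem pow_eq_or_pow_eq_of_sq_add_sq_eq_of_pow_add_pow_eq {u v s t : F}
    (hsq : u ^ 2 + v ^ 2 = s ^ 2 + t ^ 2)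
    (hpow : u ^ (3 ^ k + 1) + v ^ (3 ^ k + 1) = s ^ (3 ^ k + 1) + t ^ (3 ^ k + 1)) :
    u ^ (3 ^ k + 1) = s ^ (3 ^ k + 1) ∨ u ^ (3 ^ k + 1) = t ^ (3 ^ k + 1) := by
  obtain ⟨K, _, ι, i, hi, hiF⟩ :=
    exists_ringHom_sq_eq_neg_one (not_isSquare_neg_one_of_card hcard hn)
  have : CharP K 3 := charP_of_injective_ringHom ι.injective 3
  have hfix (x : F) : x ^ 3 ^ n = x := hcard ▸ FiniteField.pow_card x
  have hnorm := add_mul_pow_three_pow_add_one ι hi hn hfix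
  have htr (x y : F) : (ι x + i * ι y) ^ (3 ^ k + 1) + (ι x + i * ι (-y)) ^ (3 ^ k + 1) =
      2 * ι (x ^ (3 ^ k + 1) + y ^ (3 ^ k + 1)) := by
    rw [pow_succ, pow_succ, add_mul_pow_three_pow ι hi hk, add_mul_pow_three_pow ι hi hk,
      (Odd.pow (by decide) : Odd (3 ^ k)).neg_pow]
    simp only [map_neg, map_add, map_pow]
    linear_combination (-2 * ι y ^ 3 ^ k * ι y) * hi
  have hpr (x y : F) : (ι x + i * ι y) ^ (3 ^ k + 1) * (ι x + i * ι (-y)) ^ (3 ^ k + 1) =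
      ι (x ^ 2 + y ^ 2) ^ (3 ^ k + 1) := by
    rw [← mul_pow, add_mul_mul_add_mul_neg ι hi]
  rcases eq_or_eq_of_add_eq_add_of_mul_eq_mul ((htr u v).trans (hpow ▸ htr s t).symm)
    ((hpr u v).trans (hsq ▸ hpr s t).symm) with h | h
  · exact pow_eq_or_pow_eq_of_add_mul_pow_eq ι hiF hnk hk hi (by rw [hnorm, hnorm, hsq]) h
  · simpa only [((Odd.pow (by decide) : Odd (3 ^ k)).add_one).neg_pow] using
      pow_eq_or_pow_eq_of_add_mul_pow_eq ι hiF hnk hk hi (by rw [hnorm, hnorm, hsq, neg_sq]) h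

theorem pow_eq_of_sq_add_sq_eq_of_pow_sub_pow_eq {u v s t : F}
    (hsq : u ^ 2 + v ^ 2 = s ^ 2 + t ^ 2)
    (hpow : u ^ (3 ^ k + 1) - v ^ (3 ^ k + 1) = s ^ (3 ^ k + 1) - t ^ (3 ^ k + 1)) :
    u ^ (3 ^ k + 1) = s ^ (3 ^ k + 1) := by
  obtain ⟨K, _, ι, i, hi, hiF⟩ :=
    exists_ringHom_sq_eq_neg_one (not_isSquare_neg_one_of_card hcard hn)
  have : CharP K 3 := charP_of_injective_ringHom ι.injective 3
  have hfix (x : F) : x ^ 3 ^ n = x := hcard ▸ FiniteField.pow_card x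
  have hnorm := add_mul_pow_three_pow_add_one ι hi hn hfix
  have hW (x y : F) : (ι x + i * ι y) ^ 3 ^ k * (ι x + i * ι (-y)) =
      (ι x + i * ι y) ^ (3 ^ k + 3 ^ n) := by
    rw [pow_add, add_mul_pow_three_pow_eq_conj ι hi hn hfix]
  have htr (x y : F) :
      (ι x + i * ι y) ^ (3 ^ k + 3 ^ n) + (ι x + i * ι (-y)) ^ (3 ^ k + 3 ^ n) =
        2 * ι (x ^ (3 ^ k + 1) - y ^ (3 ^ k + 1)) := by
    rw [← hW, ← hW, neg_neg, add_mul_pow_three_pow ι hi hk, add_mul_pow_three_pow ι hi hk,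
      (Odd.pow (by decide) : Odd (3 ^ k)).neg_pow]
    simp only [map_neg, map_sub, map_pow]
    linear_combination (2 * ι y ^ 3 ^ k * ι y) * hi
  have hpr (x y : F) :
      (ι x + i * ι y) ^ (3 ^ k + 3 ^ n) * (ι x + i * ι (-y)) ^ (3 ^ k + 3 ^ n) =
        ι (x ^ 2 + y ^ 2) ^ (3 ^ k + 1) := by
    rw [← hW, ← hW, neg_neg, ← add_mul_mul_add_mul_neg ι hi, pow_succ, mul_pow]
    ring
  rcases eq_or_eq_of_add_eq_add_of_mul_eq_mul ((htr u v).trans (hpow ▸ htr s t).symm)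
    ((hpr u v).trans (hsq ▸ hpr s t).symm) with h | h
  · exact pow_eq_of_add_mul_pow_eq ι hiF hnk hk (by rw [hnorm, hnorm, hsq]) h
  · simpa only [((Odd.pow (by decide) : Odd (3 ^ k)).add_one).neg_pow] using
      pow_eq_of_add_mul_pow_eq ι hiF hnk hk (by rw [hnorm, hnorm, hsq, neg_sq]) h

end FiniteField

section Counting

variable {F : Type*} [Field F] [Fintype F]

/-- Solutions `x` of `(x + a) ^ d + x ^ d = b` with `χ (x + a) = ε₁` and `χ x = ε₂`, the
quadratic character `χ` being taken in Euler's form `x ↦ x ^ (Fintype.card F / 2)`. -/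
def signClass (d : ℕ) (a b ε₁ ε₂ : F) : Set F :=
  {x | (x + a) ^ d + x ^ d = b ∧ (x + a) ^ (Fintype.card F / 2) = ε₁ ∧
    x ^ (Fintype.card F / 2) = ε₂}

theorem pow_div_two_pow_three_pow_add_one {n k d : ℕ} (hcard : Fintype.card F = 3 ^ n)
    (hd0 : 0 < d) (hd : Even d)
    (hcong : ((3 ^ k + 1) / 2) * d ≡ (3 ^ n + 1) / 2 [MOD 3 ^ n - 1]) (x : F) :
    (x ^ (d / 2)) ^ (3 ^ k + 1) = x ^ (Fintype.card F / 2) * x := by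
  rcases eq_or_ne x 0 with rfl | hx
  · have : d / 2 ≠ 0 := by obtain ⟨e, rfl⟩ := hd; omega
    simp [this]
  have hx1 : x ^ (3 ^ n - 1) = 1 := hcard ▸ FiniteField.pow_card_sub_one_eq_one x hx
  obtain ⟨e, rfl⟩ := hd
  obtain ⟨m, hm⟩ : Even (3 ^ k + 1) := (Odd.pow (by decide)).add_one
  have hq : 3 ^ n % 2 = 1 := Nat.odd_iff.mp (Odd.pow (by decide))
  rw [← pow_mul, ← pow_succ, pow_eq_pow_mod _ hx1, pow_eq_pow_mod (_ + 1) hx1, hcard]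
  convert congrArg (x ^ ·) hcong using 3
  · rw [hm, show (e + e) / 2 = e by omega, show (m + m) / 2 = m by omega]
    ring
  · omega

variable [CharP F 3] {d : ℕ} (a b : F)

theorem ncard_solutions_le_sum_ncard_signClass {σ : F} (hσ : σ = 1 ∨ σ = -1) :
    {x : F | (x + a) ^ d + x ^ d = b}.ncard ≤
      ({x : F | (x + a) ^ d + x ^ d = b} ∩ {0, -a}).ncard + (signClass d a b σ σ).ncard +
        (signClass d a b (-σ) (-σ)).ncard + (signClass d a b σ (-σ)).ncard +
        (signClass d a b (-σ) σ).ncard := by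
  set S := {x : F | (x + a) ^ d + x ^ d = b}
  have hchar : ringChar F ≠ 2 := by rw [ringChar.eq F 3]; decide
  have hsub : S ⊆ (S ∩ {0, -a}) ∪ signClass d a b σ σ ∪ signClass d a b (-σ) (-σ) ∪
      signClass d a b σ (-σ) ∪ signClass d a b (-σ) σ := by
    intro x (hx : (x + a) ^ d + x ^ d = b)
    by_cases htriv : x = 0 ∨ x = -a
    · exact .inl <| .inl <| .inl <| .inl ⟨hx, htriv⟩
    obtain ⟨hx0, hxa⟩ := not_or.mp htriv
    have hxa : x + a ≠ 0 := fun h => hxa (eq_neg_of_add_eq_zero_left h)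
    have hne := Ring.neg_one_ne_one_of_char_ne_two hchar
    rcases FiniteField.pow_dichotomy hchar hx0 with h₂ | h₂ <;>
      rcases FiniteField.pow_dichotomy hchar hxa with h₁ | h₁ <;>
      rcases hσ with rfl | rfl <;>
      simp_all [signClass, hne.symm]
  refine (Set.ncard_le_ncard hsub).trans ?_
  set C := signClass d a b
  have := Set.ncard_union_le (S ∩ {0, -a}) (C σ σ)
  have := Set.ncard_union_le (S ∩ {0, -a} ∪ C σ σ) (C (-σ) (-σ))
  have := Set.ncard_union_le (S ∩ {0, -a} ∪ C σ σ ∪ C (-σ) (-σ)) (C σ (-σ))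
  have := Set.ncard_union_le (S ∩ {0, -a} ∪ C σ σ ∪ C (-σ) (-σ) ∪ C σ (-σ))
    (C (-σ) σ)
  omega

variable {n k : ℕ} (hcard : Fintype.card F = 3 ^ n) (hn : Odd n) (hnk : n.Coprime k)
  (hk : Odd k) (hd : Even d)
  (hkey : ∀ x : F, (x ^ (d / 2)) ^ (3 ^ k + 1) = x ^ (Fintype.card F / 2) * x)
include hcard hn hnk hk hd hkey

theorem ncard_signClass_self_le_one {ε : F} (hε : ε ≠ 0) :
    (signClass d a b ε ε).ncard ≤ 1 := by
  refine (Set.ncard_le_one (Set.toFinite _)).mpr ?_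
  rintro x ⟨hx, hxa, hxe⟩ y ⟨hy, hya, hye⟩
  have := pow_eq_of_sq_add_sq_eq_of_pow_sub_pow_eq hcard hn hnk hk
    (u := x ^ (d / 2)) (v := (x + a) ^ (d / 2)) (s := y ^ (d / 2)) (t := (y + a) ^ (d / 2))
    (by simp only [← pow_mul, Nat.div_mul_cancel hd.two_dvd]; linear_combination hx - hy)
    (by rw [hkey, hkey, hkey, hkey, hxa, hxe, hya, hye]; ring)
  rw [hkey, hkey, hxe, hye] at this
  exact mul_left_cancel₀ hε this

theorem ncard_signClass_neg_le_two {ε : F} (hε : ε ≠ 0) :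
    (signClass d a b ε (-ε)).ncard ≤ 2 := by
  rcases (signClass d a b ε (-ε)).eq_empty_or_nonempty with h | ⟨y, hy, hya, hye⟩
  · simp [h]
  calc (signClass d a b ε (-ε)).ncard
      ≤ ({(y ^ (d / 2)) ^ (3 ^ k + 1), ((y + a) ^ (d / 2)) ^ (3 ^ k + 1)} : Set F).ncard := by
        refine Set.ncard_le_ncard_of_injOn (fun x => (x ^ (d / 2)) ^ (3 ^ k + 1)) ?_ ?_
          (Set.toFinite _)
        · rintro x ⟨hx, hxa, hxe⟩
          exact pow_eq_or_pow_eq_of_sq_add_sq_eq_of_pow_add_pow_eq hcard hn hnk hk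
            (u := x ^ (d / 2)) (v := (x + a) ^ (d / 2)) (s := y ^ (d / 2)) (t := (y + a) ^ (d / 2))
            (by simp only [← pow_mul, Nat.div_mul_cancel hd.two_dvd]; linear_combination hx - hy)
            (by rw [hkey, hkey, hkey, hkey, hxa, hxe, hya, hye]; ring)
        · rintro x ⟨-, -, hxe⟩ z ⟨-, -, hze⟩ h
          simp only [hkey, hxe, hze] at h
          exact mul_left_cancel₀ (neg_ne_zero.mpr hε) h
    _ ≤ 2 := (Set.ncard_insert_le _ _).trans (by rw [Set.ncard_singleton])

theorem exists_signClass_neg_eq_empty :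
    ∃ σ : F, (σ = 1 ∨ σ = -1) ∧ signClass d a (a ^ d) σ (-σ) = ∅ := by
  have hchar : ringChar F ≠ 2 := by rw [ringChar.eq F 3]; decide
  rcases eq_or_ne a 0 with rfl | ha
  · refine ⟨1, .inl rfl, Set.eq_empty_of_forall_notMem ?_⟩
    rintro x ⟨-, hxa, hxe⟩
    rw [add_zero, hxe] at hxa
    exact Ring.neg_one_ne_one_of_char_ne_two hchar hxa
  set σ := a ^ (Fintype.card F / 2)
  have hσ : σ ≠ 0 := pow_ne_zero _ ha
  have hzero : (0 : F) ^ (Fintype.card F / 2) = 0 :=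
    zero_pow (by have : 1 < Fintype.card F := Fintype.one_lt_card; omega)
  refine ⟨σ, FiniteField.pow_dichotomy hchar ha, Set.eq_empty_of_forall_notMem ?_⟩
  rintro x ⟨hx, hxa, hxe⟩
  have hpow : (x ^ (d / 2)) ^ (3 ^ k + 1) + ((x + a) ^ (d / 2)) ^ (3 ^ k + 1) =
      (a ^ (d / 2)) ^ (3 ^ k + 1) + 0 ^ (3 ^ k + 1) := by
    rw [hkey, hkey, hkey, hxa, hxe, zero_pow (by positivity)]
    ring
  rcases pow_eq_or_pow_eq_of_sq_add_sq_eq_of_pow_add_pow_eq hcard hn hnk hk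
    (by simp only [← pow_mul, Nat.div_mul_cancel hd.two_dvd]; linear_combination hx) hpow
    with h | h
  · have : σ * (x + a) = 0 := by
      rw [← hxa, ← hkey]
      linear_combination hpow - h
    rw [mul_eq_zero.mp this |>.resolve_left hσ, hzero] at hxa
    exact hσ hxa.symm
  · rw [hkey, hxe, zero_pow (by positivity), neg_mul, neg_eq_zero] at h
    rw [mul_eq_zero.mp h |>.resolve_left hσ, hzero] at hxe
    exact hσ (neg_eq_zero.mp hxe.symm)

theorem exists_ncard_inter_add_ncard_signClass_le_two (hd0 : 0 < d) :
    ∃ σ : F, (σ = 1 ∨ σ = -1) ∧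
      ({x : F | (x + a) ^ d + x ^ d = b} ∩ {0, -a}).ncard +
        (signClass d a b σ (-σ)).ncard ≤ 2 := by
  by_cases hb : b = a ^ d
  · subst hb
    obtain ⟨σ, hσ, hempty⟩ := exists_signClass_neg_eq_empty a hcard hn hnk hk hd hkey
    refine ⟨σ, hσ, ?_⟩
    rw [hempty, Set.ncard_empty, add_zero]
    refine (Set.ncard_le_ncard Set.inter_subset_right).trans ?_
    exact (Set.ncard_insert_le _ _).trans (by rw [Set.ncard_singleton])
  · refine ⟨1, .inl rfl, ?_⟩
    have htriv : {x : F | (x + a) ^ d + x ^ d = b} ∩ {0, -a} = ∅ := by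
      refine Set.eq_empty_of_forall_notMem ?_
      rintro x ⟨hx, rfl | rfl⟩
      · simp [zero_pow hd0.ne'] at hx
        exact hb hx.symm
      · simp [zero_pow hd0.ne', hd.neg_pow] at hx
        exact hb hx.symm
    rw [htriv, Set.ncard_empty, zero_add]
    exact ncard_signClass_neg_le_two a b hcard hn hnk hk hd hkey one_ne_zero

end Counting

theorem stmt_1_general (n k d : ℕ) (hd0 : 0 < d)
    (hn : Odd n) (hk : Odd k) (hd : Even d) (hgcd : Nat.gcd n k = 1)
    (hcong : ((3 ^ k + 1) / 2) * d ≡ (3 ^ n + 1) / 2 [MOD 3 ^ n - 1])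
    (F : Type*) [Field F] [Fintype F] (hcard : Fintype.card F = 3 ^ n)
    (a b : F) :
    {x : F | (x + a) ^ d + x ^ d = b}.ncard ≤ 6 := by
  have : CharP F 3 := charP_of_card_eq_prime_pow hcard
  have hkey := pow_div_two_pow_three_pow_add_one hcard hd0 hd hcong
  obtain ⟨σ, hσ, htriv⟩ :=
    exists_ncard_inter_add_ncard_signClass_le_two a b hcard hn hgcd hk hd hkey hd0
  have hσ0 : σ ≠ 0 := by rcases hσ with rfl | rfl <;> norm_num
  have := ncard_solutions_le_sum_ncard_signClass a b (d := d) hσ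
  have := ncard_signClass_self_le_one a b hcard hn hgcd hk hd hkey hσ0
  have := ncard_signClass_self_le_one a b hcard hn hgcd hk hd hkey (neg_ne_zero.mpr hσ0)
  have := ncard_signClass_neg_le_two a b hcard hn hgcd hk hd hkey (neg_ne_zero.mpr hσ0)
  rw [neg_neg] at this
  omega

/-- Remark after Theorem 3.1: with `d` even instead of odd, the power function
`f(x) = x^d` on `F_{3^n}` satisfies `₋₁Δ_f ≤ 6`: for every `a, b` the equation
`(x+a)^d + x^d = b` has at most 6 solutions. -/
theorem stmt_1 (n k d : ℕ) (hn0 : 0 < n) (hk0 : 0 < k) (hd0 : 0 < d)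
    (hn : Odd n) (hk : Odd k) (hd : Even d) (hgcd : Nat.gcd n k = 1)
    (hcong : ((3 ^ k + 1) / 2) * d ≡ (3 ^ n + 1) / 2 [MOD 3 ^ n - 1])
    (F : Type*) [Field F] [Fintype F] (hcard : Fintype.card F = 3 ^ n)
    (a b : F) :
    {x : F | (x + a) ^ d + x ^ d = b}.ncard ≤ 6 :=
  stmt_1_general n k d hd0 hn hk hd hgcd hcong F hcard a b
end

section
/- Let p be an odd prime and n, k positive integers with p^n ≡ 3 (mod 4), and let d be an odd positive integer with d·(p^k+1) ≡ (p^n+1)/2 (mod p^n−1). Then the map x ↦ x^d is a permutation of F_{p^n}; equivalently, the power function f(x)=x^d has 0-differential uniformity _0Δ_f = 1. -/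
/-- Theorem 3.3 (Theorem `thma`), case `c = 0`, `d` odd: under the hypotheses,
`x ↦ x^d` is a permutation of `F_{p^n}`, i.e. `₀Δ_f = 1`. -/
theorem stmt_3 (p n k d : ℕ) (hp : p.Prime) (hodd : Odd p)
    (hn0 : 0 < n) (hk0 : 0 < k) (hd0 : 0 < d) (hd : Odd d)
    (hmod : p ^ n % 4 = 3)
    (hcong : d * (p ^ k + 1) ≡ (p ^ n + 1) / 2 [MOD p ^ n - 1])
    (F : Type*) [Field F] [Fintype F] (hcard : Fintype.card F = p ^ n) :
    Function.Bijective (fun x : F => x ^ d) := by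
  set q := p ^ n with hq
  -- coprimality of d with q - 1
  have hcop : Nat.Coprime (q - 1) d := by
    set g := Nat.gcd (q - 1) d with hg
    have hgq : g ∣ q - 1 := Nat.gcd_dvd_left _ _
    have hgd : g ∣ d := Nat.gcd_dvd_right _ _
    have hgodd : Odd g := hd.of_dvd_nat hgd
    -- g divides (q+1)/2
    have h1 : (g : ℤ) ∣ ((q + 1) / 2 : ℕ) := by
      have h2 : ((q - 1 : ℕ) : ℤ) ∣ (((q + 1) / 2 : ℕ) : ℤ) - (d * (p ^ k + 1) : ℕ) :=
        hcong.dvd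
      have h3 : (g : ℤ) ∣ (((q + 1) / 2 : ℕ) : ℤ) - (d * (p ^ k + 1) : ℕ) :=
        dvd_trans (Int.natCast_dvd_natCast.mpr hgq) h2
      have h4 : (g : ℤ) ∣ ((d * (p ^ k + 1) : ℕ) : ℤ) :=
        Int.natCast_dvd_natCast.mpr (hgd.mul_right _)
      have := dvd_add h3 h4
      simpa using this
    have h1' : g ∣ (q + 1) / 2 := Int.natCast_dvd_natCast.mp h1
    -- g divides (q-1)/2
    have hg2 : Nat.Coprime g 2 := by
      rw [Nat.coprime_comm]
      exact (Nat.Prime.coprime_iff_not_dvd Nat.prime_two).mpr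
        (by rcases hgodd with ⟨m, hm⟩; omega)
    have hq1 : q - 1 = 2 * ((q - 1) / 2) := by omega
    have h5 : g ∣ (q - 1) / 2 := by
      have := hgq
      rw [hq1] at this
      exact (Nat.Coprime.dvd_of_dvd_mul_left hg2 this)
    have h6 : (q + 1) / 2 = (q - 1) / 2 + 1 := by
      have hq3 : 3 ≤ q := by omega
      omega
    have : g ∣ 1 := by
      have := Nat.dvd_sub h1' h5
      rwa [h6, Nat.add_sub_cancel_left] at this
    exact Nat.dvd_one.mp this
  -- bijectivity on units
  have hcardu : Nat.card Fˣ = q - 1 := by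
    rw [Nat.card_units, Nat.card_eq_fintype_card, hcard]
  have hbij : Function.Bijective (· ^ d : Fˣ → Fˣ) :=
    Nat.Coprime.pow_left_bijective (by rwa [hcardu])
  -- injectivity on F
  have hinj : Function.Injective (fun x : F => x ^ d) := by
    intro x y hxy
    simp only at hxy
    by_cases hx : x = 0
    · subst hx
      rw [zero_pow hd0.ne'] at hxy
      exact (pow_eq_zero_iff hd0.ne').mp hxy.symm |>.symm
    · by_cases hy : y = 0
      · subst hy
        rw [zero_pow hd0.ne'] at hxy
        exact absurd ((pow_eq_zero_iff hd0.ne').mp hxy) hx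
      · have : (Units.mk0 x hx) ^ d = (Units.mk0 y hy) ^ d := by
          ext; simpa using hxy
        have := hbij.injective this
        have : x = y := by
          have h := congrArg Units.val this
          simpa using h
        exact this
  exact Finite.injective_iff_bijective.mp hinj
end

section
/- Let p be an odd prime and n, k positive integers with p^n ≡ 3 (mod 4), and let d be an odd positive integer with d·(p^k+1) ≡ (p^n+1)/2 (mod p^n−1). Then the power function f(x)=x^d on F_{p^n} satisfies _1Δ_f ≤ 6: for every a ∈ F_{p^n} with a ≠ 0 and every b ∈ F_{p^n}, the equation (x+a)^d − x^d = b has at most 6 solutions x ∈ F_{p^n}. -/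
/-!
Write `Q = p ^ k` and `q = p ^ n = 2m + 1`. The congruence on `d` gives
`(x ^ d) ^ (Q + 1) = x ^ (m + 1) = η(x) x` with `η(x) = x ^ m = ±1`, so `x ↦ x ^ d` is a
permutation (in particular there are no solutions for `b = 0`) and a solution `x` is recorded
by `u = x ^ d`. With `v = u + b = (x + a) ^ d`, the four sign patterns of `(η(x), η(x + a))`
give `η(x + a) v ^ (Q + 1) - η(x) u ^ (Q + 1) = a`, which for equal signs reads
`b u ^ Q + b ^ Q u = ±a - b ^ (Q + 1)` and for opposite signs
`(2u + b) ^ (Q + 1) = ∓2a - b ^ (Q + 1)`.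
As `n` is odd, `w ^ Q = -w` forces `w = 0`; hence `s ↦ b s ^ Q + b ^ Q s` is injective for
`b ≠ 0`, and `t ^ (Q + 1) = 1` forces `t = ±1`. This bounds the four contributions by
`1 + 1 + 2 + 2`.
-/

theorem Nat.odd_of_pow_mod_four_eq_three {p n : ℕ} (h : p ^ n % 4 = 3) : Odd n := by
  by_contra hn
  obtain ⟨m, rfl⟩ := Nat.not_odd_iff_even.mp hn
  rw [← two_mul, pow_mul', Nat.pow_mod] at h
  have : p ^ m % 4 < 4 := Nat.mod_lt _ (by norm_num)
  interval_cases p ^ m % 4 <;> simp at h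

section Field

variable {F : Type*} [Field F]

theorem pow_injective_of_pow_mul_eq_self_or_neg {d e : ℕ} (hd : Odd d) (h2 : (2 : F) ≠ 0)
    (h : ∀ x : F, x ^ (d * e) = x ∨ x ^ (d * e) = -x) :
    Function.Injective fun x : F => x ^ d := by
  intro x z (hxz : x ^ d = z ^ d)
  have hsq (y : F) : (y ^ (d * e)) ^ 2 = y ^ 2 := by
    rcases h y with hy | hy <;> rw [hy]
    ring
  rcases eq_or_eq_neg_of_sq_eq_sq x z (by rw [← hsq x, ← hsq z, pow_mul, pow_mul, hxz])
    with rfl | rfl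
  · rfl
  have hz : z ^ d = 0 := by
    rw [hd.neg_pow] at hxz
    exact mul_left_cancel₀ h2 (by linear_combination -hxz)
  rw [pow_eq_zero_iff hd.pos.ne'] at hz
  simp [hz]

theorem ncard_setOf_pow_eq_le_two {e : ℕ} (h : ∀ v : F, v ^ e = 1 → v = 1 ∨ v = -1)
    (c : F) : {t : F | t ^ e = c}.ncard ≤ 2 := by
  have he : e ≠ 0 := by
    rintro rfl
    simpa using h 0
  rcases Set.eq_empty_or_nonempty {t : F | t ^ e = c} with hempty | ⟨t₀, ht₀ : t₀ ^ e = c⟩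
  · simp [hempty]
  have hsub : {t : F | t ^ e = c} ⊆ {t₀, -t₀} := by
    intro t (ht : t ^ e = c)
    rcases eq_or_ne t₀ 0 with rfl | h0
    · rw [← ht₀, zero_pow he, pow_eq_zero_iff he] at ht
      simp [ht]
    rcases h (t / t₀) (by rw [div_pow, ht, ← ht₀, div_self (pow_ne_zero _ h0)]) with h1 | h1
    · exact .inl ((div_eq_one_iff_eq h0).mp h1)
    · exact .inr (by rw [div_eq_iff h0] at h1; simp [h1])
  calc _ ≤ ({t₀, -t₀} : Set F).ncard := Set.ncard_le_ncard hsub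
    _ ≤ 2 := (Set.ncard_insert_le _ _).trans (by simp)

theorem linearized_eq_or_two_mul_add_pow_succ_eq {p k : ℕ} [ExpChar F p] {a b u v x : F}
    (hvu : v = u + b) (hu : u ^ (p ^ k + 1) = x ∨ u ^ (p ^ k + 1) = -x)
    (hv : v ^ (p ^ k + 1) = x + a ∨ v ^ (p ^ k + 1) = -(x + a)) :
    b * u ^ p ^ k + b ^ p ^ k * u = a - b ^ (p ^ k + 1) ∨
      b * u ^ p ^ k + b ^ p ^ k * u = -a - b ^ (p ^ k + 1) ∨
      (2 * u + b) ^ (p ^ k + 1) = -(2 * a) - b ^ (p ^ k + 1) ∨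
      (2 * u + b) ^ (p ^ k + 1) = 2 * a - b ^ (p ^ k + 1) := by
  have hvQ : v ^ p ^ k = u ^ p ^ k + b ^ p ^ k := by rw [hvu, add_pow_expChar_pow]
  have htQ : (2 * u + b) ^ p ^ k = u ^ p ^ k + v ^ p ^ k := by
    rw [← add_pow_expChar_pow, hvu, two_mul, add_assoc]
  subst hvu
  rcases hu with hu | hu <;> rcases hv with hv | hv
  · left
    linear_combination hv - hu - (u + b) * hvQ
  · right; right; left
    linear_combination 2 * hv + 2 * hu + (2 * u + b) * htQ - b * hvQ
  · right; right; right
    linear_combination 2 * hv + 2 * hu + (2 * u + b) * htQ - b * hvQ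
  · right; left
    linear_combination hv - hu - (u + b) * hvQ

end Field

section FiniteField

variable {F : Type*} [Field F] [Fintype F]

theorem ringChar_ne_two_of_odd_card (h : Odd (Fintype.card F)) : ringChar F ≠ 2 :=
  fun h2 => Nat.not_even_iff_odd.mpr h (Nat.even_iff.mpr (FiniteField.even_card_iff_char_two.mp h2))

theorem pow_eq_self_or_neg_of_modEq (hF : ringChar F ≠ 2) {e : ℕ} (he0 : e ≠ 0)
    (he : e ≡ Fintype.card F / 2 + 1 [MOD Fintype.card F - 1]) (x : F) :
    x ^ e = x ∨ x ^ e = -x := by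
  rcases eq_or_ne x 0 with rfl | hx
  · simp [zero_pow he0]
  have hpow : x ^ e = x ^ (Fintype.card F / 2) * x := by
    rw [← pow_succ]
    exact pow_eq_pow_of_modEq he (FiniteField.pow_card_sub_one_eq_one x hx)
  rcases FiniteField.pow_dichotomy hF hx with h | h <;> simp [hpow, h]

variable {p n k : ℕ} (hcard : Fintype.card F = p ^ n) (hn : Odd n) (hp : Odd p)
include hcard hn hp

-- Iterating `w ↦ w ^ p ^ k` `n` times is the identity, but also multiplies `w` by `(-1) ^ n`.
theorem eq_zero_of_pow_prime_pow_eq_neg {w : F} (hw : w ^ p ^ k = -w) : w = 0 := by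
  have hiter (j : ℕ) : w ^ (p ^ k) ^ j = (-1) ^ j * w := by
    induction j with
    | zero => simp
    | succ j ih =>
      rw [pow_succ, pow_mul, ih, mul_pow, hw, pow_right_comm, hp.pow.neg_one_pow]
      ring
  have hfix : w ^ (p ^ k) ^ n = w := by
    rw [← pow_mul, mul_comm, pow_mul, ← hcard, FiniteField.pow_card_pow]
  have h2 : (2 : F) ≠ 0 := Ring.two_ne_zero (ringChar_ne_two_of_odd_card (hcard ▸ hp.pow))
  rw [hiter, hn.neg_one_pow] at hfix
  exact mul_left_cancel₀ h2 (by linear_combination -hfix)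

variable [ExpChar F p]

theorem eq_one_or_neg_one_of_pow_prime_pow_succ_eq_one {v : F} (hv : v ^ (p ^ k + 1) = 1) :
    v = 1 ∨ v = -1 := by
  have hv0 : v ≠ 0 := by
    rintro rfl
    simp at hv
  have hinv : v ^ p ^ k = v⁻¹ := eq_inv_of_mul_eq_one_left (by rwa [← pow_succ])
  have hw : v - v⁻¹ = 0 := eq_zero_of_pow_prime_pow_eq_neg hcard hn hp (k := k) <| by
    rw [sub_pow_expChar_pow, hinv, inv_pow, hinv, inv_inv, neg_sub]
  rw [sub_eq_zero] at hw
  refine mul_self_eq_one_iff.mp ?_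
  nth_rw 1 [hw]
  exact inv_mul_cancel₀ hv0

theorem ncard_setOf_linearized_eq_le_one {b : F} (hb : b ≠ 0) (r : F) :
    {s : F | b * s ^ p ^ k + b ^ p ^ k * s = r}.ncard ≤ 1 := by
  have hinj : Function.Injective fun s : F => b * s ^ p ^ k + b ^ p ^ k * s := by
    intro s t hst
    have hw : ((s - t) / b) ^ p ^ k = -((s - t) / b) := by
      rw [div_pow, sub_pow_expChar_pow]
      field_simp
      linear_combination hst
    have := eq_zero_of_pow_prime_pow_eq_neg hcard hn hp hw
    rwa [div_eq_zero_iff, sub_eq_zero, or_iff_left hb] at this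
  exact Set.ncard_le_one_iff_subsingleton.mpr (Set.subsingleton_singleton.preimage hinj)

theorem ncard_setOf_two_mul_add_pow_eq_le_two (b c : F) :
    {s : F | (2 * s + b) ^ (p ^ k + 1) = c}.ncard ≤ 2 := by
  have h2 : (2 : F) ≠ 0 := Ring.two_ne_zero (ringChar_ne_two_of_odd_card (hcard ▸ hp.pow))
  have haff : Function.Injective fun s : F => 2 * s + b := fun s t hst =>
    mul_left_cancel₀ h2 (add_right_cancel hst)
  rw [show {s : F | (2 * s + b) ^ (p ^ k + 1) = c} =
      (fun s => 2 * s + b) ⁻¹' {t | t ^ (p ^ k + 1) = c} from rfl,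
    Set.ncard_preimage_of_injective_subset_range haff
      fun t _ => ⟨(t - b) / 2, by field_simp; ring⟩]
  exact ncard_setOf_pow_eq_le_two
    (fun _ => eq_one_or_neg_one_of_pow_prime_pow_succ_eq_one hcard hn hp) c

end FiniteField

theorem stmt_5_general (p n k d : ℕ) (hp : p.Prime) (hodd : Odd p)
    (hd : Odd d)
    (hmod : p ^ n % 4 = 3)
    (hcong : d * (p ^ k + 1) ≡ (p ^ n + 1) / 2 [MOD p ^ n - 1])
    (F : Type*) [Field F] [Fintype F] (hcard : Fintype.card F = p ^ n)
    (a b : F) (ha : a ≠ 0) :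
    {x : F | (x + a) ^ d - x ^ d = b}.ncard ≤ 6 := by
  have := Fact.mk hp
  have := charP_of_card_eq_prime_pow (R := F) hcard
  have hn : Odd n := Nat.odd_of_pow_mod_four_eq_three hmod
  have hF : ringChar F ≠ 2 := ringChar_ne_two_of_odd_card (hcard ▸ hodd.pow)
  have hsign : ∀ x : F, x ^ (d * (p ^ k + 1)) = x ∨ x ^ (d * (p ^ k + 1)) = -x :=
    pow_eq_self_or_neg_of_modEq hF (mul_pos hd.pos (Nat.succ_pos _)).ne'
      (by rw [hcard]; convert hcong using 2; omega)
  have hinj := pow_injective_of_pow_mul_eq_self_or_neg hd (Ring.two_ne_zero hF) hsign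
  rcases eq_or_ne b 0 with rfl | hb
  · have hempty : {x : F | (x + a) ^ d - x ^ d = 0} = ∅ :=
      Set.eq_empty_of_forall_notMem fun x hx => ha (by simpa using hinj (sub_eq_zero.mp hx))
    simp [hempty]
  calc _ = ((· ^ d) '' {x : F | (x + a) ^ d - x ^ d = b}).ncard :=
        (Set.ncard_image_of_injective _ hinj).symm
    _ ≤ ({u : F | b * u ^ p ^ k + b ^ p ^ k * u = a - b ^ (p ^ k + 1)} ∪
          {u | b * u ^ p ^ k + b ^ p ^ k * u = -a - b ^ (p ^ k + 1)} ∪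
          {u | (2 * u + b) ^ (p ^ k + 1) = -(2 * a) - b ^ (p ^ k + 1)} ∪
          {u | (2 * u + b) ^ (p ^ k + 1) = 2 * a - b ^ (p ^ k + 1)}).ncard := by
      refine Set.ncard_le_ncard ?_
      rintro _ ⟨x, hx : (x + a) ^ d - x ^ d = b, rfl⟩
      simpa only [Set.mem_union, Set.mem_ofPred_eq, or_assoc] using
        linearized_eq_or_two_mul_add_pow_succ_eq (eq_add_of_sub_eq' hx)
          (by rw [← pow_mul]; exact hsign x) (by rw [← pow_mul]; exact hsign (x + a))
    _ ≤ 1 + 1 + 2 + 2 := by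
      have hL := ncard_setOf_linearized_eq_le_one hcard hn hodd (k := k) hb
      have hN := ncard_setOf_two_mul_add_pow_eq_le_two hcard hn hodd (k := k) b
      grw [Set.ncard_union_le, Set.ncard_union_le, Set.ncard_union_le, hL, hL, hN, hN]

/-- Theorem 3.3 (Theorem `thma`), case `c = 1`, `d` odd: `₁Δ_f ≤ 6`: for every
nonzero `a` and every `b`, the equation `(x+a)^d - x^d = b` has at most 6
solutions in `F_{p^n}`. -/
theorem stmt_5 (p n k d : ℕ) (hp : p.Prime) (hodd : Odd p)
    (hn0 : 0 < n) (hk0 : 0 < k) (hd0 : 0 < d) (hd : Odd d)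
    (hmod : p ^ n % 4 = 3)
    (hcong : d * (p ^ k + 1) ≡ (p ^ n + 1) / 2 [MOD p ^ n - 1])
    (F : Type*) [Field F] [Fintype F] (hcard : Fintype.card F = p ^ n)
    (a b : F) (ha : a ≠ 0) :
    {x : F | (x + a) ^ d - x ^ d = b}.ncard ≤ 6 :=
  stmt_5_general p n k d hp hodd hd hmod hcong F hcard a b ha
end

section
/- Let p be an odd prime and n, k positive integers with p^n ≡ 3 (mod 4), and let d be an odd positive integer with d·(p^k+1) ≡ (p^n+1)/2 (mod p^n−1). Then the power function f(x)=x^d on F_{p^n} satisfies _{−1}Δ_f ≤ 3: for all a, b ∈ F_{p^n}, the equation (x+a)^d + x^d = b has at most 3 solutions x ∈ F_{p^n}. -/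
/-!
Write `σ y = y ^ p ^ k` and `N y = σ y * y`. The congruence on `d` gives `N (x ^ d) = χ(x) x`
with `χ` the quadratic character, so `N (x ^ d) = ±x`, and `x ↦ x ^ d` is injective.
For a solution `x` put `u = (x + a) ^ d` and `v = x ^ d`, so `u + v = b`. Depending on the
signs in `N u = ±(x + a)` and `N v = ±x`, either `(N u - N v) ^ 2 = a ^ 2` or `N u + N v = ±a`.
Because `n` is odd, `σ t = -t` forces `t = 0` and `σ z * z = 1` forces `z = ±1`; for `b ≠ 0`
this makes each of the three conditions determine `v` up to `v ↦ b - v`. Finally two solutions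
`x, y` with `x ^ d + y ^ d = b` satisfy `x + a = y` and `y + a = x`, so they coincide.
-/

namespace FiniteField

variable {F : Type*} [Field F] [Fintype F] {p n : ℕ}

theorem pow_pow_eq_self_of_odd (hcard : Fintype.card F = p ^ n) (hn : Odd n) (k : ℕ) {t : F}
    (h : (t ^ p ^ k) ^ p ^ k = t) : t ^ p ^ k = t := by
  have hperiod₂ : Function.IsPeriodicPt (· ^ p ^ k) 2 t := by
    simpa [Function.IsPeriodicPt, Function.IsFixedPt] using h
  have hperiodₙ : Function.IsPeriodicPt (· ^ p ^ k) n t := by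
    rw [Function.IsPeriodicPt, Function.IsFixedPt, pow_iterate, ← pow_mul, mul_comm, pow_mul,
      ← hcard]
    exact pow_card_pow k t
  simpa [Nat.coprime_two_left.mpr hn, Function.IsPeriodicPt, Function.IsFixedPt] using
    hperiod₂.gcd hperiodₙ

theorem eq_zero_of_pow_pow_eq_neg (hcard : Fintype.card F = p ^ n) (hn : Odd n) (hp : Odd p)
    (h2 : (2 : F) ≠ 0) (k : ℕ) {t : F} (h : t ^ p ^ k = -t) : t = 0 := by
  have hfix := pow_pow_eq_self_of_odd hcard hn k (by rw [h, hp.pow.neg_pow, h, neg_neg])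
  exact (mul_eq_zero.mp (by linear_combination h - hfix : 2 * t = 0)).resolve_left h2

theorem eq_one_or_eq_neg_one_of_pow_pow_mul_self (hcard : Fintype.card F = p ^ n) (hn : Odd n)
    (k : ℕ) {z : F} (h : z ^ p ^ k * z = 1) : z = 1 ∨ z = -1 := by
  have hinv : z ^ p ^ k = z⁻¹ := eq_inv_of_mul_eq_one_left h
  have hfix := pow_pow_eq_self_of_odd hcard hn k (by rw [hinv, inv_pow, hinv, inv_inv])
  rw [hfix] at h
  exact mul_self_eq_one_iff.mp h

theorem pow_eq_self_or_eq_neg_of_modEq (hF : ringChar F ≠ 2) {j : ℕ} (hj0 : j ≠ 0)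
    (hj : j ≡ (Fintype.card F + 1) / 2 [MOD Fintype.card F - 1]) (x : F) :
    x ^ j = x ∨ x ^ j = -x := by
  rcases eq_or_ne x 0 with rfl | hx
  · simp [hj0]
  have hcard := odd_card_of_char_ne_two hF
  rw [pow_eq_pow_of_modEq hj (pow_card_sub_one_eq_one x hx),
    show (Fintype.card F + 1) / 2 = Fintype.card F / 2 + 1 by omega, pow_succ]
  rcases pow_dichotomy hF hx with h | h <;> simp [h]

end FiniteField

section

variable {F : Type*} [Field F] (σ : F →+* F)

theorem eq_zero_of_map_mul_add_mul_map_eq_zero (hker : ∀ t, σ t = -t → t = 0) {b t : F}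
    (hb : b ≠ 0) (h : σ b * t + b * σ t = 0) : t = 0 := by
  have hσb : σ b ≠ 0 := map_ne_zero σ |>.mpr hb
  have hquot : σ (t / b) = -(t / b) := by
    rw [map_div₀]
    field_simp
    linear_combination h
  simpa [hb] using hker _ hquot

theorem eq_or_eq_neg_of_map_mul_self_eq (hnorm : ∀ z, σ z * z = 1 → z = 1 ∨ z = -1) {v w : F}
    (h : σ v * v = σ w * w) : v = w ∨ v = -w := by
  rcases eq_or_ne w 0 with rfl | hw
  · simp_all
  have hσw : σ w ≠ 0 := map_ne_zero σ |>.mpr hw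
  have hquot : σ (v / w) * (v / w) = 1 := by
    rw [map_div₀, div_mul_div_comm, h, div_self (mul_ne_zero hσw hw)]
  rcases hnorm _ hquot with hq | hq
  · exact .inl ((div_eq_one_iff_eq hw).mp hq)
  · exact .inr (by rw [(div_eq_iff hw).mp hq]; ring)

theorem eq_or_add_eq_of_sq_map_mul_sub_eq (hker : ∀ t, σ t = -t → t = 0) {b v w : F}
    (hb : b ≠ 0)
    (h : (σ (b - v) * (b - v) - σ v * v) ^ 2 = (σ (b - w) * (b - w) - σ w * w) ^ 2) :
    v = w ∨ v + w = b := by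
  simp only [map_sub] at h
  rcases sq_eq_sq_iff_eq_or_eq_neg.mp h with h | h
  · refine .inl (sub_eq_zero.mp (eq_zero_of_map_mul_add_mul_map_eq_zero σ hker hb ?_))
    rw [map_sub]
    linear_combination -h
  · refine .inr (sub_eq_zero.mp (eq_zero_of_map_mul_add_mul_map_eq_zero σ hker hb ?_))
    rw [map_sub, map_add]
    linear_combination -h

theorem eq_or_add_eq_of_map_mul_add_eq (hnorm : ∀ z, σ z * z = 1 → z = 1 ∨ z = -1)
    (h2 : (2 : F) ≠ 0) {b v w : F}
    (h : σ (b - v) * (b - v) + σ v * v = σ (b - w) * (b - w) + σ w * w) :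
    v = w ∨ v + w = b := by
  have hnorm_eq : σ (2 * v - b) * (2 * v - b) = σ (2 * w - b) * (2 * w - b) := by
    simp only [map_sub, map_mul, map_ofNat] at h ⊢
    linear_combination 2 * h
  rcases eq_or_eq_neg_of_map_mul_self_eq σ hnorm hnorm_eq with h | h
  · exact .inl (mul_left_cancel₀ h2 (by linear_combination h))
  · exact .inr (mul_left_cancel₀ h2 (by linear_combination h))

end

section

variable {F : Type*} [Field F] {d : ℕ}

theorem injective_pow_of_map_pow_mul_pow (σ : F →+* F) (h2 : (2 : F) ≠ 0) (hd : Odd d)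
    (hN : ∀ x : F, σ (x ^ d) * x ^ d = x ∨ σ (x ^ d) * x ^ d = -x) :
    Function.Injective (· ^ d : F → F) := by
  have hsq : ∀ x : F, (σ (x ^ d) * x ^ d) ^ 2 = x ^ 2 := fun x => by
    rcases hN x with h | h <;> simp only [h, neg_sq]
  intro x y (hxy : x ^ d = y ^ d)
  have hsq_eq : x ^ 2 = y ^ 2 := by rw [← hsq x, ← hsq y, hxy]
  rcases sq_eq_sq_iff_eq_or_eq_neg.mp hsq_eq with h | rfl
  · exact h
  · rw [hd.neg_pow, neg_eq_iff_add_eq_zero, ← two_mul, mul_eq_zero] at hxy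
    simp [pow_eq_zero_iff hd.pos.ne' |>.mp (hxy.resolve_left h2)]

theorem eq_of_pow_eq_or_pow_add_pow_eq (hinj : Function.Injective (· ^ d : F → F))
    (h2 : (2 : F) ≠ 0) {a b x y : F} (hx : (x + a) ^ d + x ^ d = b)
    (hy : (y + a) ^ d + y ^ d = b) (h : x ^ d = y ^ d ∨ x ^ d + y ^ d = b) : x = y := by
  rcases h with h | h
  · exact hinj h
  have hxy : x + a = y := hinj (by linear_combination hx - h)
  have hyx : y + a = x := hinj (by linear_combination hy - h)
  exact mul_left_cancel₀ h2 (by linear_combination hxy - hyx)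

theorem subsingleton_setOf_add_pow_add_pow_eq_zero (hinj : Function.Injective (· ^ d : F → F))
    (h2 : (2 : F) ≠ 0) (hd : Odd d) (a : F) :
    {x : F | (x + a) ^ d + x ^ d = 0}.Subsingleton := by
  intro x (hx : (x + a) ^ d + x ^ d = 0) y (hy : (y + a) ^ d + y ^ d = 0)
  have hx' : x + a = -x := hinj (by linear_combination hx - hd.neg_pow x)
  have hy' : y + a = -y := hinj (by linear_combination hy - hd.neg_pow y)
  exact mul_left_cancel₀ h2 (by linear_combination hx' - hy')

theorem subsingleton_setOf_sq_map_mul_sub_eq (σ : F →+* F) (hker : ∀ t, σ t = -t → t = 0)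
    (hinj : Function.Injective (· ^ d : F → F)) (h2 : (2 : F) ≠ 0) {b : F} (hb : b ≠ 0)
    (a c : F) :
    {x : F | (x + a) ^ d + x ^ d = b ∧
      (σ ((x + a) ^ d) * (x + a) ^ d - σ (x ^ d) * x ^ d) ^ 2 = c}.Subsingleton := by
  rintro x ⟨hx, hxc⟩ y ⟨hy, hyc⟩
  rw [show (x + a) ^ d = b - x ^ d by linear_combination hx] at hxc
  rw [show (y + a) ^ d = b - y ^ d by linear_combination hy] at hyc
  exact eq_of_pow_eq_or_pow_add_pow_eq hinj h2 hx hy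
    (eq_or_add_eq_of_sq_map_mul_sub_eq σ hker hb (hxc.trans hyc.symm))

theorem subsingleton_setOf_map_mul_add_eq (σ : F →+* F)
    (hnorm : ∀ z, σ z * z = 1 → z = 1 ∨ z = -1)
    (hinj : Function.Injective (· ^ d : F → F)) (h2 : (2 : F) ≠ 0) (a b c : F) :
    {x : F | (x + a) ^ d + x ^ d = b ∧
      σ ((x + a) ^ d) * (x + a) ^ d + σ (x ^ d) * x ^ d = c}.Subsingleton := by
  rintro x ⟨hx, hxc⟩ y ⟨hy, hyc⟩
  rw [show (x + a) ^ d = b - x ^ d by linear_combination hx] at hxc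
  rw [show (y + a) ^ d = b - y ^ d by linear_combination hy] at hyc
  exact eq_of_pow_eq_or_pow_add_pow_eq hinj h2 hx hy
    (eq_or_add_eq_of_map_mul_add_eq σ hnorm h2 (hxc.trans hyc.symm))

theorem ncard_setOf_add_pow_add_pow_eq_le_three (σ : F →+* F)
    (hker : ∀ t, σ t = -t → t = 0) (hnorm : ∀ z, σ z * z = 1 → z = 1 ∨ z = -1)
    (h2 : (2 : F) ≠ 0) (hd : Odd d)
    (hN : ∀ x : F, σ (x ^ d) * x ^ d = x ∨ σ (x ^ d) * x ^ d = -x) (a b : F) :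
    {x : F | (x + a) ^ d + x ^ d = b}.ncard ≤ 3 := by
  have hinj := injective_pow_of_map_pow_mul_pow σ h2 hd hN
  have ncard_le_one : ∀ s : Set F, s.Subsingleton → s.ncard ≤ 1 := fun s hs =>
    (Set.ncard_le_one hs.finite).mpr hs
  rcases eq_or_ne b 0 with rfl | hb
  · exact (ncard_le_one _ (subsingleton_setOf_add_pow_add_pow_eq_zero hinj h2 hd a)).trans
      (by norm_num)
  set E := {x : F | (x + a) ^ d + x ^ d = b ∧
    (σ ((x + a) ^ d) * (x + a) ^ d - σ (x ^ d) * x ^ d) ^ 2 = a ^ 2}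
  set M := fun c : F => {x : F | (x + a) ^ d + x ^ d = b ∧
    σ ((x + a) ^ d) * (x + a) ^ d + σ (x ^ d) * x ^ d = c}
  have hE : E.Subsingleton := subsingleton_setOf_sq_map_mul_sub_eq σ hker hinj h2 hb a _
  have hM : ∀ c, (M c).Subsingleton := subsingleton_setOf_map_mul_add_eq σ hnorm hinj h2 a b
  have hcover : {x : F | (x + a) ^ d + x ^ d = b} ⊆ E ∪ M a ∪ M (-a) := by
    intro x hx
    rcases hN (x + a) with hu | hu <;> rcases hN x with hv | hv
    · exact .inl (.inl ⟨hx, by rw [hu, hv]; ring⟩)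
    · exact .inl (.inr ⟨hx, by rw [hu, hv]; ring⟩)
    · exact .inr ⟨hx, by rw [hu, hv]; ring⟩
    · exact .inl (.inl ⟨hx, by rw [hu, hv]; ring⟩)
  calc {x : F | (x + a) ^ d + x ^ d = b}.ncard
      ≤ (E ∪ M a ∪ M (-a)).ncard :=
        Set.ncard_le_ncard hcover ((hE.finite.union (hM a).finite).union (hM (-a)).finite)
    _ ≤ E.ncard + (M a).ncard + (M (-a)).ncard :=
        (Set.ncard_union_le _ _).trans (Nat.add_le_add_right (Set.ncard_union_le _ _) _)
    _ ≤ 1 + 1 + 1 := by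
        gcongr <;> apply ncard_le_one
        exacts [hE, hM a, hM (-a)]

end

theorem stmt_7_general (p n k d : ℕ) (hp : p.Prime) (hodd : Odd p)
    (hd : Odd d)
    (hmod : p ^ n % 4 = 3)
    (hcong : d * (p ^ k + 1) ≡ (p ^ n + 1) / 2 [MOD p ^ n - 1])
    (F : Type*) [Field F] [Fintype F] (hcard : Fintype.card F = p ^ n)
    (a b : F) :
    {x : F | (x + a) ^ d + x ^ d = b}.ncard ≤ 3 := by
  have : Fact p.Prime := ⟨hp⟩
  have : CharP F p := charP_of_card_eq_prime_pow hcard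
  have hn : Odd n := Nat.odd_of_pow_mod_four_eq_three hmod
  have hF : ringChar F ≠ 2 := by
    rw [ringChar.eq F p]
    rintro rfl
    exact Nat.not_odd_iff_even.mpr even_two hodd
  have h2 : (2 : F) ≠ 0 := Ring.two_ne_zero hF
  refine ncard_setOf_add_pow_add_pow_eq_le_three (iterateFrobenius F p k)
    (fun t => FiniteField.eq_zero_of_pow_pow_eq_neg hcard hn hodd h2 k)
    (fun z => FiniteField.eq_one_or_eq_neg_one_of_pow_pow_mul_self hcard hn k) h2 hd
    (fun x => ?_) a b
  rw [iterateFrobenius_def, ← pow_succ, ← pow_mul]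
  exact FiniteField.pow_eq_self_or_eq_neg_of_modEq hF (mul_pos hd.pos (p ^ k).succ_pos).ne'
    (hcard ▸ hcong) x

/-- Theorem 3.3 (Theorem `thma`), case `c = -1`, `d` odd: `₋₁Δ_f ≤ 3`: for all
`a, b`, the equation `(x+a)^d + x^d = b` has at most 3 solutions in `F_{p^n}`. -/
theorem stmt_7 (p n k d : ℕ) (hp : p.Prime) (hodd : Odd p)
    (hn0 : 0 < n) (hk0 : 0 < k) (hd0 : 0 < d) (hd : Odd d)
    (hmod : p ^ n % 4 = 3)
    (hcong : d * (p ^ k + 1) ≡ (p ^ n + 1) / 2 [MOD p ^ n - 1])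
    (F : Type*) [Field F] [Fintype F] (hcard : Fintype.card F = p ^ n)
    (a b : F) :
    {x : F | (x + a) ^ d + x ^ d = b}.ncard ≤ 3 :=
  stmt_7_general p n k d hp hodd hd hmod hcong F hcard a b
end

section
/- Let p be an odd prime and n, k positive integers with p^n ≡ 3 (mod 4), and let d be an even positive integer with d·(p^k+1) ≡ (p^n+1)/2 (mod p^n−1). Then the power function f(x)=x^d on F_{p^n} satisfies _{−1}Δ_f ≤ 6: for all a, b ∈ F_{p^n}, the equation (x+a)^d + x^d = b has at most 6 solutions x ∈ F_{p^n}. -/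
section Aux

variable {F : Type*} [Field F] [Fintype F]

private lemma aux_charP {p n : ℕ} (hp : p.Prime) (hn0 : 0 < n)
    (hcard : Fintype.card F = p ^ n) : CharP F p := by
  have hr : CharP F (ringChar F) := ringChar.charP F
  obtain ⟨m, hrp, hcard'⟩ := FiniteField.card F (ringChar F)
  have hdvd : p ∣ (ringChar F) ^ (m : ℕ) := by
    rw [← hcard', hcard]
    exact dvd_pow_self p hn0.ne'
  have : p ∣ ringChar F := hp.dvd_of_dvd_pow hdvd
  have : p = ringChar F := (Nat.prime_dvd_prime_iff_eq hp hrp).mp this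
  rwa [this]

private lemma aux_nodd {p n : ℕ} (hodd : Odd p) (hmod : p ^ n % 4 = 3) : Odd n := by
  by_contra h
  rw [Nat.not_odd_iff_even] at h
  obtain ⟨m, rfl⟩ := h
  have hsq : p ^ (m + m) = p ^ m * p ^ m := by rw [pow_add]
  obtain ⟨j, hj⟩ := hodd.pow (n := m)
  have hkey : (2 * j + 1) * (2 * j + 1) = 4 * (j * j + j) + 1 := by ring
  rw [hsq, hj] at hmod
  omega

private lemma aux_frob {p n k : ℕ} (hp : p.Prime) (hodd : Odd p) (hn0 : 0 < n)
    [CharP F p] (hcard : Fintype.card F = p ^ n) (hnodd : Odd n)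
    {z : F} (hz : z ^ p ^ k = -z) : z = 0 := by
  have hiter : ∀ j : ℕ, z ^ p ^ (k * j) = (-1) ^ j * z := by
    intro j
    induction j with
    | zero => simp
    | succ j ih =>
      have he : p ^ (k * (j + 1)) = p ^ (k * j) * p ^ k := by
        rw [← pow_add]; ring_nf
      have hopk : Odd (p ^ k) := hodd.pow
      rw [he, pow_mul, ih, mul_pow, hz, ← pow_mul, mul_comm j (p ^ k), pow_mul,
        hopk.neg_one_pow]
      ring
  set g := Nat.gcd k n with hg
  have hgn : g ∣ n := Nat.gcd_dvd_right k n
  have hgk : g ∣ k := Nat.gcd_dvd_left k n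
  have hgpos : 0 < g := Nat.gcd_pos_of_pos_right k hn0
  set t := n / g with ht
  have htdvd : t ∣ n := Nat.div_dvd_of_dvd hgn
  have htodd : Odd t := by
    rcases Nat.even_or_odd t with he | ho
    · exfalso
      obtain ⟨c, hc⟩ := htdvd
      have : Even n := by rw [hc]; exact he.mul_right c
      exact (Nat.not_odd_iff_even.mpr this) hnodd
    · exact ho
  have hkt : k * t = n * (k / g) := by
    obtain ⟨k', hk'⟩ := hgk
    obtain ⟨n', hn'⟩ := hgn
    rw [ht, hk', hn', Nat.mul_div_cancel_left _ hgpos, Nat.mul_div_cancel_left _ hgpos]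
    ring
  have h1 : z ^ p ^ (k * t) = z := by
    rw [hkt, pow_mul, ← hcard]
    exact FiniteField.pow_card_pow _ _
  have h2 := hiter t
  rw [h1, htodd.neg_one_pow, neg_one_mul] at h2
  have h2two : (2 : F) * z = 0 := by linear_combination h2
  have hp2 : (2 : F) ≠ 0 := by
    have h2c : ((2 : ℕ) : F) = 0 ↔ p ∣ 2 := CharP.cast_eq_zero_iff F p 2
    intro hc
    have : p ∣ 2 := h2c.mp (by exact_mod_cast hc)
    have : p = 2 := (Nat.prime_dvd_prime_iff_eq hp Nat.prime_two).mp this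
    rw [this] at hodd
    exact (Nat.not_odd_iff_even.mpr (by decide)) hodd
  exact (mul_eq_zero.mp h2two).resolve_left hp2

private lemma aux_root {p n k : ℕ} (hp : p.Prime) (hodd : Odd p) (hn0 : 0 < n)
    [CharP F p] (hcard : Fintype.card F = p ^ n) (hnodd : Odd n)
    {u : F} (hu : u ^ (p ^ k + 1) = 1) : u = 1 ∨ u = -1 := by
  haveI := Fact.mk hp
  have hu0 : u ≠ 0 := by
    rintro rfl
    rw [zero_pow (by positivity)] at hu
    exact zero_ne_one hu
  have hP : u ^ p ^ k = u⁻¹ := by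
    rw [pow_succ] at hu
    exact eq_inv_of_mul_eq_one_left hu
  set z := u - u⁻¹ with hzdef
  have hz : z ^ p ^ k = -z := by
    rw [hzdef, sub_pow_char_pow, inv_pow, hP, inv_inv]
    ring
  have hz0 : z = 0 := aux_frob hp hodd hn0 hcard hnodd hz
  have huu : u = u⁻¹ := by
    have := sub_eq_zero.mp hz0
    exact this
  have hsq : u * u = 1 := by
    nth_rewrite 1 [huu]
    exact inv_mul_cancel₀ hu0
  have : (u - 1) * (u + 1) = 0 := by linear_combination hsq
  rcases mul_eq_zero.mp this with h | h
  · exact Or.inl (sub_eq_zero.mp h)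
  · exact Or.inr (eq_neg_of_add_eq_zero_left h)

private lemma aux_pow_congr {x : F} (hx : x ≠ 0) {A B : ℕ}
    (h : A ≡ B [MOD Fintype.card F - 1]) : x ^ A = x ^ B := by
  have h1 : x ^ (Fintype.card F - 1) = 1 := FiniteField.pow_card_sub_one_eq_one x hx
  have key : ∀ C : ℕ, x ^ C = x ^ (C % (Fintype.card F - 1)) := by
    intro C
    conv_lhs => rw [← Nat.div_add_mod C (Fintype.card F - 1)]
    rw [pow_add, pow_mul, h1, one_pow, one_mul]
  rw [key A, key B, h]

private lemma aux_ringChar {p : ℕ} (hodd : Odd p) [CharP F p] : ringChar F ≠ 2 := by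
  have : ringChar F = p := by
    have := ringChar.charP F
    exact CharP.eq F this ‹CharP F p›
  rw [this]
  intro hc
  rw [hc] at hodd
  exact (Nat.not_odd_iff_even.mpr (by decide)) hodd

private lemma aux_L3 {p n k d : ℕ} (hp : p.Prime) (hodd : Odd p) (hn0 : 0 < n)
    [CharP F p] (hcard : Fintype.card F = p ^ n) (hmod : p ^ n % 4 = 3)
    (hcong : d * (p ^ k + 1) ≡ (p ^ n + 1) / 2 [MOD p ^ n - 1])
    {x : F} (hx : x ≠ 0) :
    (IsSquare x ∧ (x ^ d) ^ (p ^ k + 1) = x) ∨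
      (¬IsSquare x ∧ (x ^ d) ^ (p ^ k + 1) = -x) := by
  have hq2 : p ^ n % 2 = 1 := by omega
  have hqcard : Fintype.card F - 1 = p ^ n - 1 := by rw [hcard]
  have e1 : (x ^ d) ^ (p ^ k + 1) = x ^ (d * (p ^ k + 1)) := by rw [← pow_mul]
  have e2 : x ^ (d * (p ^ k + 1)) = x ^ ((p ^ n + 1) / 2) := by
    apply aux_pow_congr hx
    rw [hqcard]
    exact hcong
  have e3 : (p ^ n + 1) / 2 = p ^ n / 2 + 1 := by omega
  have e4 : x ^ ((p ^ n + 1) / 2) = x ^ (p ^ n / 2) * x := by rw [e3, pow_succ]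
  have hchar2 : ringChar F ≠ 2 := aux_ringChar hodd
  have hdic := FiniteField.pow_dichotomy hchar2 hx
  rw [hcard] at hdic
  have hsq : IsSquare x ↔ x ^ (p ^ n / 2) = 1 := by
    rw [FiniteField.isSquare_iff hchar2 hx, hcard]
  have hne : (-1 : F) ≠ 1 := by
    intro hc
    have : (2 : F) = 0 := by linear_combination -hc
    have h2c : ((2 : ℕ) : F) = 0 ↔ p ∣ 2 := CharP.cast_eq_zero_iff F p 2
    have hpd : p ∣ 2 := h2c.mp (by exact_mod_cast this)
    have : p = 2 := (Nat.prime_dvd_prime_iff_eq hp Nat.prime_two).mp hpd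
    rw [this] at hodd
    exact (Nat.not_odd_iff_even.mpr (by decide)) hodd
  rcases hdic with h | h
  · left
    refine ⟨hsq.mpr h, ?_⟩
    rw [e1, e2, e4, h, one_mul]
  · right
    refine ⟨fun hc => hne (h ▸ (hsq.mp hc : x ^ (p ^ n / 2) = 1) ▸ rfl), ?_⟩
    · rw [e1, e2, e4, h]; ring

private lemma aux_neg {p n : ℕ} (hp : p.Prime) (hodd : Odd p) (hn0 : 0 < n)
    [CharP F p] (hcard : Fintype.card F = p ^ n) (hmod : p ^ n % 4 = 3)
    {x : F} (hx : x ≠ 0) : IsSquare (-x) ↔ ¬IsSquare x := by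
  have hchar2 : ringChar F ≠ 2 := aux_ringChar hodd
  have hxneg : (-x) ≠ 0 := neg_ne_zero.mpr hx
  rw [FiniteField.isSquare_iff hchar2 hx, FiniteField.isSquare_iff hchar2 hxneg, hcard]
  have hoddq : Odd (p ^ n / 2) := by
    rw [Nat.odd_iff]; omega
  have hneg : (-x) ^ (p ^ n / 2) = -(x ^ (p ^ n / 2)) := hoddq.neg_pow x
  rw [hneg]
  have hne : (-1 : F) ≠ 1 := by
    intro hc
    have : (2 : F) = 0 := by linear_combination -hc
    have h2c : ((2 : ℕ) : F) = 0 ↔ p ∣ 2 := CharP.cast_eq_zero_iff F p 2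
    have hpd : p ∣ 2 := h2c.mp (by exact_mod_cast this)
    have : p = 2 := (Nat.prime_dvd_prime_iff_eq hp Nat.prime_two).mp hpd
    rw [this] at hodd
    exact (Nat.not_odd_iff_even.mpr (by decide)) hodd
  have hdic := FiniteField.pow_dichotomy hchar2 hx
  rw [hcard] at hdic
  rcases hdic with h | h
  · rw [h]
    exact iff_of_false (by simpa using hne) (by simp)
  · rw [h]
    exact iff_of_true (neg_neg (1:F)) hne

private lemma aux_2to1 {p n k d : ℕ} (hp : p.Prime) (hodd : Odd p) (hn0 : 0 < n)
    [CharP F p] (hcard : Fintype.card F = p ^ n) (hmod : p ^ n % 4 = 3)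
    (hcong : d * (p ^ k + 1) ≡ (p ^ n + 1) / 2 [MOD p ^ n - 1])
    {x y : F} (hx : x ≠ 0) (hy : y ≠ 0) (hxy : x ^ d = y ^ d)
    (hsq : IsSquare x ↔ IsSquare y) : x = y := by
  have Hx := aux_L3 hp hodd hn0 hcard hmod hcong hx
  have Hy := aux_L3 hp hodd hn0 hcard hmod hcong hy
  rw [hxy] at Hx
  rcases Hx with ⟨hx1, hx2⟩ | ⟨hx1, hx2⟩ <;> rcases Hy with ⟨hy1, hy2⟩ | ⟨hy1, hy2⟩
  · rw [hx2] at hy2; exact hy2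
  · exact absurd (hsq.mp hx1) hy1
  · exact absurd (hsq.mpr hy1) hx1
  · rw [hx2] at hy2; exact neg_injective hy2

private lemma aux_pm {p n k d : ℕ} (hp : p.Prime) (hodd : Odd p) (hn0 : 0 < n)
    [CharP F p] (hcard : Fintype.card F = p ^ n) (hmod : p ^ n % 4 = 3)
    (hcong : d * (p ^ k + 1) ≡ (p ^ n + 1) / 2 [MOD p ^ n - 1])
    {x y : F} (hx : x ≠ 0) (hy : y ≠ 0) (hxy : x ^ d = y ^ d) : x = y ∨ x = -y := by
  have Hx := aux_L3 hp hodd hn0 hcard hmod hcong hx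
  have Hy := aux_L3 hp hodd hn0 hcard hmod hcong hy
  rw [hxy] at Hx
  rcases Hx with ⟨hx1, hx2⟩ | ⟨hx1, hx2⟩ <;> rcases Hy with ⟨hy1, hy2⟩ | ⟨hy1, hy2⟩
  · rw [hx2] at hy2; exact Or.inl hy2
  · rw [hx2] at hy2; exact Or.inr hy2
  · rw [hx2] at hy2; exact Or.inr (neg_eq_iff_eq_neg.mp hy2)
  · rw [hx2] at hy2; exact Or.inl (neg_injective hy2)

private lemma aux_two_ne_zero {p : ℕ} (hp : p.Prime) (hodd : Odd p) [CharP F p] :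
    (2 : F) ≠ 0 := by
  intro hc
  have h2c : ((2 : ℕ) : F) = 0 ↔ p ∣ 2 := CharP.cast_eq_zero_iff F p 2
  have hpd : p ∣ 2 := h2c.mp (by exact_mod_cast hc)
  have : p = 2 := (Nat.prime_dvd_prime_iff_eq hp Nat.prime_two).mp hpd
  rw [this] at hodd
  exact (Nat.not_odd_iff_even.mpr (by decide)) hodd

private lemma aux_two_pow {p : ℕ} (hp : p.Prime) [CharP F p] (k : ℕ) :
    (2 : F) ^ p ^ k = 2 := by
  haveI := Fact.mk hp
  have h : ((1 : F) + 1) ^ p ^ k = 1 ^ p ^ k + 1 ^ p ^ k := add_pow_char_pow p k (x := (1:F)) (y := 1)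
  norm_num at h
  exact_mod_cast h

end Aux

/-- Theorem 3.3 (Theorem `thma`), case `c = -1`, `d` even: `₋₁Δ_f ≤ 6`: for all
`a, b`, the equation `(x+a)^d + x^d = b` has at most 6 solutions in `F_{p^n}`. -/
theorem stmt_8 (p n k d : ℕ) (hp : p.Prime) (hodd : Odd p)
    (hn0 : 0 < n) (hk0 : 0 < k) (hd0 : 0 < d) (hd : Even d)
    (hmod : p ^ n % 4 = 3)
    (hcong : d * (p ^ k + 1) ≡ (p ^ n + 1) / 2 [MOD p ^ n - 1])
    (F : Type*) [Field F] [Fintype F] (hcard : Fintype.card F = p ^ n)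
    (a b : F) :
    {x : F | (x + a) ^ d + x ^ d = b}.ncard ≤ 6 := by
  classical
  haveI hcharP : CharP F p := aux_charP hp hn0 hcard
  haveI := Fact.mk hp
  have hnodd : Odd n := aux_nodd hodd hmod
  have h2ne : (2 : F) ≠ 0 := aux_two_ne_zero hp hodd
  have hdne : d ≠ 0 := hd0.ne'
  -- counting helpers
  have pair_le : ∀ (s : Set F) (u v : F), s ⊆ {u, v} → s.ncard ≤ 2 := by
    intro s u v hsub
    have h1 := Set.ncard_le_ncard hsub (Set.toFinite _)
    have h2 : ({u, v} : Set F).ncard ≤ 2 := by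
      have := Set.ncard_insert_le u ({v} : Set F)
      simpa [Set.ncard_singleton] using this
    omega
  have le2_of : ∀ (s : Set F) (g : F → F),
      (∀ x ∈ s, ∀ y ∈ s, y = x ∨ y = g x) → s.ncard ≤ 2 := by
    intro s g h
    rcases s.eq_empty_or_nonempty with rfl | ⟨x0, hx0⟩
    · simp
    · refine pair_le s x0 (g x0) (fun y hy => ?_)
      rcases h x0 hx0 y hy with h | h <;> simp [h]
  have le1_of : ∀ s : Set F, (∀ x ∈ s, ∀ y ∈ s, y = x) → s.ncard ≤ 1 := by
    intro s h
    rcases s.eq_empty_or_nonempty with rfl | ⟨x0, hx0⟩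
    · simp
    · have hsub : s ⊆ {x0} := fun y hy => by simp [h x0 hx0 y hy]
      have := Set.ncard_le_ncard hsub (Set.toFinite _)
      simpa using this
  -- L3 helpers
  have hL3s : ∀ x : F, x ≠ 0 → IsSquare x → (x ^ d) ^ p ^ k * x ^ d = x := by
    intro x hx0 hsq
    rcases aux_L3 hp hodd hn0 hcard hmod hcong hx0 with ⟨_, h⟩ | ⟨hns, _⟩
    · rw [← pow_succ]; exact h
    · exact absurd hsq hns
  have hL3n : ∀ x : F, x ≠ 0 → ¬IsSquare x → (x ^ d) ^ p ^ k * x ^ d = -x := by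
    intro x hx0 hsq
    rcases aux_L3 hp hodd hn0 hcard hmod hcong hx0 with ⟨hs, _⟩ | ⟨_, h⟩
    · exact absurd hs hsq
    · rw [← pow_succ]; exact h
  set S : Set F := {x : F | (x + a) ^ d + x ^ d = b} with hS
  by_cases ha : a = 0
  · -- a = 0 : at most 2 solutions
    refine le_trans (le2_of S (fun x => -x) ?_) (by norm_num)
    intro x hx y hy
    have hx' : (x + a) ^ d + x ^ d = b := hx
    have hy' : (y + a) ^ d + y ^ d = b := hy
    rw [ha, add_zero] at hx' hy'
    have hxy : y ^ d = x ^ d := by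
      have h0 : (2 : F) * (y ^ d - x ^ d) = 0 := by linear_combination hy' - hx'
      rcases mul_eq_zero.mp h0 with h | h
      · exact absurd h h2ne
      · exact sub_eq_zero.mp h
    by_cases hx0 : x = 0
    · left
      rw [hx0] at hxy ⊢
      rw [zero_pow hdne] at hxy
      exact pow_eq_zero_iff hdne |>.mp hxy
    · have hy0 : y ≠ 0 := by
        intro hy0
        rw [hy0, zero_pow hdne] at hxy
        exact hx0 (pow_eq_zero_iff hdne |>.mp hxy.symm)
      exact aux_pm hp hodd hn0 hcard hmod hcong hy0 hx0 hxy
  -- now a ≠ 0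
  have hpk0 : p ^ k ≠ 0 := (pow_pos hp.pos k).ne'
  have haF : (a : F) ≠ 0 := ha
  set S0 : Set F := S ∩ {0, -a} with hS0def
  set S1s : Set F := {x : F | x ∈ S ∧ x ≠ 0 ∧ x + a ≠ 0 ∧ IsSquare x ∧ IsSquare (x + a)}
    with hS1sdef
  set S1n : Set F := {x : F | x ∈ S ∧ x ≠ 0 ∧ x + a ≠ 0 ∧ ¬IsSquare x ∧ ¬IsSquare (x + a)}
    with hS1ndef
  set S2p : Set F := {x : F | x ∈ S ∧ x ≠ 0 ∧ x + a ≠ 0 ∧ ¬IsSquare x ∧ IsSquare (x + a)}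
    with hS2pdef
  set S2m : Set F := {x : F | x ∈ S ∧ x ≠ 0 ∧ x + a ≠ 0 ∧ IsSquare x ∧ ¬IsSquare (x + a)}
    with hS2mdef
  -- cover
  have hcover : S ⊆ ((((S0 ∪ S1s) ∪ S1n) ∪ S2p) ∪ S2m) := by
    intro x hx
    by_cases h0 : x = 0
    · exact Or.inl (Or.inl (Or.inl (Or.inl ⟨hx, by simp [h0]⟩)))
    by_cases hxa : x + a = 0
    · have hxe : x = -a := by linear_combination hxa
      exact Or.inl (Or.inl (Or.inl (Or.inl ⟨hx, by simp [hxe]⟩)))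
    by_cases q1 : IsSquare x <;> by_cases q2 : IsSquare (x + a)
    · exact Or.inl (Or.inl (Or.inl (Or.inr ⟨hx, h0, hxa, q1, q2⟩)))
    · exact Or.inr ⟨hx, h0, hxa, q1, q2⟩
    · exact Or.inl (Or.inr ⟨hx, h0, hxa, q1, q2⟩)
    · exact Or.inl (Or.inl (Or.inr ⟨hx, h0, hxa, q1, q2⟩))
  have hsum : S.ncard ≤ S0.ncard + S1s.ncard + S1n.ncard + S2p.ncard + S2m.ncard := by
    have c0 := Set.ncard_le_ncard hcover (Set.toFinite _)
    have c1 := Set.ncard_union_le ((((S0 ∪ S1s) ∪ S1n) ∪ S2p)) S2m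
    have c2 := Set.ncard_union_le (((S0 ∪ S1s) ∪ S1n)) S2p
    have c3 := Set.ncard_union_le ((S0 ∪ S1s)) S1n
    have c4 := Set.ncard_union_le S0 S1s
    omega
  -- key identity for the mixed classes
  have h2p : ∀ z : F, (2 * z - b) ^ p ^ k = 2 * z ^ p ^ k - b ^ p ^ k := by
    intro z
    rw [sub_pow_char_pow, mul_pow, aux_two_pow hp k]
  have keyS2m : ∀ x ∈ S2m,
      (2 * x ^ d - b) ^ p ^ k * (2 * x ^ d - b) = -(2 * a) - b ^ p ^ k * b := by
    intro x hx
    obtain ⟨hxS, hx0, hxa, hqx, hqxa⟩ := hx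
    have heq : (x + a) ^ d + x ^ d = b := hxS
    have h1 := hL3s x hx0 hqx
    have h2 := hL3n (x + a) hxa hqxa
    have ht : (x + a) ^ d = b - x ^ d := by linear_combination heq
    rw [ht, sub_pow_char_pow] at h2
    rw [h2p]
    linear_combination 2 * (h1 + h2)
  have keyS2p : ∀ x ∈ S2p,
      (2 * x ^ d - b) ^ p ^ k * (2 * x ^ d - b) = 2 * a - b ^ p ^ k * b := by
    intro x hx
    obtain ⟨hxS, hx0, hxa, hqx, hqxa⟩ := hx
    have heq : (x + a) ^ d + x ^ d = b := hxS
    have h1 := hL3n x hx0 hqx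
    have h2 := hL3s (x + a) hxa hqxa
    have ht : (x + a) ^ d = b - x ^ d := by linear_combination heq
    rw [ht, sub_pow_char_pow] at h2
    rw [h2p]
    linear_combination 2 * (h1 + h2)
  -- generic bound for mixed classes
  have hmix : ∀ T : Set F, T ⊆ S → (∀ x ∈ T, x ≠ 0 ∧ x + a ≠ 0) →
      (∀ x ∈ T, ∀ y ∈ T, (IsSquare x ↔ IsSquare y)) →
      (∀ x ∈ T, (IsSquare x ↔ IsSquare (x + a)) → False) →
      (∀ x ∈ T, ∀ y ∈ T,
        (2 * x ^ d - b) ^ p ^ k * (2 * x ^ d - b)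
          = (2 * y ^ d - b) ^ p ^ k * (2 * y ^ d - b)) →
      T.ncard ≤ 2 := by
    intro T hTS hT0 hTsq hTside hTkey
    refine le2_of T (fun x => -x - a) ?_
    intro x hx y hy
    obtain ⟨hx0, hxa⟩ := hT0 x hx
    obtain ⟨hy0, hya⟩ := hT0 y hy
    have heqx : (x + a) ^ d + x ^ d = b := hTS hx
    have hkxy := hTkey y hy x hx
    have hcancel : ∀ z w : F, (2 : F) * (z - w) = 0 → z = w := by
      intro z w hzw
      rcases mul_eq_zero.mp hzw with h | h
      · exact absurd h h2ne
      · exact sub_eq_zero.mp h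
    by_cases hrx : 2 * x ^ d - b = 0
    · have hry : 2 * y ^ d - b = 0 := by
        rw [hrx] at hkxy
        simp only [mul_zero] at hkxy
        rcases mul_eq_zero.mp hkxy with h | h
        · exact pow_eq_zero_iff hpk0 |>.mp h
        · exact h
      have hsxy : y ^ d = x ^ d := by
        apply hcancel
        linear_combination hry - hrx
      exact Or.inl (aux_2to1 hp hodd hn0 hcard hmod hcong hy0 hx0 hsxy
        (hTsq y hy x hx))
    · have hry : 2 * y ^ d - b ≠ 0 := by
        intro h
        apply hrx
        rw [h] at hkxy
        simp only [mul_zero] at hkxy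
        rcases mul_eq_zero.mp hkxy.symm with h' | h'
        · exact pow_eq_zero_iff hpk0 |>.mp h'
        · exact h'
      have hne : (2 * x ^ d - b) ^ p ^ k * (2 * x ^ d - b) ≠ 0 :=
        mul_ne_zero (pow_ne_zero _ hrx) hrx
      have hu : ((2 * y ^ d - b) / (2 * x ^ d - b)) ^ (p ^ k + 1) = 1 := by
        rw [pow_succ, div_pow, div_mul_div_comm, hkxy]
        exact div_self hne
      rcases aux_root hp hodd hn0 hcard hnodd hu with h1 | h1
      · have hryx := (div_eq_one_iff_eq hrx).mp h1
        have hsxy : y ^ d = x ^ d := by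
          apply hcancel
          linear_combination hryx
        exact Or.inl (aux_2to1 hp hodd hn0 hcard hmod hcong hy0 hx0 hsxy
          (hTsq y hy x hx))
      · have hryx := (div_eq_iff hrx).mp h1
        have hsxy : y ^ d = (x + a) ^ d := by
          have ht : (x + a) ^ d = b - x ^ d := by linear_combination heqx
          rw [ht]
          apply hcancel
          linear_combination hryx
        rcases aux_pm hp hodd hn0 hcard hmod hcong hy0 hxa hsxy with h2 | h2
        · exfalso
          apply hTside x hx
          constructor
          · intro hq
            rw [← h2]
            exact (hTsq x hx y hy).mp hq
          · intro hq
            exact (hTsq y hy x hx).mp (by rw [h2]; exact hq)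
        · right
          rw [h2]
          ring
  have hS2m_le : S2m.ncard ≤ 2 := by
    refine hmix S2m (fun x hx => hx.1) (fun x hx => ⟨hx.2.1, hx.2.2.1⟩)
      (fun x hx y hy => iff_of_true hx.2.2.2.1 hy.2.2.2.1)
      (fun x hx hiff => hx.2.2.2.2 (hiff.mp hx.2.2.2.1))
      (fun x hx y hy => by rw [keyS2m x hx, keyS2m y hy])
  have hS2p_le : S2p.ncard ≤ 2 := by
    refine hmix S2p (fun x hx => hx.1) (fun x hx => ⟨hx.2.1, hx.2.2.1⟩)
      (fun x hx y hy => iff_of_false hx.2.2.2.1 hy.2.2.2.1)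
      (fun x hx hiff => hx.2.2.2.1 (hiff.mpr hx.2.2.2.2))
      (fun x hx y hy => by rw [keyS2p x hx, keyS2p y hy])
  -- the linear identity for the pure classes
  have keyS1s : ∀ x ∈ S1s,
      b ^ p ^ k * b - b ^ p ^ k * x ^ d - b * (x ^ d) ^ p ^ k = a := by
    intro x hx
    obtain ⟨hxS, hx0, hxa, hqx, hqxa⟩ := hx
    have heq : (x + a) ^ d + x ^ d = b := hxS
    have h1 := hL3s x hx0 hqx
    have h2 := hL3s (x + a) hxa hqxa
    have ht : (x + a) ^ d = b - x ^ d := by linear_combination heq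
    rw [ht, sub_pow_char_pow] at h2
    linear_combination h2 - h1
  have keyS1n : ∀ x ∈ S1n,
      b ^ p ^ k * b - b ^ p ^ k * x ^ d - b * (x ^ d) ^ p ^ k = -a := by
    intro x hx
    obtain ⟨hxS, hx0, hxa, hqx, hqxa⟩ := hx
    have heq : (x + a) ^ d + x ^ d = b := hxS
    have h1 := hL3n x hx0 hqx
    have h2 := hL3n (x + a) hxa hqxa
    have ht : (x + a) ^ d = b - x ^ d := by linear_combination heq
    rw [ht, sub_pow_char_pow] at h2
    linear_combination h2 - h1
  -- kernel of the linear map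
  have hker : b ≠ 0 → ∀ w : F, b ^ p ^ k * w + b * w ^ p ^ k = 0 → w = 0 := by
    intro hb0 w hw
    have hbP : b ^ p ^ k ≠ 0 := pow_ne_zero _ hb0
    have hv : (w / b) ^ p ^ k = -(w / b) := by
      rw [div_pow]
      field_simp
      linear_combination hw
    have h0 : w / b = 0 := aux_frob hp hodd hn0 hcard hnodd hv
    exact (div_eq_zero_iff.mp h0).resolve_right hb0
  -- uniqueness in the pure classes
  have hS1s_le : S1s.ncard ≤ 1 := by
    refine le1_of S1s ?_
    intro x hx y hy
    have tx := keyS1s x hx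
    have ty := keyS1s y hy
    by_cases hb0 : b = 0
    · exfalso
      apply haF
      rw [hb0, zero_pow hpk0] at tx
      linear_combination -tx
    · have hw : b ^ p ^ k * (y ^ d - x ^ d) + b * (y ^ d - x ^ d) ^ p ^ k = 0 := by
        rw [sub_pow_char_pow]
        linear_combination tx - ty
      have hw0 := hker hb0 _ hw
      have hsxy : y ^ d = x ^ d := by linear_combination hw0
      exact aux_2to1 hp hodd hn0 hcard hmod hcong hy.2.1 hx.2.1 hsxy
        (iff_of_true hy.2.2.2.1 hx.2.2.2.1)
  have hS1n_le : S1n.ncard ≤ 1 := by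
    refine le1_of S1n ?_
    intro x hx y hy
    have tx := keyS1n x hx
    have ty := keyS1n y hy
    by_cases hb0 : b = 0
    · exfalso
      apply haF
      rw [hb0, zero_pow hpk0] at tx
      linear_combination tx
    · have hw : b ^ p ^ k * (y ^ d - x ^ d) + b * (y ^ d - x ^ d) ^ p ^ k = 0 := by
        rw [sub_pow_char_pow]
        linear_combination tx - ty
      have hw0 := hker hb0 _ hw
      have hsxy : y ^ d = x ^ d := by linear_combination hw0
      exact aux_2to1 hp hodd hn0 hcard hmod hcong hy.2.1 hx.2.1 hsxy
        (iff_of_false hy.2.2.2.1 hx.2.2.2.1)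
  -- S0 bounds
  have hS0_le : S0.ncard ≤ 2 := pair_le S0 0 (-a) Set.inter_subset_right
  -- final case split
  by_cases hab : a ^ d = b
  · -- the pure classes are empty
    have hb0 : b ≠ 0 := by rw [← hab]; exact pow_ne_zero _ haF
    have hBb : b ^ p ^ k * b = a ∨ b ^ p ^ k * b = -a := by
      rcases aux_L3 hp hodd hn0 hcard hmod hcong haF with ⟨_, h⟩ | ⟨_, h⟩ <;>
        [left; right] <;>
      · rw [hab, pow_succ] at h
        exact h
    have hS1s_empty : S1s = ∅ := by
      rw [Set.eq_empty_iff_forall_notMem]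
      intro x hx
      have tx := keyS1s x hx
      obtain ⟨hxS, hx0, hxa, hqx, hqxa⟩ := hx
      have heq : (x + a) ^ d + x ^ d = b := hxS
      rcases hBb with hcase | hcase
      · have hw : b ^ p ^ k * (x ^ d) + b * (x ^ d) ^ p ^ k = 0 := by
          linear_combination hcase - tx
        have := hker hb0 _ hw
        exact hx0 (pow_eq_zero_iff hdne |>.mp this)
      · have hw : b ^ p ^ k * (x ^ d - b) + b * (x ^ d - b) ^ p ^ k = 0 := by
          rw [sub_pow_char_pow]
          linear_combination -tx - hcase
        have hxb := hker hb0 _ hw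
        have hxd : x ^ d = b := by linear_combination hxb
        have hta : (x + a) ^ d = 0 := by linear_combination heq - hxd
        exact hxa (pow_eq_zero_iff hdne |>.mp hta)
    have hS1n_empty : S1n = ∅ := by
      rw [Set.eq_empty_iff_forall_notMem]
      intro x hx
      have tx := keyS1n x hx
      obtain ⟨hxS, hx0, hxa, hqx, hqxa⟩ := hx
      have heq : (x + a) ^ d + x ^ d = b := hxS
      rcases hBb with hcase | hcase
      · have hw : b ^ p ^ k * (x ^ d - b) + b * (x ^ d - b) ^ p ^ k = 0 := by
          rw [sub_pow_char_pow]
          linear_combination -tx - hcase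
        have hxb := hker hb0 _ hw
        have hxd : x ^ d = b := by linear_combination hxb
        have hta : (x + a) ^ d = 0 := by linear_combination heq - hxd
        exact hxa (pow_eq_zero_iff hdne |>.mp hta)
      · have hw : b ^ p ^ k * (x ^ d) + b * (x ^ d) ^ p ^ k = 0 := by
          linear_combination hcase - tx
        have := hker hb0 _ hw
        exact hx0 (pow_eq_zero_iff hdne |>.mp this)
    rw [hS1s_empty, hS1n_empty] at hsum
    simp only [Set.ncard_empty] at hsum
    omega
  · -- S0 is empty
    have hS0_empty : S0 = ∅ := by
      rw [Set.eq_empty_iff_forall_notMem]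
      intro x hx
      obtain ⟨hxS, hx2⟩ := hx
      have heq : (x + a) ^ d + x ^ d = b := hxS
      simp only [Set.mem_insert_iff, Set.mem_singleton_iff] at hx2
      rcases hx2 with rfl | rfl
      · apply hab
        rw [zero_add, zero_pow hdne] at heq
        linear_combination heq
      · apply hab
        rw [neg_add_cancel, zero_pow hdne, hd.neg_pow] at heq
        linear_combination heq
    rw [hS0_empty] at hsum
    simp only [Set.ncard_empty] at hsum
    omega
end

section
/- Let p be an odd prime and n a positive integer with p^n ≡ 7 (mod 8), and set d = (p^n+1)/4 + (p^n−1)/2. Then the power function f(x)=x^d on F_{p^n} satisfies _{−1}Δ_f ≤ 3: for all a, b ∈ F_{p^n}, the equation (x+a)^d + x^d = b has at most 3 solutions x ∈ F_{p^n}. -/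
/-!
Write `q = 8k + 7`, so that `d = 6k + 5`, and let `χ` be the quadratic character of `F`.
As `χ(y) = y ^ ((q - 1) / 2)` and `d (q + 3) / 2 ≡ 1 (mod q - 1)`, the map
`g(y) = χ(y) y²` (`signedSq`) is a left inverse of `x ↦ x ^ d`. Putting `u = x ^ d`, the
solutions `x` therefore inject into the solutions `u` of `g(b - u) - g(u) = a`. For `a ≠ 0` no
two such `u`, `w` have `u + w = b`, since swapping `u` and `b - u` negates the left-hand side.
If `χ(u) χ(b - u) ≠ -1` the equation forces `a² = (b (b - 2u))²`, and if
`χ(u) = -χ(b - u) = ε` it reads `a = -ε ((b - u)² + u²)`. In either case two solutions of the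
same kind satisfy `(u - w)(u + w - b) = 0`, so each of the three kinds
(`χ(u) χ(b - u) ≠ -1`, `ε = 1`, `ε = -1`) contains at most one solution.
-/

open Function

section

variable {F : Type*} [Field F] [Fintype F] [DecidableEq F]

def signedSq (y : F) : F := quadraticChar F y * y ^ 2

@[simp]
theorem signedSq_zero : signedSq (0 : F) = 0 := by simp [signedSq]

theorem quadraticChar_cast_sq_one {x : F} (hx : x ≠ 0) : (quadraticChar F x : F) ^ 2 = 1 := by
  rw [← Int.cast_pow, quadraticChar_sq_one hx, Int.cast_one]

theorem leftInverse_signedSq_pow {k : ℕ} (hq : Fintype.card F = 8 * k + 7) :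
    LeftInverse (signedSq (F := F)) (· ^ (6 * k + 5)) := by
  intro x
  have hF : ringChar F ≠ 2 := by rw [Ne, FiniteField.even_card_iff_char_two]; omega
  rw [signedSq, quadraticChar_eq_pow_of_char_ne_two' hF, hq,
    show (8 * k + 7) / 2 = 4 * k + 3 by omega, ← pow_mul, ← pow_mul, ← pow_add]
  rcases eq_or_ne x 0 with rfl | hx
  · simp
  have hx1 : x ^ (8 * k + 6) = 1 := by
    simpa [hq] using FiniteField.pow_card_sub_one_eq_one x hx
  calc x ^ ((6 * k + 5) * (4 * k + 3) + (6 * k + 5) * 2)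
      = (x ^ (8 * k + 6)) ^ (3 * k + 4) * x := by rw [← pow_mul, ← pow_succ]; ring_nf
    _ = x := by rw [hx1, one_pow, one_mul]

theorem signedSq_injective {k : ℕ} (hq : Fintype.card F = 8 * k + 7) :
    Injective (signedSq (F := F)) :=
  Finite.injective_iff_surjective.mpr (leftInverse_signedSq_pow hq).surjective

theorem ncard_pow_add_pow_eq_le_ncard_signedSq {k : ℕ} (hq : Fintype.card F = 8 * k + 7)
    (a b : F) :
    {x : F | (x + a) ^ (6 * k + 5) + x ^ (6 * k + 5) = b}.ncard ≤
      {u : F | signedSq (b - u) - signedSq u = a}.ncard := by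
  refine Set.ncard_le_ncard_of_injOn (· ^ (6 * k + 5)) (fun x hx => ?_)
    (leftInverse_signedSq_pow hq).injective.injOn
  rw [Set.mem_ofPred_eq, ← eq_sub_of_add_eq hx, leftInverse_signedSq_pow hq,
    leftInverse_signedSq_pow hq, add_sub_cancel_left]

variable {a b u w : F}

theorem eq_of_signedSq_sub_eq_of_mul_eq_zero (h2 : (2 : F) ≠ 0) (ha : a ≠ 0)
    (hu : signedSq (b - u) - signedSq u = a) (hw : signedSq (b - w) - signedSq w = a)
    (h : (u - w) * (u + w - b) = 0) : u = w := by
  rcases mul_eq_zero.mp h with h | h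
  · exact sub_eq_zero.mp h
  obtain rfl : b = u + w := (sub_eq_zero.mp h).symm
  rw [add_sub_cancel_left] at hu
  rw [add_sub_cancel_right] at hw
  exact absurd (mul_left_cancel₀ h2 (by linear_combination -(hu + hw))) ha

theorem signedSq_sub_sq_of_mul_ne_neg_one
    (h : quadraticChar F u * quadraticChar F (b - u) ≠ -1) :
    (signedSq (b - u) - signedSq u) ^ 2 = (b * (b - 2 * u)) ^ 2 := by
  rcases eq_or_ne u 0 with rfl | hu
  · rcases eq_or_ne b 0 with rfl | hb
    · simp
    rw [sub_zero, signedSq_zero, signedSq]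
    linear_combination b ^ 4 * quadraticChar_cast_sq_one hb
  rcases eq_or_ne (b - u) 0 with hbu | hbu
  · obtain rfl : b = u := sub_eq_zero.mp hbu
    rw [sub_self, signedSq_zero, signedSq]
    linear_combination b ^ 4 * quadraticChar_cast_sq_one hu
  rcases quadraticChar_dichotomy hu with h₁ | h₁ <;>
    rcases quadraticChar_dichotomy hbu with h₂ | h₂ <;>
    rw [h₁, h₂] at h <;> norm_num at h <;>
    · rw [signedSq, signedSq, h₁, h₂]; push_cast; ring

theorem eq_of_signedSq_sub_eq_of_mul_ne_neg_one (h2 : (2 : F) ≠ 0) (ha : a ≠ 0)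
    (hu : signedSq (b - u) - signedSq u = a) (hw : signedSq (b - w) - signedSq w = a)
    (hcu : quadraticChar F u * quadraticChar F (b - u) ≠ -1)
    (hcw : quadraticChar F w * quadraticChar F (b - w) ≠ -1) : u = w := by
  have hsu := signedSq_sub_sq_of_mul_ne_neg_one hcu
  have hsw := signedSq_sub_sq_of_mul_ne_neg_one hcw
  rw [hu] at hsu
  rw [hw] at hsw
  have hb : b ≠ 0 := by rintro rfl; simp at hsu; exact ha hsu
  have key : (2 * b) ^ 2 * ((u - w) * (u + w - b)) = 0 := by linear_combination hsw - hsu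
  refine eq_of_signedSq_sub_eq_of_mul_eq_zero h2 ha hu hw ?_
  simpa [h2, hb] using key

theorem signedSq_sub_eq_of_mul_eq_neg_one
    (h : quadraticChar F u * quadraticChar F (b - u) = -1) :
    signedSq (b - u) - signedSq u = -quadraticChar F u * ((b - u) ^ 2 + u ^ 2) := by
  have hu : u ≠ 0 := by rintro rfl; simp at h
  have hχ : quadraticChar F (b - u) = -quadraticChar F u := by
    linear_combination quadraticChar F u * h - quadraticChar F (b - u) * quadraticChar_sq_one hu
  simp only [signedSq, hχ]
  push_cast
  ring

theorem eq_of_signedSq_sub_eq_of_mul_eq_neg_one (h2 : (2 : F) ≠ 0) (ha : a ≠ 0)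
    (hu : signedSq (b - u) - signedSq u = a) (hw : signedSq (b - w) - signedSq w = a)
    (hcu : quadraticChar F u * quadraticChar F (b - u) = -1)
    (hcw : quadraticChar F w * quadraticChar F (b - w) = -1)
    (huw : quadraticChar F u = quadraticChar F w) : u = w := by
  have hu0 : u ≠ 0 := by rintro rfl; simp at hcu
  have hχ : (quadraticChar F u : F) ≠ 0 := by
    intro h
    have h1 := quadraticChar_cast_sq_one hu0
    rw [h] at h1
    norm_num at h1
  have eu := (signedSq_sub_eq_of_mul_eq_neg_one hcu).symm.trans hu
  have ew := (signedSq_sub_eq_of_mul_eq_neg_one hcw).symm.trans hw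
  rw [← huw] at ew
  have key : 2 * (quadraticChar F u : F) * ((u - w) * (u + w - b)) = 0 := by
    linear_combination ew - eu
  exact eq_of_signedSq_sub_eq_of_mul_eq_zero h2 ha hu hw
    ((mul_eq_zero.mp key).resolve_left (mul_ne_zero h2 hχ))

theorem ncard_signedSq_sub_eq_le_three (h2 : (2 : F) ≠ 0) (ha : a ≠ 0) :
    {u : F | signedSq (b - u) - signedSq u = a}.ncard ≤ 3 := by
  let kind : F → ℤ := fun u =>
    if quadraticChar F u * quadraticChar F (b - u) = -1 then quadraticChar F u else 0
  calc _ ≤ ({-1, 0, 1} : Set ℤ).ncard := Set.ncard_le_ncard_of_injOn kind ?_ ?_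
    _ = 3 := by norm_num [Set.ncard_insert_of_notMem]
  · intro u _
    simp only [kind]
    split_ifs
    · rcases eq_or_ne u 0 with rfl | hu
      · simp
      · rcases quadraticChar_dichotomy hu with h | h <;> simp [h]
    · simp
  · intro u hu w hw huw
    have hne : ∀ {x : F}, quadraticChar F x * quadraticChar F (b - x) = -1 →
        quadraticChar F x ≠ 0 := fun h h0 => by rw [h0, zero_mul] at h; norm_num at h
    simp only [kind] at huw
    split_ifs at huw with hcu hcw hcw
    · exact eq_of_signedSq_sub_eq_of_mul_eq_neg_one h2 ha hu hw hcu hcw huw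
    · exact absurd huw (hne hcu)
    · exact absurd huw.symm (hne hcw)
    · exact eq_of_signedSq_sub_eq_of_mul_ne_neg_one h2 ha hu hw hcu hcw

theorem ncard_signedSq_sub_eq_zero_le_one (h2 : (2 : F) ≠ 0)
    (hinj : Injective (signedSq (F := F))) :
    {u : F | signedSq (b - u) - signedSq u = 0}.ncard ≤ 1 := by
  refine (Set.ncard_le_one_iff (Set.toFinite _)).mpr fun {u w} hu hw => ?_
  have hu' : b - u = u := hinj (sub_eq_zero.mp hu)
  have hw' : b - w = w := hinj (sub_eq_zero.mp hw)
  exact mul_left_cancel₀ h2 (by linear_combination hw' - hu')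

end

theorem stmt_10_general (p n : ℕ) (hmod : p ^ n % 8 = 7) (d : ℕ)
    (hd : d = (p ^ n + 1) / 4 + (p ^ n - 1) / 2)
    (F : Type*) [Field F] [Fintype F] (hcard : Fintype.card F = p ^ n)
    (a b : F) :
    {x : F | (x + a) ^ d + x ^ d = b}.ncard ≤ 3 := by
  classical
  obtain ⟨k, hq, rfl⟩ : ∃ k, Fintype.card F = 8 * k + 7 ∧ d = 6 * k + 5 :=
    ⟨p ^ n / 8, by omega, by omega⟩
  have h2 : (2 : F) ≠ 0 :=
    Ring.two_ne_zero (by rw [Ne, FiniteField.even_card_iff_char_two]; omega)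
  refine (ncard_pow_add_pow_eq_le_ncard_signedSq hq a b).trans ?_
  rcases eq_or_ne a 0 with rfl | ha
  · exact (ncard_signedSq_sub_eq_zero_le_one h2 (signedSq_injective hq)).trans (by norm_num)
  · exact ncard_signedSq_sub_eq_le_three h2 ha

/-- Theorem 3.5 (Theorem `thmd`), first case: `p^n ≡ 7 (mod 8)` and
`d = (p^n+1)/4 + (p^n-1)/2`. Then `₋₁Δ_f ≤ 3` for `f(x) = x^d` on `F_{p^n}`. -/
theorem stmt_10 (p n : ℕ) (hp : p.Prime) (hodd : Odd p) (hn0 : 0 < n)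
    (hmod : p ^ n % 8 = 7) (d : ℕ) (hd : d = (p ^ n + 1) / 4 + (p ^ n - 1) / 2)
    (F : Type*) [Field F] [Fintype F] (hcard : Fintype.card F = p ^ n)
    (a b : F) :
    {x : F | (x + a) ^ d + x ^ d = b}.ncard ≤ 3 :=
  stmt_10_general p n hmod d hd F hcard a b
end

section
/- Let p be an odd prime and n a positive integer with p^n ≡ 3 (mod 8), and set d = (p^n+1)/4. Then the power function f(x)=x^d on F_{p^n} satisfies _{−1}Δ_f ≤ 3: for all a, b ∈ F_{p^n}, the equation (x+a)^d + x^d = b has at most 3 solutions x ∈ F_{p^n}. -/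
/-- Theorem 3.5 (Theorem `thmd`), second case: `p^n ≡ 3 (mod 8)` and
`d = (p^n+1)/4`. Then `₋₁Δ_f ≤ 3` for `f(x) = x^d` on `F_{p^n}`. -/
theorem stmt_11 (p n : ℕ) (hp : p.Prime) (hodd : Odd p) (hn0 : 0 < n)
    (hmod : p ^ n % 8 = 3) (d : ℕ) (hd : d = (p ^ n + 1) / 4)
    (F : Type*) [Field F] [Fintype F] (hcard : Fintype.card F = p ^ n)
    (a b : F) :
    {x : F | (x + a) ^ d + x ^ d = b}.ncard ≤ 3 := by
  have hQ8 : Fintype.card F % 8 = 3 := by rw [hcard]; exact hmod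
  have hd' : d = (Fintype.card F + 1) / 4 := by rw [hcard]; exact hd
  set Q := Fintype.card F with hQ
  set m := (Q - 1) / 2 with hm
  have h4d : 4 * d = Q + 1 := by omega
  have hdo : d % 2 = 1 := by omega
  have h2d : 2 * d = m + 1 := by omega
  have hmo : m % 2 = 1 := by omega
  have hm1 : 1 ≤ m := by omega
  have hQ2 : Q / 2 = m := by omega
  have hd0 : d ≠ 0 := by omega
  have hOd : Odd d := Nat.odd_iff.mpr hdo
  -- characteristic facts
  have hchar : ringChar F ≠ 2 := by
    intro h
    have := FiniteField.even_card_of_char_two h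
    omega
  have h2 : (2 : F) ≠ 0 := Ring.two_ne_zero hchar
  have hdich : ∀ x : F, x ≠ 0 → x ^ m = 1 ∨ x ^ m = -1 := by
    intro x hx
    have := FiniteField.pow_dichotomy hchar hx
    rwa [hQ2] at this
  -- square of the d-th power
  have hsq : ∀ x : F, (x ^ d) ^ 2 = x ^ m * x := by
    intro x
    rw [← pow_mul]
    have : d * 2 = m + 1 := by omega
    rw [this, pow_succ]
  have hvm : ∀ x : F, (x ^ d) ^ m = (x ^ m) ^ d := by
    intro x; rw [← pow_mul, ← pow_mul, Nat.mul_comm]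
  have hεd : ∀ ε : F, ε = 1 ∨ ε = -1 → ε ^ d = ε := by
    rintro ε (rfl | rfl)
    · exact one_pow d
    · exact Odd.neg_one_pow hOd
  have hsgn : ∀ x : F, x ≠ 0 → (x ^ d) ^ m = x ^ m := by
    intro x hx; rw [hvm]; exact hεd _ (hdich x hx)
  -- injectivity of x ↦ x^d
  have hcop : Nat.Coprime d (Q - 1) := by
    have hg2 : Nat.gcd d (Q - 1) ∣ 2 := by
      have h1 : Nat.gcd d (Q - 1) ∣ 4 * d := (Nat.gcd_dvd_left d (Q - 1)).mul_left 4
      rw [h4d] at h1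
      have h2' : Nat.gcd d (Q - 1) ∣ (Q + 1) - (Q - 1) := Nat.dvd_sub h1 (Nat.gcd_dvd_right _ _)
      have : (Q + 1) - (Q - 1) = 2 := by omega
      rwa [this] at h2'
    rcases (Nat.dvd_prime Nat.prime_two).mp hg2 with h | h
    · exact h
    · exfalso
      have : 2 ∣ d := h ▸ Nat.gcd_dvd_left d (Q - 1)
      omega
  have hinj : ∀ x y : F, x ^ d = y ^ d → x = y := by
    intro x y hxy
    by_cases hy : y = 0
    · subst hy
      rw [zero_pow hd0] at hxy
      exact pow_eq_zero_iff hd0 |>.mp hxy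
    · have hx : x ≠ 0 := by
        intro h; subst h; rw [zero_pow hd0] at hxy
        exact hy (pow_eq_zero_iff hd0 |>.mp hxy.symm)
      have hz : x / y ≠ 0 := div_ne_zero hx hy
      have hz1 : (x / y) ^ d = 1 := by
        rw [div_pow, hxy, div_self (pow_ne_zero d hy)]
      have hz2 : (x / y) ^ (Q - 1) = 1 := FiniteField.pow_card_sub_one_eq_one _ hz
      have ho1 : orderOf (x / y) ∣ d := orderOf_dvd_of_pow_eq_one hz1
      have ho2 : orderOf (x / y) ∣ Q - 1 := orderOf_dvd_of_pow_eq_one hz2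
      have : orderOf (x / y) ∣ 1 := hcop ▸ Nat.dvd_gcd ho1 ho2
      have : x / y = 1 := orderOf_eq_one_iff.mp (Nat.dvd_one.mp this)
      field_simp at this
      exact this
  set S : Set F := {x : F | (x + a) ^ d + x ^ d = b} with hS
  -- case a = 0
  by_cases ha : a = 0
  · subst ha
    have hsub : S.ncard ≤ 1 := by
      rw [Set.ncard_le_one_iff]
      intro x y hx hy
      simp only [hS, Set.mem_setOf_eq, add_zero] at hx hy
      have : x ^ d = y ^ d := by
        have h2x : (2 : F) * x ^ d = 2 * y ^ d := by
          rw [two_mul, two_mul]; rw [hx, hy]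
        exact mul_left_cancel₀ h2 h2x
      exact hinj x y this
    omega
  -- now a ≠ 0
  set S0 : Set F := S ∩ {0, -a} with hS0def
  set C1 : Set F := {x ∈ S | x ≠ 0 ∧ x + a ≠ 0 ∧ (x + a) ^ m = x ^ m} with hC1def
  set C2 : Set F := {x ∈ S | (x + a) ^ m = 1 ∧ x ^ m = -1} with hC2def
  set C3 : Set F := {x ∈ S | (x + a) ^ m = -1 ∧ x ^ m = 1} with hC3def
  have h1n : (1 : F) ≠ -1 := fun h => h2 (by linear_combination h)
  -- basic facts about a solution with x ≠ 0, x + a ≠ 0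
  have hcover : S ⊆ S0 ∪ C1 ∪ C2 ∪ C3 := by
    intro x hx
    by_cases hx0 : x = 0
    · exact Or.inl (Or.inl (Or.inl ⟨hx, Or.inl hx0⟩))
    by_cases hxa : x + a = 0
    · have : x = -a := by linear_combination hxa
      exact Or.inl (Or.inl (Or.inl ⟨hx, Or.inr this⟩))
    rcases hdich x hx0 with hxm | hxm <;> rcases hdich (x + a) hxa with hxam | hxam
    · exact Or.inl (Or.inl (Or.inr ⟨hx, hx0, hxa, by rw [hxm, hxam]⟩))
    · exact Or.inr ⟨hx, hxam, hxm⟩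
    · exact Or.inl (Or.inr ⟨hx, hxam, hxm⟩)
    · exact Or.inl (Or.inl (Or.inr ⟨hx, hx0, hxa, by rw [hxm, hxam]⟩))
  -- C2 has at most one element
  have hC2sub : C2.ncard ≤ 1 := by
    rw [Set.ncard_le_one_iff]
    rintro x y ⟨hxS, hxam, hxm⟩ ⟨hyS, hyam, hym⟩
    have hx0 : x ≠ 0 := by
      intro h; subst h; rw [zero_pow (by omega : m ≠ 0)] at hxm
      exact neg_ne_zero.mpr one_ne_zero hxm.symm
    have hy0 : y ≠ 0 := by
      intro h; subst h; rw [zero_pow (by omega : m ≠ 0)] at hym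
      exact neg_ne_zero.mpr one_ne_zero hym.symm
    -- v := x^d ; key equations
    have hvx : (x ^ d) ^ 2 = -x := by rw [hsq, hxm]; ring
    have hvy : (y ^ d) ^ 2 = -y := by rw [hsq, hym]; ring
    have hux : ((x + a) ^ d) ^ 2 = x + a := by rw [hsq, hxam]; ring
    have huy : ((y + a) ^ d) ^ 2 = y + a := by rw [hsq, hyam]; ring
    have hbx : (x + a) ^ d = b - x ^ d := by
      have := hxS; simp only [hS, Set.mem_setOf_eq] at this; linear_combination this
    have hby : (y + a) ^ d = b - y ^ d := by
      have := hyS; simp only [hS, Set.mem_setOf_eq] at this; linear_combination this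
    have hqx : (b - x ^ d) ^ 2 + (x ^ d) ^ 2 = a := by
      rw [← hbx, hux, hvx]; ring
    have hqy : (b - y ^ d) ^ 2 + (y ^ d) ^ 2 = a := by
      rw [← hby, huy, hvy]; ring
    have hfac : (x ^ d - y ^ d) * (x ^ d + y ^ d - b) = 0 := by
      have h22 : (2 : F) * ((x ^ d - y ^ d) * (x ^ d + y ^ d - b)) = 0 := by
        linear_combination hqx - hqy
      rcases mul_eq_zero.mp h22 with h | h
      · exact absurd h h2
      · exact h
    rcases mul_eq_zero.mp hfac with h | h
    · -- x^d = y^d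
      exact hinj x y (by linear_combination h)
    · -- y^d = b - x^d = (x+a)^d : sign contradiction
      exfalso
      have hyd : y ^ d = (x + a) ^ d := by rw [hbx]; linear_combination h
      have hs1 : (y ^ d) ^ m = -1 := by rw [hsgn y hy0, hym]
      have hs2 : ((x + a) ^ d) ^ m = 1 := by
        have hxa0 : x + a ≠ 0 := by
          intro hh; rw [hh, zero_pow (by omega : m ≠ 0)] at hxam
          exact one_ne_zero hxam.symm
        rw [hsgn _ hxa0, hxam]
      rw [hyd, hs2] at hs1
      exact h1n hs1
  -- C3 has at most one element
  have hC3sub : C3.ncard ≤ 1 := by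
    rw [Set.ncard_le_one_iff]
    rintro x y ⟨hxS, hxam, hxm⟩ ⟨hyS, hyam, hym⟩
    have hx0 : x ≠ 0 := by
      intro h; subst h; rw [zero_pow (by omega : m ≠ 0)] at hxm
      exact one_ne_zero hxm.symm
    have hy0 : y ≠ 0 := by
      intro h; subst h; rw [zero_pow (by omega : m ≠ 0)] at hym
      exact one_ne_zero hym.symm
    have hvx : (x ^ d) ^ 2 = x := by rw [hsq, hxm]; ring
    have hvy : (y ^ d) ^ 2 = y := by rw [hsq, hym]; ring
    have hux : ((x + a) ^ d) ^ 2 = -(x + a) := by rw [hsq, hxam]; ring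
    have huy : ((y + a) ^ d) ^ 2 = -(y + a) := by rw [hsq, hyam]; ring
    have hbx : (x + a) ^ d = b - x ^ d := by
      have := hxS; simp only [hS, Set.mem_setOf_eq] at this; linear_combination this
    have hby : (y + a) ^ d = b - y ^ d := by
      have := hyS; simp only [hS, Set.mem_setOf_eq] at this; linear_combination this
    have hqx : (b - x ^ d) ^ 2 + (x ^ d) ^ 2 = -a := by
      rw [← hbx, hux, hvx]; ring
    have hqy : (b - y ^ d) ^ 2 + (y ^ d) ^ 2 = -a := by
      rw [← hby, huy, hvy]; ring
    have hfac : (x ^ d - y ^ d) * (x ^ d + y ^ d - b) = 0 := by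
      have h22 : (2 : F) * ((x ^ d - y ^ d) * (x ^ d + y ^ d - b)) = 0 := by
        linear_combination hqx - hqy
      rcases mul_eq_zero.mp h22 with h | h
      · exact absurd h h2
      · exact h
    rcases mul_eq_zero.mp hfac with h | h
    · exact hinj x y (by linear_combination h)
    · exfalso
      have hyd : y ^ d = (x + a) ^ d := by rw [hbx]; linear_combination h
      have hs1 : (y ^ d) ^ m = 1 := by rw [hsgn y hy0, hym]
      have hs2 : ((x + a) ^ d) ^ m = -1 := by
        have hxa0 : x + a ≠ 0 := by
          intro hh; rw [hh, zero_pow (by omega : m ≠ 0)] at hxam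
          exact neg_ne_zero.mpr one_ne_zero hxam.symm
        rw [hsgn _ hxa0, hxam]
      rw [hyd, hs2] at hs1
      exact h1n hs1.symm
  -- C1 has at most one element
  have hC1sub : C1.ncard ≤ 1 := by
    rw [Set.ncard_le_one_iff]
    rintro x y ⟨hxS, hx0, hxa0, hxe⟩ ⟨hyS, hy0, hya0, hye⟩
    simp only [hS, Set.mem_setOf_eq] at hxS hyS
    -- diff equations : b * (u - v) = ε a
    have hdx : b * ((x + a) ^ d - x ^ d) = x ^ m * a := by
      have : ((x + a) ^ d + x ^ d) * ((x + a) ^ d - x ^ d) = x ^ m * a := by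
        have e1 : ((x + a) ^ d) ^ 2 = (x + a) ^ m * (x + a) := hsq _
        have e2 : (x ^ d) ^ 2 = x ^ m * x := hsq _
        rw [hxe] at e1
        linear_combination e1 - e2
      rw [← hxS]; exact this
    have hdy : b * ((y + a) ^ d - y ^ d) = y ^ m * a := by
      have : ((y + a) ^ d + y ^ d) * ((y + a) ^ d - y ^ d) = y ^ m * a := by
        have e1 : ((y + a) ^ d) ^ 2 = (y + a) ^ m * (y + a) := hsq _
        have e2 : (y ^ d) ^ 2 = y ^ m * y := hsq _
        rw [hye] at e1
        linear_combination e1 - e2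
      rw [← hyS]; exact this
    have hb0 : b ≠ 0 := by
      intro hb
      rw [hb, zero_mul] at hdx
      rcases hdich x hx0 with h | h <;> rw [h] at hdx
      · exact ha (by linear_combination -hdx)
      · exact ha (by linear_combination hdx)
    rcases hdich x hx0 with hex | hex <;> rcases hdich y hy0 with hey | hey
    · -- both +1
      have hveq : x ^ d = y ^ d := by
        rw [hex] at hdx; rw [hey] at hdy
        have : b * (2 * (x ^ d)) = b * (2 * (y ^ d)) := by
          linear_combination hxS * b - hyS * b - hdx + hdy
        have := mul_left_cancel₀ hb0 this
        exact mul_left_cancel₀ h2 this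
      have : x ^ m * x = y ^ m * y := by rw [← hsq, ← hsq, hveq]
      rw [hex, hey, one_mul, one_mul] at this
      exact this
    · -- ε₁ = 1, ε₂ = -1 : u₁ = v₂, sign contradiction
      exfalso
      rw [hex] at hdx; rw [hey] at hdy
      have hu1v2 : (x + a) ^ d = y ^ d := by
        have : b * (2 * ((x + a) ^ d)) = b * (2 * (y ^ d)) := by
          linear_combination hxS * b - hyS * b + hdx + hdy
        have := mul_left_cancel₀ hb0 this
        exact mul_left_cancel₀ h2 this
      have hs1 : ((x + a) ^ d) ^ m = 1 := by rw [hsgn _ hxa0, hxe, hex]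
      have hs2 : (y ^ d) ^ m = -1 := by rw [hsgn _ hy0, hey]
      rw [hu1v2, hs2] at hs1
      exact h1n hs1.symm
    · -- ε₁ = -1, ε₂ = 1 : symmetric
      exfalso
      rw [hex] at hdx; rw [hey] at hdy
      have hu2v1 : (y + a) ^ d = x ^ d := by
        have : b * (2 * ((y + a) ^ d)) = b * (2 * (x ^ d)) := by
          linear_combination hyS * b - hxS * b + hdy + hdx
        have := mul_left_cancel₀ hb0 this
        exact mul_left_cancel₀ h2 this
      have hs1 : ((y + a) ^ d) ^ m = 1 := by rw [hsgn _ hya0, hye, hey]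
      have hs2 : (x ^ d) ^ m = -1 := by rw [hsgn _ hx0, hex]
      rw [hu2v1, hs2] at hs1
      exact h1n hs1.symm
    · -- both -1
      have hveq : x ^ d = y ^ d := by
        rw [hex] at hdx; rw [hey] at hdy
        have : b * (2 * (x ^ d)) = b * (2 * (y ^ d)) := by
          linear_combination hxS * b - hyS * b - hdx + hdy
        have := mul_left_cancel₀ hb0 this
        exact mul_left_cancel₀ h2 this
      have : x ^ m * x = y ^ m * y := by rw [← hsq, ← hsq, hveq]
      rw [hex, hey] at this
      have : -x = -y := by linear_combination this
      linear_combination -this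
  -- S0 has at most one element
  have hS0sub : S0.ncard ≤ 1 := by
    rw [Set.ncard_le_one_iff]
    rintro x y ⟨hxS, hx01⟩ ⟨hyS, hy01⟩
    simp only [hS, Set.mem_setOf_eq] at hxS hyS
    simp only [Set.mem_insert_iff, Set.mem_singleton_iff] at hx01 hy01
    have key : ¬ ((0 : F) ∈ S ∧ (-a : F) ∈ S) := by
      rintro ⟨h0, hma⟩
      simp only [hS, Set.mem_setOf_eq] at h0 hma
      rw [zero_add, zero_pow hd0, add_zero] at h0
      rw [neg_add_cancel, zero_pow hd0, zero_add] at hma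
      have hna : (-a) ^ d = -(a ^ d) := Odd.neg_pow hOd a
      rw [hna] at hma
      have : (2 : F) * a ^ d = 0 := by linear_combination h0 - hma
      rcases mul_eq_zero.mp this with h | h
      · exact h2 h
      · exact ha (pow_eq_zero_iff hd0 |>.mp h)
    rcases hx01 with rfl | rfl <;> rcases hy01 with rfl | rfl
    · rfl
    · exact absurd ⟨hxS, hyS⟩ key
    · exact absurd ⟨hyS, hxS⟩ key
    · rfl
  -- if S0 is nonempty then C1 is empty
  have hexcl : S0.Nonempty → C1 = ∅ := by
    rintro ⟨x0, hx0S, hx001⟩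
    simp only [hS, Set.mem_setOf_eq] at hx0S
    simp only [Set.mem_insert_iff, Set.mem_singleton_iff] at hx001
    -- derive b ≠ 0 and b^2 = a^m * a
    have hbkey : b ≠ 0 ∧ b ^ 2 = a ^ m * a := by
      rcases hx001 with rfl | rfl
      · rw [zero_add, zero_pow hd0, add_zero] at hx0S
        constructor
        · rw [← hx0S]; exact pow_ne_zero d ha
        · rw [← hx0S, hsq]
      · rw [neg_add_cancel, zero_pow hd0, zero_add] at hx0S
        have hna : (-a) ^ d = -(a ^ d) := Odd.neg_pow hOd a
        rw [hna] at hx0S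
        constructor
        · rw [← hx0S]; exact neg_ne_zero.mpr (pow_ne_zero d ha)
        · rw [← hx0S]
          have : (-(a ^ d)) ^ 2 = (a ^ d) ^ 2 := neg_sq _
          rw [this, hsq]
    obtain ⟨hb0, hb2⟩ := hbkey
    rw [Set.eq_empty_iff_forall_notMem]
    rintro x ⟨hxS, hx0, hxa0, hxe⟩
    simp only [hS, Set.mem_setOf_eq] at hxS
    have hdx : b * ((x + a) ^ d - x ^ d) = x ^ m * a := by
      have : ((x + a) ^ d + x ^ d) * ((x + a) ^ d - x ^ d) = x ^ m * a := by
        have e1 : ((x + a) ^ d) ^ 2 = (x + a) ^ m * (x + a) := hsq _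
        have e2 : (x ^ d) ^ 2 = x ^ m * x := hsq _
        rw [hxe] at e1
        linear_combination e1 - e2
      rw [← hxS]; exact this
    have hv0 : x ^ d ≠ 0 := pow_ne_zero d hx0
    have hu0 : (x + a) ^ d ≠ 0 := pow_ne_zero d hxa0
    rcases hdich x hx0 with hex | hex <;> rcases hdich a ha with hea | hea <;>
      rw [hex] at hdx <;> rw [hea] at hb2
    · -- x^m = 1, a^m = 1 : v = 0
      have hmain : b * ((x + a) ^ d - x ^ d) = b * b := by
        rw [one_mul] at hdx hb2
        linear_combination hdx - hb2
      have := mul_left_cancel₀ hb0 hmain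
      have hv : (2 : F) * x ^ d = 0 := by linear_combination hxS - this
      rcases mul_eq_zero.mp hv with h | h
      · exact h2 h
      · exact hv0 h
    · -- x^m = 1, a^m = -1 : u = 0
      have hmain : b * ((x + a) ^ d - x ^ d) = b * (-b) := by
        rw [one_mul] at hdx
        linear_combination hdx + hb2
      have := mul_left_cancel₀ hb0 hmain
      have hu : (2 : F) * (x + a) ^ d = 0 := by linear_combination hxS + this
      rcases mul_eq_zero.mp hu with h | h
      · exact h2 h
      · exact hu0 h
    · -- x^m = -1, a^m = 1 : u = 0
      have hmain : b * ((x + a) ^ d - x ^ d) = b * (-b) := by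
        rw [one_mul] at hb2
        linear_combination hdx + hb2
      have := mul_left_cancel₀ hb0 hmain
      have hu : (2 : F) * (x + a) ^ d = 0 := by linear_combination hxS + this
      rcases mul_eq_zero.mp hu with h | h
      · exact h2 h
      · exact hu0 h
    · -- x^m = -1, a^m = -1 : v = 0
      have hmain : b * ((x + a) ^ d - x ^ d) = b * b := by
        linear_combination hdx - hb2
      have := mul_left_cancel₀ hb0 hmain
      have hv : (2 : F) * x ^ d = 0 := by linear_combination hxS - this
      rcases mul_eq_zero.mp hv with h | h
      · exact h2 h
      · exact hv0 h
  -- final counting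
  rcases S0.eq_empty_or_nonempty with hS0e | hS0ne
  · have hsub : S ⊆ C1 ∪ C2 ∪ C3 := by
      intro x hx
      rcases hcover hx with ((h | h) | h) | h
      · rw [hS0e] at h; exact absurd h (Set.notMem_empty x)
      · exact Or.inl (Or.inl h)
      · exact Or.inl (Or.inr h)
      · exact Or.inr h
    calc S.ncard ≤ (C1 ∪ C2 ∪ C3).ncard := Set.ncard_le_ncard hsub (Set.toFinite _)
      _ ≤ (C1 ∪ C2).ncard + C3.ncard := Set.ncard_union_le _ _
      _ ≤ C1.ncard + C2.ncard + C3.ncard := by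
          have := Set.ncard_union_le C1 C2; omega
      _ ≤ 3 := by omega
  · have hC1e := hexcl hS0ne
    have hsub : S ⊆ S0 ∪ C2 ∪ C3 := by
      intro x hx
      rcases hcover hx with ((h | h) | h) | h
      · exact Or.inl (Or.inl h)
      · rw [hC1e] at h; exact absurd h (Set.notMem_empty x)
      · exact Or.inl (Or.inr h)
      · exact Or.inr h
    calc S.ncard ≤ (S0 ∪ C2 ∪ C3).ncard := Set.ncard_le_ncard hsub (Set.toFinite _)
      _ ≤ (S0 ∪ C2).ncard + C3.ncard := Set.ncard_union_le _ _
      _ ≤ S0.ncard + C2.ncard + C3.ncard := by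
          have := Set.ncard_union_le S0 C2; omega
      _ ≤ 3 := by omega
end

section
/- Let p be an odd prime and n a positive integer, and suppose either p^n ≡ 7 (mod 8) and d = (p^n+1)/4, or p^n ≡ 3 (mod 8) and d = (p^n+1)/4 + (p^n−1)/2. Then the power function g(x)=x^d on F_{p^n} satisfies _{−1}Δ_g ≤ 6: for all a, b ∈ F_{p^n}, the equation (x+a)^d + x^d = b has at most 6 solutions x ∈ F_{p^n}. -/
lemma quad_card {F : Type*} [Field F] (A B C : F) (hA : A ≠ 0) :
    {u : F | A*u^2 + B*u + C = 0}.ncard ≤ 2 := by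
  rcases Set.eq_empty_or_nonempty {u : F | A*u^2 + B*u + C = 0} with h | ⟨r, hr⟩
  · simp [h]
  · simp only [Set.mem_setOf_eq] at hr
    have hsub : {u : F | A*u^2 + B*u + C = 0} ⊆ {r, -B/A - r} := by
      intro u hu
      simp only [Set.mem_setOf_eq] at hu
      have h2 : (u - r) * (A*(u + r) + B) = 0 := by linear_combination hu - hr
      simp only [Set.mem_insert_iff, Set.mem_singleton_iff]
      rcases mul_eq_zero.mp h2 with h | h
      · left; exact sub_eq_zero.mp h
      · right; field_simp; linear_combination h
    refine le_trans (Set.ncard_le_ncard hsub (Set.toFinite _)) ?_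
    refine le_trans (Set.ncard_insert_le _ _) ?_
    simp [Set.ncard_singleton]

lemma lin_card {F : Type*} [Field F] (B C : F) (hB : B ≠ 0) :
    {u : F | B*u + C = 0}.ncard ≤ 1 := by
  have hsub : {u : F | B*u + C = 0} ⊆ {-C/B} := by
    intro u hu
    simp only [Set.mem_setOf_eq] at hu
    have : u = -C/B := by field_simp; linear_combination hu
    simp [this]
  refine le_trans (Set.ncard_le_ncard hsub (Set.toFinite _)) ?_
  simp [Set.ncard_singleton]

/-- Remark after Theorem 3.5: if `p^n ≡ 7 (mod 8)` and `d = (p^n+1)/4`, or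
`p^n ≡ 3 (mod 8)` and `d = (p^n+1)/4 + (p^n-1)/2`, then the power function
`g(x) = x^d` on `F_{p^n}` satisfies `₋₁Δ_g ≤ 6`. -/
theorem stmt_12 (p n : ℕ) (hp : p.Prime) (hodd : Odd p) (hn0 : 0 < n) (d : ℕ)
    (hcase : (p ^ n % 8 = 7 ∧ d = (p ^ n + 1) / 4) ∨
      (p ^ n % 8 = 3 ∧ d = (p ^ n + 1) / 4 + (p ^ n - 1) / 2))
    (F : Type*) [Field F] [Fintype F] (hcard : Fintype.card F = p ^ n)
    (a b : F) :
    {x : F | (x + a) ^ d + x ^ d = b}.ncard ≤ 6 := by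
  classical
  have hq3 : 3 ≤ p ^ n := by rcases hcase with ⟨h1, _⟩ | ⟨h1, _⟩ <;> omega
  have hd0 : d ≠ 0 := by rcases hcase with ⟨h1, h2⟩ | ⟨h1, h2⟩ <;> omega
  set k := (p ^ n - 1) / 2 with hkdef
  have hk2 : k + k = p ^ n - 1 := by rcases hcase with ⟨h1, _⟩ | ⟨h1, _⟩ <;> omega
  -- characteristic facts
  have hpF : (p : F) = 0 := by
    have h := FiniteField.cast_card_eq_zero F
    rw [hcard] at h
    push_cast at h
    exact pow_eq_zero_iff hn0.ne' |>.mp h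
  have hringChar : ringChar F = p := by
    have hdvd : ringChar F ∣ p := ringChar.dvd (by exact_mod_cast hpF)
    have hprime := CharP.char_is_prime F (ringChar F)
    exact (Nat.prime_dvd_prime_iff_eq hprime hp).mp hdvd
  have hp2 : p ≠ 2 := by rcases hodd with ⟨m, rfl⟩; omega
  have h2F : (2 : F) ≠ 0 := by
    intro h
    have hdvd : ringChar F ∣ 2 := ringChar.dvd (by exact_mod_cast h)
    rw [hringChar] at hdvd
    exact hp2 ((Nat.prime_dvd_prime_iff_eq hp Nat.prime_two).mp hdvd)
  -- power facts
  have hpow1 : ∀ x : F, x ≠ 0 → x ^ (p ^ n - 1) = 1 := by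
    intro x hx
    rw [← hcard]
    exact FiniteField.pow_card_sub_one_eq_one x hx
  have hk1 : ∀ x : F, x ≠ 0 → x ^ k * x ^ k = 1 := by
    intro x hx
    rw [← pow_add, hk2]
    exact hpow1 x hx
  have h2d : ∀ x : F, x ≠ 0 → (x ^ d) ^ 2 = x * x ^ k := by
    intro x hx
    rw [← pow_mul]
    rcases hcase with ⟨h1, h2⟩ | ⟨h1, h2⟩
    · have he : d * 2 = k + 1 := by omega
      rw [he, pow_succ, mul_comm]
    · have he : d * 2 = (p ^ n - 1) + (k + 1) := by omega
      rw [he, pow_add, hpow1 x hx, one_mul, pow_succ, mul_comm]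
  set χ : F → F := fun x => if x = 0 then 1 else x ^ k with hχdef
  have hχsq : ∀ x : F, χ x * (x ^ d) ^ 2 = x := by
    intro x
    by_cases hx : x = 0
    · subst hx; simp [hχdef, zero_pow hd0]
    · simp only [hχdef, if_neg hx]
      rw [h2d x hx]
      have h := hk1 x hx
      linear_combination x * h
  have hχpm : ∀ x : F, χ x = 1 ∨ χ x = -1 := by
    intro x
    by_cases hx : x = 0
    · left; simp [hχdef, hx]
    · simp only [hχdef, if_neg hx]
      exact mul_self_eq_one_iff.mp (hk1 x hx)
  set S : Set F := {x : F | (x + a) ^ d + x ^ d = b} with hSdef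
  set Sc : F → F → Set F :=
    fun s t => {x : F | ((x + a) ^ d + x ^ d = b) ∧ χ x = s ∧ χ (x + a) = t} with hScdef
  have himg : ∀ s t x, x ∈ Sc s t →
      (t - s) * (x ^ d) ^ 2 + (-(2 * t * b)) * (x ^ d) + (t * b ^ 2 - a) = 0 := by
    rintro s t x ⟨hx, hs, ht⟩
    have h1 : s * (x ^ d) ^ 2 = x := by rw [← hs]; exact hχsq x
    have h2 : t * ((x + a) ^ d) ^ 2 = x + a := by rw [← ht]; exact hχsq (x + a)
    have h3 : (x + a) ^ d = b - x ^ d := eq_sub_of_add_eq hx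
    rw [h3] at h2
    linear_combination h2 - h1
  have hinj : ∀ s t : F, Set.InjOn (· ^ d) (Sc s t) := by
    intro s t x hx y hy hxy
    simp only at hxy
    have h1 : s * (x ^ d) ^ 2 = x := by rw [← hx.2.1]; exact hχsq x
    have h2 : s * (y ^ d) ^ 2 = y := by rw [← hy.2.1]; exact hχsq y
    rw [← h1, ← h2, hxy]
  have bound_mixed : ∀ s t : F, t - s ≠ 0 → (Sc s t).ncard ≤ 2 := by
    intro s t hst
    rw [← Set.ncard_image_of_injOn (hinj s t)]
    refine le_trans (Set.ncard_le_ncard ?_ (Set.toFinite _))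
      (quad_card (t - s) (-(2 * t * b)) (t * b ^ 2 - a) hst)
    rintro _ ⟨x, hx, rfl⟩
    exact himg s t x hx
  by_cases hab : a = 0 ∧ b = 0
  · obtain ⟨rfl, rfl⟩ := hab
    have hsub : S ⊆ {0} := by
      intro x hx
      simp only [hSdef, Set.mem_setOf_eq, add_zero] at hx
      have hx2 : (2 : F) * x ^ d = 0 := by linear_combination hx
      have := (mul_eq_zero.mp hx2).resolve_left h2F
      simp [pow_eq_zero_iff hd0] at this
      simp [this]
    refine le_trans (Set.ncard_le_ncard hsub (Set.toFinite _)) ?_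
    simp
  · have bound_diag : ∀ s : F, s ≠ 0 → (Sc s s).ncard ≤ 1 := by
      intro s hs
      by_cases hb : b = 0
      · have ha : a ≠ 0 := fun h => hab ⟨h, hb⟩
        have hemp : Sc s s = ∅ := by
          ext x
          simp only [Set.mem_empty_iff_false, iff_false]
          intro hx
          have := himg s s x hx
          rw [hb] at this
          apply ha
          linear_combination -this
        simp [hemp]
      · rw [← Set.ncard_image_of_injOn (hinj s s)]
        refine le_trans (Set.ncard_le_ncard ?_ (Set.toFinite _))
          (lin_card (-(2 * s * b)) (s * b ^ 2 - a) ?_)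
        · rintro _ ⟨x, hx, rfl⟩
          have := himg s s x hx
          simp only [Set.mem_setOf_eq]
          linear_combination this
        · intro h
          apply hb
          have h2 : (2 : F) * s * b = 0 := by linear_combination -h
          rcases mul_eq_zero.mp h2 with h3 | h3
          · rcases mul_eq_zero.mp h3 with h4 | h4
            · exact absurd h4 h2F
            · exact absurd h4 hs
          · exact h3
    have hcover : S ⊆ Sc 1 1 ∪ Sc 1 (-1) ∪ Sc (-1) 1 ∪ Sc (-1) (-1) := by
      intro x hx
      have hx' : (x + a) ^ d + x ^ d = b := hx
      have hmem : ∀ s t : F, χ x = s → χ (x + a) = t → x ∈ Sc s t :=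
        fun s t hh1 hh2 => ⟨hx', hh1, hh2⟩
      rcases hχpm x with h1 | h1 <;> rcases hχpm (x + a) with h2 | h2
      · exact Or.inl (Or.inl (Or.inl (hmem _ _ h1 h2)))
      · exact Or.inl (Or.inl (Or.inr (hmem _ _ h1 h2)))
      · exact Or.inl (Or.inr (hmem _ _ h1 h2))
      · exact Or.inr (hmem _ _ h1 h2)
    have h1 : (1 : F) ≠ 0 := one_ne_zero
    have hm1 : (-1 : F) ≠ 0 := neg_ne_zero.mpr one_ne_zero
    have hmix1 : (-1 : F) - 1 ≠ 0 := by
      intro h; apply h2F; linear_combination -h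
    have hmix2 : (1 : F) - (-1) ≠ 0 := by
      intro h; apply h2F; linear_combination h
    calc S.ncard ≤ (Sc 1 1 ∪ Sc 1 (-1) ∪ Sc (-1) 1 ∪ Sc (-1) (-1)).ncard :=
          Set.ncard_le_ncard hcover (Set.toFinite _)
      _ ≤ (Sc 1 1 ∪ Sc 1 (-1) ∪ Sc (-1) 1).ncard + (Sc (-1) (-1)).ncard :=
          Set.ncard_union_le _ _
      _ ≤ (Sc 1 1 ∪ Sc 1 (-1)).ncard + (Sc (-1) 1).ncard + (Sc (-1) (-1)).ncard := by
          gcongr; exact Set.ncard_union_le _ _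
      _ ≤ (Sc 1 1).ncard + (Sc 1 (-1)).ncard + (Sc (-1) 1).ncard + (Sc (-1) (-1)).ncard := by
          gcongr; exact Set.ncard_union_le _ _
      _ ≤ 1 + 2 + 2 + 1 := by
          gcongr
          · exact bound_diag 1 h1
          · exact bound_mixed 1 (-1) hmix1
          · exact bound_mixed (-1) 1 hmix2
          · exact bound_diag (-1) hm1
      _ = 6 := rfl
end

section
/- Let p be an odd prime and n, k positive integers such that n/gcd(n,k) is odd and p^n ≡ 3 (mod 4), and set d = (p^n−1)/2 + p^k + 1. Then the power function f(x)=x^d on F_{p^n} satisfies _{−1}Δ_f ≤ 3: for all a, b ∈ F_{p^n}, the equation (x+a)^d + x^d = b has at most 3 solutions x ∈ F_{p^n}. -/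
-- NT lemma 0
lemma aux_gcd (n k : ℕ) (hn0 : 0 < n) (hk0 : 0 < k)
    (hquot : Odd (n / Nat.gcd n k)) : Nat.gcd n (2 * k) ∣ k := by
  set t := Nat.gcd n k with ht
  have htn : t ∣ n := Nat.gcd_dvd_left n k
  have htk : t ∣ k := Nat.gcd_dvd_right n k
  have ht0 : 0 < t := Nat.gcd_pos_of_pos_left k hn0
  set r := n / t with hr
  have hntr : n = t * r := (Nat.mul_div_cancel' htn).symm
  have hg1 : Nat.gcd n (2 * k) ∣ 2 * t := by
    have : Nat.gcd n (2 * k) ∣ Nat.gcd (2 * n) (2 * k) :=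
      Nat.dvd_gcd ((Nat.gcd_dvd_left n (2*k)).trans (dvd_mul_left n 2))
        (Nat.gcd_dvd_right n (2*k))
    rwa [Nat.gcd_mul_left] at this
  have hcop : Nat.gcd 2 r = 1 := by
    rcases hquot with ⟨j, hj⟩
    have h2 : ¬ (2 ∣ r) := by omega
    exact (Nat.Prime.coprime_iff_not_dvd Nat.prime_two).mpr h2
  have : Nat.gcd n (2 * k) ∣ Nat.gcd (t * 2) (t * r) := by
    refine Nat.dvd_gcd ?_ ?_
    · rw [Nat.mul_comm t 2]; exact hg1
    · rw [← hntr]; exact Nat.gcd_dvd_left n (2*k)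
  rw [Nat.gcd_mul_left, Nat.gcd_comm 2 r] at this
  rw [Nat.gcd_comm 2 r] at hcop
  rw [hcop, Nat.mul_one] at this
  exact this.trans htk

-- NT lemma: divisors of both p^k+1 and p^n-1 divide 2
lemma aux_nt (p n k : ℕ) (hp : 2 ≤ p) (hn0 : 0 < n) (hk0 : 0 < k)
    (hquot : Odd (n / Nat.gcd n k)) (m0 : ℕ)
    (h1 : m0 ∣ p ^ k + 1) (h2 : m0 ∣ p ^ n - 1) : m0 ∣ 2 := by
  have hpn1 : 1 ≤ p ^ n := Nat.one_le_pow _ _ (by omega)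
  have hc1 : ((p : ZMod m0)) ^ k = -1 := by
    have : ((p ^ k + 1 : ℕ) : ZMod m0) = 0 :=
      (ZMod.natCast_eq_zero_iff _ _).mpr h1
    push_cast at this
    linear_combination this
  have hc2 : ((p : ZMod m0)) ^ n = 1 := by
    have : ((p ^ n - 1 : ℕ) : ZMod m0) = 0 :=
      (ZMod.natCast_eq_zero_iff _ _).mpr h2
    rw [Nat.cast_sub hpn1] at this
    push_cast at this
    linear_combination this
  set o := orderOf ((p : ZMod m0)) with ho
  have hdn : o ∣ n := orderOf_dvd_of_pow_eq_one hc2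
  have hd2k : o ∣ 2 * k := by
    apply orderOf_dvd_of_pow_eq_one
    rw [Nat.mul_comm, pow_mul, hc1]
    ring
  have hok : o ∣ k := (Nat.dvd_gcd hdn hd2k).trans (aux_gcd n k hn0 hk0 hquot)
  have hpk1 : ((p : ZMod m0)) ^ k = 1 := orderOf_dvd_iff_pow_eq_one.mp hok
  have : ((2 : ℕ) : ZMod m0) = 0 := by
    push_cast
    linear_combination hc1 - hpk1
  exact (ZMod.natCast_eq_zero_iff _ _).mp this

/-- Theorem 3.6 (Theorem `thme`), case `p^n ≡ 3 (mod 4)`, `c = -1`: for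
`d = (p^n-1)/2 + p^k + 1` with `n/gcd(n,k)` odd, one has `₋₁Δ_f ≤ 3`. -/
theorem stmt_13 (p n k : ℕ) (hp : p.Prime) (hodd : Odd p)
    (hn0 : 0 < n) (hk0 : 0 < k) (hquot : Odd (n / Nat.gcd n k))
    (hmod : p ^ n % 4 = 3) (d : ℕ) (hd : d = (p ^ n - 1) / 2 + p ^ k + 1)
    (F : Type*) [Field F] [Fintype F] (hcard : Fintype.card F = p ^ n)
    (a b : F) :
    {x : F | (x + a) ^ d + x ^ d = b}.ncard ≤ 3 := by
  classical
  haveI : Fact p.Prime := ⟨hp⟩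
  set q := p ^ n with hqdef
  have hp2 : 2 ≤ p := hp.two_le
  have hpodd : p % 2 = 1 := Nat.odd_iff.mp hodd
  have hpk_odd : Odd (p ^ k) := hodd.pow
  have hpk1 : p ^ k % 2 = 1 := Nat.odd_iff.mp hpk_odd
  have hpk2 : 2 ≤ p ^ k := by
    calc 2 ≤ p := hp2
    _ = p ^ 1 := (pow_one p).symm
    _ ≤ p ^ k := Nat.pow_le_pow_right (by omega) hk0
  have hq3 : q % 4 = 3 := hmod
  set m := (q - 1) / 2 with hmdef
  have hm2 : 2 * m = q - 1 := by omega
  have hmodd : Odd m := by rw [Nat.odd_iff]; omega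
  have hm0 : m ≠ 0 := by omega
  set E := p ^ k + 1 with hEdef
  have hE0 : E ≠ 0 := by omega
  have hdme : d = m + E := by omega
  have hdodd : Odd d := by rw [Nat.odd_iff]; omega
  have hd0 : d ≠ 0 := by omega
  -- characteristic
  have hchar : CharP F p := by
    have h0 : ((q : ℕ) : F) = 0 := by rw [← hcard]; exact FiniteField.cast_card_eq_zero F
    have hrp : CharP F (ringChar F) := ringChar.charP F
    have hrdvd : ringChar F ∣ q := (CharP.cast_eq_zero_iff F (ringChar F) q).mp h0
    have hrprime : (ringChar F).Prime := by
      rcases CharP.char_is_prime_or_zero F (ringChar F) with h | h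
      · exact h
      · rw [h] at hrdvd; omega
    have : ringChar F = p := by
      have := hrprime.dvd_of_dvd_pow (n := n) (by rw [← hqdef]; exact hrdvd)
      exact (Nat.prime_dvd_prime_iff_eq hrprime hp).mp this
    rwa [this] at hrp
  haveI := hchar
  have h2F : (2 : F) ≠ 0 := by
    intro h
    have h' : ((2 : ℕ) : F) = 0 := by push_cast; exact h
    have := (CharP.cast_eq_zero_iff F p 2).mp h'
    have := Nat.le_of_dvd (by omega) this
    omega
  have hq1F : ∀ x : F, x ≠ 0 → x ^ (q - 1) = 1 := by
    intro x hx
    have := FiniteField.pow_card_sub_one_eq_one x hx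
    rwa [hcard] at this
  have frob_add : ∀ x y : F, (x + y) ^ (p ^ k) = x ^ (p ^ k) + y ^ (p ^ k) := by
    intro x y; exact add_pow_char_pow x y p k
  have h2pk : (2 : F) ^ (p ^ k) = 2 := by
    have := frob_add 1 1
    norm_num at this
    convert this using 2 <;> norm_num
  have sq1 : ∀ s : F, s ^ 2 = 1 → s = 1 ∨ s = -1 := by
    intro s hs
    have h : (s - 1) * (s + 1) = 0 := by linear_combination hs
    rcases mul_eq_zero.mp h with h' | h'
    · left; exact sub_eq_zero.mp h'
    · right; exact eq_neg_of_add_eq_zero_left h'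
  have hsqm : ∀ x : F, x ≠ 0 → (x ^ m) ^ 2 = 1 := by
    intro x hx
    rw [← pow_mul, Nat.mul_comm m 2, hm2]
    exact hq1F x hx
  have lemA : ∀ y : F, y ^ E = 1 → y ^ 2 = 1 := by
    intro y hy
    have hy0 : y ≠ 0 := by
      rintro rfl
      rw [zero_pow hE0] at hy
      exact one_ne_zero hy.symm
    have h1 : orderOf y ∣ E := orderOf_dvd_of_pow_eq_one hy
    rw [hEdef] at h1
    have h2 : orderOf y ∣ q - 1 := orderOf_dvd_of_pow_eq_one (hq1F y hy0)
    rw [hqdef] at h2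
    have := aux_nt p n k hp2 hn0 hk0 hquot (orderOf y) h1 h2
    exact orderOf_dvd_iff_pow_eq_one.mp this
  have powE_eq : ∀ y w : F, w ≠ 0 → y ^ E = w ^ E → y = w ∨ y = -w := by
    intro y w hw h
    have hdiv : (y / w) ^ E = 1 := by rw [div_pow, h, div_self (pow_ne_zero _ hw)]
    rcases sq1 _ (lemA _ hdiv) with h' | h'
    · left; exact (div_eq_one_iff_eq hw).mp h'
    · right
      have := (div_eq_iff hw).mp h'
      rw [this]; ring
  have lemB : ∀ y : F, y ^ (p ^ k - 1) = -1 → False := by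
    intro y hy
    set g := Nat.gcd (p ^ k - 1) (q - 1) with hg
    have hg1 : g ∣ p ^ k - 1 := Nat.gcd_dvd_left _ _
    have hg2 : g ∣ q - 1 := Nat.gcd_dvd_right _ _
    set s1 := (p ^ k - 1) / g with hs1
    set s2 := (q - 1) / g with hs2
    have e1 : g * s1 = p ^ k - 1 := Nat.mul_div_cancel' hg1
    have e2 : g * s2 = q - 1 := Nat.mul_div_cancel' hg2
    have hgev : 2 ∣ g := Nat.dvd_gcd (by omega) (by omega)
    have hs2odd : Odd s2 := by
      rw [Nat.odd_iff]
      by_contra hcon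
      obtain ⟨g', hg'⟩ := hgev
      obtain ⟨s', hs'⟩ : 2 ∣ s2 := by omega
      have : 4 ∣ q - 1 := ⟨g' * s', by rw [← e2, hg', hs']; ring⟩
      omega
    have hy0 : y ≠ 0 := by
      rintro rfl
      rw [zero_pow (by omega : p ^ k - 1 ≠ 0)] at hy
      exact h2F (by linear_combination 2 * hy)
    have c1 : y ^ ((p ^ k - 1) * s2) = -1 := by
      rw [pow_mul, hy, Odd.neg_one_pow hs2odd]
    have c2 : y ^ ((p ^ k - 1) * s2) = 1 := by
      have hexp : (p ^ k - 1) * s2 = s1 * (q - 1) := by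
        calc (p ^ k - 1) * s2 = g * s1 * s2 := by rw [e1]
        _ = s1 * (g * s2) := by ring
        _ = s1 * (q - 1) := by rw [e2]
      rw [hexp, Nat.mul_comm, pow_mul, hq1F y hy0, one_pow]
    rw [c1] at c2
    exact h2F (by linear_combination -c2)
  -- helper: subsingleton sets have ncard ≤ 1
  have hsub1 : ∀ T : Set F, (∀ x ∈ T, ∀ y ∈ T, x = y) → T.ncard ≤ 1 := by
    intro T hT
    rcases T.eq_empty_or_nonempty with rfl | ⟨x0, hx0⟩
    · simp
    · have hsub : T ⊆ {x0} := fun z hz => by simp [hT z hz x0 hx0]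
      calc T.ncard ≤ ({x0} : Set F).ncard := Set.ncard_le_ncard hsub (Set.toFinite _)
      _ = 1 := Set.ncard_singleton x0
  -- injectivity of x ↦ x^d (used for a = 0)
  have injd : ∀ x y : F, x ^ d = y ^ d → x = y := by
    intro x y h
    rcases eq_or_ne y 0 with rfl | hy0
    · rw [zero_pow hd0] at h; exact (pow_eq_zero_iff hd0).mp h
    have hx0 : x ≠ 0 := by
      rintro rfl; rw [zero_pow hd0] at h
      exact hy0 ((pow_eq_zero_iff hd0).mp h.symm)
    have hw0 : x / y ≠ 0 := div_ne_zero hx0 hy0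
    have hwd : (x / y) ^ d = 1 := by rw [div_pow, h, div_self (pow_ne_zero _ hy0)]
    have hw2E : ((x / y) ^ 2) ^ E = 1 := by
      have h1 : (x / y) ^ (2 * d) = 1 := by rw [Nat.mul_comm, pow_mul, hwd, one_pow]
      have hexp : 2 * d = (q - 1) + 2 * E := by omega
      rw [hexp, pow_add, hq1F _ hw0, one_mul] at h1
      rw [← pow_mul]
      exact h1
    rcases sq1 _ (lemA _ hw2E) with h2 | h2
    · rcases sq1 _ h2 with h3 | h3
      · exact (div_eq_one_iff_eq hy0).mp h3
      · exfalso
        rw [h3, Odd.neg_one_pow hdodd] at hwd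
        exact h2F (by linear_combination -hwd)
    · exfalso
      have hq1w := hq1F _ hw0
      rw [← hm2, pow_mul, h2, Odd.neg_one_pow hmodd] at hq1w
      exact h2F (by linear_combination -hq1w)
  have hpowd : ∀ x : F, x ^ d = x ^ m * x ^ E := by
    intro x; rw [hdme, pow_add]
  -- case a = 0
  rcases eq_or_ne a 0 with rfl | ha
  · refine le_trans (hsub1 _ ?_) (by omega)
    intro x hx y hy
    simp only [Set.mem_setOf_eq, add_zero] at hx hy
    apply injd
    have h2 : 2 * x ^ d = 2 * y ^ d := by linear_combination hx - hy
    exact mul_left_cancel₀ h2F h2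
  -- case a ≠ 0
  set u := a / 2 with hudef
  have hu0 : u ≠ 0 := div_ne_zero ha h2F
  have hau : a = 2 * u := by rw [hudef]; field_simp
  have frob_a : a ^ (p ^ k) = 2 * u ^ (p ^ k) := by rw [hau, mul_pow, h2pk]
  have key1 : ∀ x : F, (x + a) ^ E + x ^ E = 2 * ((x + u) ^ E + u ^ E) := by
    intro x
    rw [hEdef]
    simp only [pow_succ]
    rw [frob_add x a, frob_add x u, frob_a, hau]
    ring
  have key2 : ∀ x : F, (x + a) ^ E - x ^ E
      = 2 * (u * (x + u) ^ (p ^ k) + u ^ (p ^ k) * (x + u)) := by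
    intro x
    rw [hEdef]
    simp only [pow_succ]
    rw [frob_add x a, frob_add x u, frob_a, hau]
    ring
  have lemM : ∀ z w : F,
      u * z ^ (p ^ k) + u ^ (p ^ k) * z = u * w ^ (p ^ k) + u ^ (p ^ k) * w → z = w := by
    intro z w h
    by_contra hne
    have hy0 : z - w ≠ 0 := sub_ne_zero.mpr hne
    have heq : u * (z - w) ^ (p ^ k) = -(u ^ (p ^ k) * (z - w)) := by
      rw [sub_pow_char_pow]
      linear_combination h
    apply lemB ((z - w) * u⁻¹)
    have hupk : u ^ (p ^ k) ≠ 0 := pow_ne_zero _ hu0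
    have hx00 : (z - w) * u⁻¹ ≠ 0 := mul_ne_zero hy0 (inv_ne_zero hu0)
    have h1 : ((z - w) * u⁻¹) ^ (p ^ k) = -((z - w) * u⁻¹) := by
      rw [mul_pow, inv_pow]
      linear_combination (u⁻¹ * (u ^ p ^ k)⁻¹) * heq
        - ((z - w) ^ p ^ k * (u ^ p ^ k)⁻¹) * (mul_inv_cancel₀ hu0)
        - ((z - w) * u⁻¹) * (mul_inv_cancel₀ hupk)
    have h1' : ((z - w) * u⁻¹) ^ (p ^ k - 1 + 1) = -((z - w) * u⁻¹) := by
      rw [(by omega : p ^ k - 1 + 1 = p ^ k)]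
      exact h1
    rw [pow_succ] at h1'
    have : ((z - w) * u⁻¹) ^ (p ^ k - 1) * ((z - w) * u⁻¹) = -1 * ((z - w) * u⁻¹) := by
      rw [h1']; ring
    exact mul_right_cancel₀ hx00 this
  -- the fundamental equation in each sign pattern
  have hEeq : ∀ (ε x : F), ε ^ 2 = 1 → (x + a) ^ m = ε → x ^ m = ε →
      (x + a) ^ d + x ^ d = b → 2 * (x + u) ^ E = ε * b - 2 * u ^ E := by
    intro ε x hε2 hxa hxx hxe
    rw [hpowd (x + a), hpowd x, hxa, hxx] at hxe
    have h'' := key1 x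
    have hmain : ε * (2 * ((x + u) ^ E + u ^ E)) = b := by
      rw [← h'']
      linear_combination hxe
    linear_combination ε * hmain - (2 * (x + u) ^ E + 2 * u ^ E) * hε2
  have hMeq : ∀ x : F, (x + a) ^ m = -(x ^ m) → (x + a) ^ d + x ^ d = b →
      2 * (x + a) ^ m * (u * (x + u) ^ (p ^ k) + u ^ (p ^ k) * (x + u)) = b := by
    intro x hs he
    rw [hpowd (x + a), hpowd x] at he
    have h' : (x + a) ^ m * ((x + a) ^ E - x ^ E) = b := by
      linear_combination he - x ^ E * hs
    rw [key2 x] at h'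
    linear_combination h'
  -- uniqueness within equal-sign class
  have uniqA : ∀ (ε : F) (x₁ x₂ : F), ε ≠ 0 →
      (x₁ + a) ^ m = ε → x₁ ^ m = ε → (x₁ + a) ^ d + x₁ ^ d = b →
      (x₂ + a) ^ m = ε → x₂ ^ m = ε → (x₂ + a) ^ d + x₂ ^ d = b → x₁ = x₂ := by
    intro ε x₁ x₂ hε h1a h1x h1e h2a h2x h2e
    have hx1a0 : x₁ + a ≠ 0 := by
      intro h0
      apply hε
      rw [← h1a, h0, zero_pow hm0]
    have hε2 : ε ^ 2 = 1 := by rw [← h1a]; exact hsqm _ hx1a0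
    have e1 := hEeq ε x₁ hε2 h1a h1x h1e
    have e2 := hEeq ε x₂ hε2 h2a h2x h2e
    have hEE : (x₁ + u) ^ E = (x₂ + u) ^ E := by
      have h12 : 2 * (x₁ + u) ^ E = 2 * (x₂ + u) ^ E := by rw [e1, e2]
      exact mul_left_cancel₀ h2F h12
    rcases eq_or_ne (x₂ + u) 0 with h0 | h0
    · rw [h0, zero_pow hE0] at hEE
      have hx1u := (pow_eq_zero_iff hE0).mp hEE
      linear_combination hx1u - h0
    rcases powE_eq _ _ h0 hEE with heq | heq
    · exact add_right_cancel heq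
    · exfalso
      have hxa : x₁ + a = -x₂ := by rw [hau]; linear_combination heq
      have hcon : ε = -ε := by
        calc ε = (x₁ + a) ^ m := h1a.symm
        _ = (-x₂) ^ m := by rw [hxa]
        _ = -(x₂ ^ m) := Odd.neg_pow hmodd x₂
        _ = -ε := by rw [h2x]
      have h2ε : (2 : F) * ε = 0 := by linear_combination hcon
      exact hε ((mul_eq_zero.mp h2ε).resolve_left h2F)
  -- uniqueness within mixed-sign class
  have uniqB : ∀ x₁ x₂ : F,
      x₁ ≠ 0 → x₁ + a ≠ 0 → (x₁ + a) ^ m = -(x₁ ^ m) → (x₁ + a) ^ d + x₁ ^ d = b →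
      x₂ ≠ 0 → x₂ + a ≠ 0 → (x₂ + a) ^ m = -(x₂ ^ m) → (x₂ + a) ^ d + x₂ ^ d = b →
      x₁ = x₂ := by
    intro x₁ x₂ h10 h1a0 h1s h1e h20 h2a0 h2s h2e
    have m1 := hMeq x₁ h1s h1e
    have m2 := hMeq x₂ h2s h2e
    have hcase : ∀ s : F, s ≠ 0 →
        s = (x₁ + a) ^ m → s = (x₂ + a) ^ m → x₁ = x₂ := by
      intro s hs0 hsa hsb
      rw [← hsa] at m1
      rw [← hsb] at m2
      have hMM := m1.trans m2.symm
      have h2s0 : (2 : F) * s ≠ 0 := mul_ne_zero h2F hs0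
      have := lemM _ _ (mul_left_cancel₀ h2s0 hMM)
      exact add_right_cancel this
    have hmix : ∀ s : F, s ≠ 0 → s = (x₁ + a) ^ m → -s = (x₂ + a) ^ m → x₁ = x₂ := by
      intro s hs0 hsa hsb
      exfalso
      -- M(x₂+u) = -M(x₁+u) = M(-(x₁+u))
      have hM2 : u * (x₂ + u) ^ (p ^ k) + u ^ (p ^ k) * (x₂ + u)
          = u * (-(x₁ + u)) ^ (p ^ k) + u ^ (p ^ k) * (-(x₁ + u)) := by
        have hneg : (-(x₁ + u)) ^ (p ^ k) = -((x₁ + u) ^ (p ^ k)) :=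
          Odd.neg_pow hpk_odd _
        rw [hneg]
        -- 2 s M₁ = b, 2 (-s) M₂ = b ⇒ 2 s (M₂ + M₁) = 0 ⇒ M₂ = -M₁
        have hsum : (2 : F) * s *
            ((u * (x₂ + u) ^ (p ^ k) + u ^ (p ^ k) * (x₂ + u))
              + (u * (x₁ + u) ^ (p ^ k) + u ^ (p ^ k) * (x₁ + u))) = 0 := by
          rw [← hsa] at m1
          rw [← hsb] at m2
          linear_combination m1 - m2
        have h2s0 : (2 : F) * s ≠ 0 := mul_ne_zero h2F hs0
        have hz := (mul_eq_zero.mp hsum).resolve_left h2s0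
        linear_combination hz
      have := lemM _ _ hM2
      -- x₂ + u = -(x₁+u) ⇒ x₂ + a = -x₁
      have hxa : x₂ + a = -x₁ := by rw [hau]; linear_combination this
      have hneg : (-x₁) ^ m = -(x₁ ^ m) := Odd.neg_pow hmodd x₁
      have h1 : -s = (-x₁) ^ m := by rw [← hxa]; exact hsb
      rw [hneg] at h1
      have hcon : (2 : F) * s = 0 := by linear_combination -h1 + h1s + hsa
      exact hs0 ((mul_eq_zero.mp hcon).resolve_left h2F)
    rcases sq1 _ (hsqm _ h1a0) with hs1 | hs1 <;> rcases sq1 _ (hsqm _ h2a0) with hs2 | hs2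
    · exact hcase 1 one_ne_zero hs1.symm hs2.symm
    · exact hmix 1 one_ne_zero hs1.symm (by rw [hs2] <;> norm_num)
    · exact hmix (-1) (by norm_num) hs1.symm (by rw [hs2] <;> norm_num)
    · exact hcase (-1) (by norm_num) hs1.symm hs2.symm
  -- useful powers of a
  have ham2 : (a ^ m) ^ 2 = 1 := hsqm a ha
  have ham0 : a ^ m ≠ 0 := pow_ne_zero _ ha
  have h4 : (2 : F) ^ E = 4 := by rw [hEdef, pow_succ, h2pk]; norm_num
  have haE : a ^ E = 4 * u ^ E := by rw [hau, mul_pow, h4]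
  -- exclusion lemmas when b = σ a^d
  have exclA : ∀ σ x : F, σ ^ 2 = 1 → b = σ * a ^ d → x ≠ 0 → x + a ≠ 0 →
      (x + a) ^ m = σ * a ^ m → x ^ m = σ * a ^ m →
      (x + a) ^ d + x ^ d = b → False := by
    intro σ x hσ hb hx0 hxa0 hxam hxm hxe
    have hε2 : (σ * a ^ m) ^ 2 = 1 := by rw [mul_pow, hσ, ham2]; ring
    have hEe := hEeq (σ * a ^ m) x hε2 hxam hxm hxe
    have hεb : (σ * a ^ m) * b = 4 * u ^ E := by
      rw [hb, hpowd a, haE]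
      linear_combination (4 * u ^ E * (a ^ m) ^ 2) * hσ + (4 * u ^ E) * ham2
    have hxuE : (x + u) ^ E = u ^ E := by
      have : 2 * (x + u) ^ E = 2 * u ^ E := by
        rw [hEe]
        linear_combination hεb
      exact mul_left_cancel₀ h2F this
    rcases powE_eq (x + u) u hu0 hxuE with h | h
    · exact hx0 (by linear_combination h)
    · exact hxa0 (by rw [hau]; linear_combination h)
  have exclB : ∀ σ x : F, σ ^ 2 = 1 → b = σ * a ^ d → x ≠ 0 → x + a ≠ 0 →
      (x + a) ^ m = -(x ^ m) → (x + a) ^ d + x ^ d = b → False := by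
    intro σ x hσ hb hx0 hxa0 hs hxe
    have hsx2 : ((x + a) ^ m) ^ 2 = 1 := hsqm _ hxa0
    have hM := hMeq x hs hxe
    set s := (x + a) ^ m with hsdef
    set δ := s * σ * a ^ m with hδdef
    have hδ2 : δ ^ 2 = 1 := by
      rw [hδdef, mul_pow, mul_pow, hsx2, hσ, ham2]; ring
    have hδpk : δ ^ p ^ k = δ := by
      rcases sq1 δ hδ2 with h | h
      · rw [h, one_pow]
      · rw [h, Odd.neg_one_pow hpk_odd]
    have huE : u ^ E = u ^ p ^ k * u := by rw [hEdef, pow_succ]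
    have hMδ : u * (x + u) ^ (p ^ k) + u ^ (p ^ k) * (x + u)
        = u * (δ * u) ^ (p ^ k) + u ^ (p ^ k) * (δ * u) := by
      -- RHS = 2 δ u^E ; LHS = s * b  (after mult by s) = δ * a^E / ... derive via lin comb
      have hRHS : u * (δ * u) ^ (p ^ k) + u ^ (p ^ k) * (δ * u) = 2 * δ * u ^ E := by
        rw [mul_pow, hδpk, huE]; ring
      rw [hRHS]
      -- from hM : 2 * s * M = b, multiply by s, use s² = 1 : M = s b / 2... derive 2*M = 2*(2δ u^E)
      have h2M : 2 * (u * (x + u) ^ (p ^ k) + u ^ (p ^ k) * (x + u))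
          = 2 * (2 * δ * u ^ E) := by
        have hb4 : b = σ * (a ^ m * (4 * u ^ E)) := by rw [hb, hpowd a, haE]
        -- s * b = s * σ * a^m * 4 u^E = 4 δ u^E
        -- 2 * M = 2 * s² * M = s * (2 s M) = s * b = 4 δ u^E
        calc 2 * (u * (x + u) ^ (p ^ k) + u ^ (p ^ k) * (x + u))
            = s * (2 * s * (u * (x + u) ^ (p ^ k) + u ^ (p ^ k) * (x + u)))
              + 2 * (1 - s ^ 2) * (u * (x + u) ^ (p ^ k) + u ^ (p ^ k) * (x + u)) := by
              ring
        _ = s * b + 2 * (1 - s ^ 2) * (u * (x + u) ^ (p ^ k) + u ^ (p ^ k) * (x + u)) := by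
              rw [hM]
        _ = 2 * (2 * δ * u ^ E) := by
              rw [hb4, hδdef, hsx2]
              ring
      exact mul_left_cancel₀ h2F h2M
    have hzu := lemM _ _ hMδ
    rcases sq1 δ hδ2 with h | h
    · rw [h] at hzu
      exact hx0 (by linear_combination hzu)
    · rw [h] at hzu
      exact hxa0 (by rw [hau]; linear_combination hzu)
  -- special solutions
  have hx0mem : ∀ x : F, (x + a) ^ d + x ^ d = b → x = 0 → b = a ^ d := by
    intro x hx hx0
    rw [hx0] at hx
    rw [zero_add, zero_pow hd0, add_zero] at hx
    exact hx.symm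
  have hxamem : ∀ x : F, (x + a) ^ d + x ^ d = b → x = -a → b = -(a ^ d) := by
    intro x hx hxa
    rw [hxa] at hx
    rw [neg_add_cancel, zero_pow hd0, zero_add, Odd.neg_pow hdodd] at hx
    exact hx.symm
  -- final case analysis
  by_cases hbs : b = a ^ d ∨ b = -(a ^ d)
  · -- special case : b = σ a^d
    obtain ⟨σ, hσ2, hbσ⟩ : ∃ σ : F, σ ^ 2 = 1 ∧ b = σ * a ^ d := by
      rcases hbs with h | h
      · exact ⟨1, by norm_num, by rw [h, one_mul]⟩
      · exact ⟨-1, by norm_num, by rw [h]; ring⟩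
    have hσam2 : (σ * a ^ m) ^ 2 = 1 := by rw [mul_pow, hσ2, ham2]; ring
    have hσam0 : σ * a ^ m ≠ 0 := by
      intro h
      rw [h] at hσam2
      simp at hσam2
    set T : Set F := {x : F | x ≠ 0 ∧ x + a ≠ 0 ∧ (x + a) ^ m = -(σ * a ^ m) ∧
        x ^ m = -(σ * a ^ m) ∧ (x + a) ^ d + x ^ d = b} with hT
    have hcov : {x : F | (x + a) ^ d + x ^ d = b} ⊆ ({0, -a} : Set F) ∪ T := by
      intro x hx
      simp only [Set.mem_setOf_eq] at hx
      by_cases hx0 : x = 0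
      · left; left; exact hx0
      by_cases hxa : x = -a
      · left; right; exact hxa
      right
      have hxa0 : x + a ≠ 0 := fun h => hxa (by linear_combination h)
      have hsa2 := hsqm _ hxa0
      have hsx2 := hsqm _ hx0
      rcases sq1 _ (hsqm _ hxa0) with hsa | hsa <;>
        rcases sq1 _ (hsqm _ hx0) with hsx | hsx
      · -- both 1 : equal-sign with ε = 1
        rcases sq1 _ hσam2 with hv | hv
        · exact absurd (exclA σ x hσ2 hbσ hx0 hxa0 (by rw [hsa, hv] <;> norm_num)
            (by rw [hsx, hv] <;> norm_num) hx) id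
        · exact ⟨hx0, hxa0, by rw [hsa, hv] <;> norm_num, by rw [hsx, hv] <;> norm_num, hx⟩
      · exact absurd (exclB σ x hσ2 hbσ hx0 hxa0 (by rw [hsa, hsx] <;> norm_num) hx) id
      · exact absurd (exclB σ x hσ2 hbσ hx0 hxa0 (by rw [hsa, hsx] <;> norm_num) hx) id
      · -- both -1 : equal-sign with ε = -1
        rcases sq1 _ hσam2 with hv | hv
        · exact ⟨hx0, hxa0, by rw [hsa, hv] <;> norm_num, by rw [hsx, hv] <;> norm_num, hx⟩
        · exact absurd (exclA σ x hσ2 hbσ hx0 hxa0 (by rw [hsa, hv] <;> norm_num)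
            (by rw [hsx, hv] <;> norm_num) hx) id
    calc {x : F | (x + a) ^ d + x ^ d = b}.ncard
        ≤ (({0, -a} : Set F) ∪ T).ncard := Set.ncard_le_ncard hcov (Set.toFinite _)
    _ ≤ ({0, -a} : Set F).ncard + T.ncard := Set.ncard_union_le _ _
    _ ≤ 2 + 1 := by
        gcongr
        · calc ({0, -a} : Set F).ncard ≤ ({-a} : Set F).ncard + 1 :=
              Set.ncard_insert_le _ _
          _ = 2 := by rw [Set.ncard_singleton]
        · refine hsub1 T ?_
          rintro x ⟨hx0, hxa0, hsa, hsx, hxe⟩ y ⟨hy0, hya0, hya, hyx, hye⟩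
          exact uniqA (-(σ * a ^ m)) x y (neg_ne_zero.mpr hσam0)
            hsa hsx hxe hya hyx hye
    _ ≤ 3 := by norm_num
  · -- generic case : b ∉ {a^d, -a^d}
    push_neg at hbs
    obtain ⟨hb1, hb2⟩ := hbs
    set T1 : Set F := {x : F | x ≠ 0 ∧ x + a ≠ 0 ∧ (x + a) ^ m = 1 ∧
        x ^ m = 1 ∧ (x + a) ^ d + x ^ d = b} with hT1
    set T2 : Set F := {x : F | x ≠ 0 ∧ x + a ≠ 0 ∧ (x + a) ^ m = -1 ∧
        x ^ m = -1 ∧ (x + a) ^ d + x ^ d = b} with hT2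
    set T3 : Set F := {x : F | x ≠ 0 ∧ x + a ≠ 0 ∧ (x + a) ^ m = -(x ^ m) ∧
        (x + a) ^ d + x ^ d = b} with hT3
    have hcov : {x : F | (x + a) ^ d + x ^ d = b} ⊆ (T1 ∪ T2) ∪ T3 := by
      intro x hx
      simp only [Set.mem_setOf_eq] at hx
      have hx0 : x ≠ 0 := fun h => hb1 (hx0mem x hx h)
      have hxa : x ≠ -a := fun h => hb2 (hxamem x hx h)
      have hxa0 : x + a ≠ 0 := fun h => hxa (by linear_combination h)
      rcases sq1 _ (hsqm _ hxa0) with hsa | hsa <;>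
        rcases sq1 _ (hsqm _ hx0) with hsx | hsx
      · exact Or.inl (Or.inl ⟨hx0, hxa0, hsa, hsx, hx⟩)
      · exact Or.inr ⟨hx0, hxa0, by rw [hsa, hsx] <;> norm_num, hx⟩
      · exact Or.inr ⟨hx0, hxa0, by rw [hsa, hsx] <;> norm_num, hx⟩
      · exact Or.inl (Or.inr ⟨hx0, hxa0, hsa, hsx, hx⟩)
    calc {x : F | (x + a) ^ d + x ^ d = b}.ncard
        ≤ ((T1 ∪ T2) ∪ T3).ncard := Set.ncard_le_ncard hcov (Set.toFinite _)
    _ ≤ (T1 ∪ T2).ncard + T3.ncard := Set.ncard_union_le _ _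
    _ ≤ (T1.ncard + T2.ncard) + T3.ncard := by
        gcongr
        exact Set.ncard_union_le _ _
    _ ≤ (1 + 1) + 1 := by
        gcongr
        · refine hsub1 T1 ?_
          rintro x ⟨hx0, hxa0, hsa, hsx, hxe⟩ y ⟨hy0, hya0, hya, hyx, hye⟩
          exact uniqA 1 x y one_ne_zero hsa hsx hxe hya hyx hye
        · refine hsub1 T2 ?_
          rintro x ⟨hx0, hxa0, hsa, hsx, hxe⟩ y ⟨hy0, hya0, hya, hyx, hye⟩
          exact uniqA (-1) x y (by norm_num) hsa hsx hxe hya hyx hye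
        · refine hsub1 T3 ?_
          rintro x ⟨hx0, hxa0, hsa, hxe⟩ y ⟨hy0, hya0, hya, hye⟩
          exact uniqB x y hx0 hxa0 hsa hxe hy0 hya0 hya hye
    _ ≤ 3 := by norm_num
end

section
/- Let p be an odd prime and n, k positive integers such that n/gcd(n,k) is odd and p^n ≡ 1 (mod 4), and set d = (p^n−1)/2 + p^k + 1. Then the power function f(x)=x^d on F_{p^n} satisfies _{−1}Δ_f ≤ 6: for all a, b ∈ F_{p^n}, the equation (x+a)^d + x^d = b has at most 6 solutions x ∈ F_{p^n}. -/
/-!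
Write `q = p ^ n` and `m = p ^ k`. Every `x` satisfies `x ^ d = ε * x ^ (m + 1)` with
`ε = x ^ ((q - 1) / 2) = ±1` (either sign when `x = 0`). Since `n / gcd n k` is odd,
`gcd n (2 * k) = gcd n k`, so an element fixed by `x ↦ x ^ (p ^ (2 * k))` is fixed by `x ↦ x ^ m`;
hence `w ^ m = -w` forces `w = 0`, and `u ^ (m + 1) = 1` forces `u = ±1`.
After scaling to `a = 1`, a solution for which `x + 1` and `x` get the same sign `ε` satisfies
`(2 * x + 1) ^ (m + 1) = 2 * ε * b - 1`, which has at most two solutions for each `ε`; one with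
opposite signs satisfies `x ^ m + x = ε * b - 1`, which has at most one solution because
`x ↦ x ^ m + x` is additive with trivial kernel. This gives `2 + 2 + 1 + 1 = 6`.
-/

theorem Nat.gcd_two_mul_right_eq_gcd_of_odd {n k : ℕ} (h : Odd (n / n.gcd k)) :
    n.gcd (2 * k) = n.gcd k := by
  have hg : 0 < n.gcd k := Nat.pos_of_ne_zero fun h0 => by simp [h0] at h
  have hcop := Nat.coprime_div_gcd_div_gcd hg
  have hn := (Nat.mul_div_cancel' (Nat.gcd_dvd_left n k)).symm
  have hk := (Nat.mul_div_cancel' (Nat.gcd_dvd_right n k)).symm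
  generalize n.gcd k = g, n / n.gcd k = n', k / n.gcd k = k' at *
  subst hn hk
  rw [Nat.mul_left_comm, Nat.gcd_mul_left,
    Nat.Coprime.gcd_mul_left_cancel_right _ h.coprime_two_left, hcop, mul_one]

theorem pow_pow_eq_self_of_pow_pow_two_mul {M : Type*} [Monoid M] {p n k : ℕ} {w : M}
    (hquot : Odd (n / n.gcd k)) (hn : w ^ p ^ n = w) (h2k : w ^ p ^ (2 * k) = w) :
    w ^ p ^ k = w := by
  have hper : ∀ j, w ^ p ^ j = w → (fun x : M => x ^ p).IsPeriodicPt j w := fun j hj => by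
    simpa [Function.IsPeriodicPt, Function.IsFixedPt, pow_iterate] using hj
  obtain ⟨t, ht⟩ := Nat.gcd_dvd_right n k
  have := ((hper n hn).gcd (hper _ h2k)).mul_const t
  rw [Nat.gcd_two_mul_right_eq_gcd_of_odd hquot, ← ht] at this
  simpa [Function.IsPeriodicPt, Function.IsFixedPt, pow_iterate] using this

namespace FiniteField

variable {F : Type*} [Field F] [Fintype F] {p n k : ℕ}

theorem ringChar_ne_two_of_card_eq_pow (hodd : Odd p) (hcard : Fintype.card F = p ^ n) :
    ringChar F ≠ 2 := by
  rw [Ne, even_card_iff_char_two, hcard, ← Nat.even_iff, Nat.not_even_iff_odd]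
  exact hodd.pow

theorem exists_pow_card_div_two_add_eq (hF : ringChar F ≠ 2) (x : F) {j : ℕ} (hj : 0 < j) :
    ∃ ε : F, (ε = 1 ∨ ε = -1) ∧ x ^ (Fintype.card F / 2 + j) = ε * x ^ j := by
  rcases eq_or_ne x 0 with rfl | hx
  · exact ⟨1, Or.inl rfl, by simp [zero_pow (by omega : Fintype.card F / 2 + j ≠ 0), hj.ne']⟩
  · exact ⟨_, pow_dichotomy hF hx, pow_add _ _ _⟩

theorem eq_zero_of_pow_pow_eq_neg_s15 (hcard : Fintype.card F = p ^ n)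
    (hquot : Odd (n / n.gcd k)) (hodd : Odd p) {w : F} (hw : w ^ p ^ k = -w) : w = 0 := by
  have h2k : w ^ p ^ (2 * k) = w := by
    rw [pow_mul', sq, pow_mul, hw, (hodd.pow : Odd (p ^ k)).neg_pow, hw, neg_neg]
  have hfix := pow_pow_eq_self_of_pow_pow_two_mul hquot (hcard ▸ pow_card _) h2k
  have h2w : 2 * w = 0 := by linear_combination hw - hfix
  exact (mul_eq_zero.mp h2w).resolve_left
    (Ring.two_ne_zero (ringChar_ne_two_of_card_eq_pow hodd hcard))

theorem eq_one_or_eq_neg_one_of_pow_pow_add_one_eq_one (hcard : Fintype.card F = p ^ n)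
    (hquot : Odd (n / n.gcd k)) {u : F} (hu : u ^ (p ^ k + 1) = 1) :
    u = 1 ∨ u = -1 := by
  have hu0 : u ≠ 0 := by rintro rfl; simp at hu
  have hinv : u ^ p ^ k = u⁻¹ := eq_inv_of_mul_eq_one_left (by rwa [← pow_succ])
  have h2k : u ^ p ^ (2 * k) = u := by rw [pow_mul', sq, pow_mul, hinv, inv_pow, hinv, inv_inv]
  have hfix := pow_pow_eq_self_of_pow_pow_two_mul hquot (hcard ▸ pow_card _) h2k
  rw [pow_succ, hfix] at hu
  exact mul_self_eq_one_iff.mp hu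

theorem ncard_pow_pow_add_one_eq_le_two (hcard : Fintype.card F = p ^ n)
    (hquot : Odd (n / n.gcd k)) (c : F) :
    {y : F | y ^ (p ^ k + 1) = c}.ncard ≤ 2 := by
  rcases Set.eq_empty_or_nonempty {y : F | y ^ (p ^ k + 1) = c} with h | ⟨y₀, hy₀⟩
  · simp [h]
  have hsub : {y : F | y ^ (p ^ k + 1) = c} ⊆ {y₀, -y₀} := by
    intro y hy
    simp only [Set.mem_ofPred_eq] at hy hy₀
    rcases eq_or_ne y₀ 0 with rfl | hy₀0
    · rw [zero_pow (by omega)] at hy₀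
      simp [(pow_eq_zero_iff (by omega)).mp (hy.trans hy₀.symm)]
    have hc : c ≠ 0 := hy₀ ▸ pow_ne_zero _ hy₀0
    have hu : (y / y₀) ^ (p ^ k + 1) = 1 := by rw [div_pow, hy, hy₀, div_self hc]
    rcases eq_one_or_eq_neg_one_of_pow_pow_add_one_eq_one hcard hquot hu with h | h
    · left; exact (div_eq_one_iff_eq hy₀0).mp h
    · right; rw [div_eq_iff hy₀0] at h; simp [h]
  calc _ ≤ ({y₀, -y₀} : Set F).ncard := Set.ncard_le_ncard hsub
    _ ≤ 2 := Set.ncard_insert_le _ _ |>.trans (by simp)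

theorem ncard_pow_pow_add_self_eq_le_one [Fact p.Prime] [CharP F p]
    (hcard : Fintype.card F = p ^ n) (hquot : Odd (n / n.gcd k)) (hodd : Odd p) (c : F) :
    {x : F | x ^ p ^ k + x = c}.ncard ≤ 1 := by
  refine (Set.ncard_le_one).mpr fun x hx y hy => ?_
  have hw : (x - y) ^ p ^ k = -(x - y) := by
    rw [sub_pow_char_pow]; linear_combination hx.out - hy.out
  exact sub_eq_zero.mp (eq_zero_of_pow_pow_eq_neg_s15 hcard hquot hodd hw)

theorem ncard_add_one_pow_add_pow_eq_le_six [Fact p.Prime] [CharP F p]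
    (hcard : Fintype.card F = p ^ n) (hquot : Odd (n / n.gcd k)) (hodd : Odd p) (b : F) :
    {x : F | (x + 1) ^ (Fintype.card F / 2 + (p ^ k + 1)) +
      x ^ (Fintype.card F / 2 + (p ^ k + 1)) = b}.ncard ≤ 6 := by
  have hF := ringChar_ne_two_of_card_eq_pow hodd hcard
  have hinj : Function.Injective fun x : F => 2 * x + 1 := fun x y h =>
    mul_left_cancel₀ (Ring.two_ne_zero hF) (add_right_cancel h)
  set P : F → Set F := fun ε => {x | (2 * x + 1) ^ (p ^ k + 1) = 2 * ε * b - 1}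
  set M : F → Set F := fun ε => {x | x ^ p ^ k + x = ε * b - 1}
  have hP : ∀ ε, (P ε).ncard ≤ 2 := fun ε =>
    (Set.ncard_le_ncard_of_injOn (fun x => 2 * x + 1) (fun x hx => hx) hinj.injOn).trans
      (ncard_pow_pow_add_one_eq_le_two hcard hquot _)
  have hM : ∀ ε, (M ε).ncard ≤ 1 := fun ε => ncard_pow_pow_add_self_eq_le_one hcard hquot hodd _
  have hcover : {x : F | (x + 1) ^ (Fintype.card F / 2 + (p ^ k + 1)) +
      x ^ (Fintype.card F / 2 + (p ^ k + 1)) = b} ⊆ P 1 ∪ P (-1) ∪ M 1 ∪ M (-1) := by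
    intro x hx
    obtain ⟨ε₁, hε₁, h₁⟩ := exists_pow_card_div_two_add_eq hF (x + 1) (p ^ k).add_one_pos
    obtain ⟨ε₂, hε₂, h₂⟩ := exists_pow_card_div_two_add_eq hF x (p ^ k).add_one_pos
    have hx₁ : (x + 1) ^ p ^ k = x ^ p ^ k + 1 := by rw [add_pow_char_pow, one_pow]
    have hx₂ : (2 * x + 1) ^ p ^ k = 2 * x ^ p ^ k + 1 := by
      rw [add_pow_char_pow, one_pow, mul_pow, ← one_add_one_eq_two, add_pow_char_pow, one_pow]
    rw [Set.mem_ofPred_eq, h₁, h₂, pow_succ, pow_succ, hx₁] at hx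
    simp only [Set.mem_union, P, M, Set.mem_ofPred_eq, pow_succ, hx₂]
    rcases hε₁ with rfl | rfl <;> rcases hε₂ with rfl | rfl
    · left; left; left; linear_combination 2 * hx
    · left; right; linear_combination hx
    · right; linear_combination -hx
    · left; left; right; linear_combination -2 * hx
  calc _ ≤ (P 1 ∪ P (-1) ∪ M 1 ∪ M (-1)).ncard := Set.ncard_le_ncard hcover
    _ ≤ 2 + 2 + 1 + 1 := by
      refine (Set.ncard_union_le _ _).trans (add_le_add ?_ (hM _))
      refine (Set.ncard_union_le _ _).trans (add_le_add ?_ (hM _))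
      exact (Set.ncard_union_le _ _).trans (add_le_add (hP _) (hP _))

theorem ncard_pow_add_pow_eq_le_four (hcard : Fintype.card F = p ^ n)
    (hquot : Odd (n / n.gcd k)) (hodd : Odd p) (b : F) :
    {x : F | x ^ (Fintype.card F / 2 + (p ^ k + 1)) +
      x ^ (Fintype.card F / 2 + (p ^ k + 1)) = b}.ncard ≤ 4 := by
  have hF := ringChar_ne_two_of_card_eq_pow hodd hcard
  have hcover : {x : F | x ^ (Fintype.card F / 2 + (p ^ k + 1)) +
      x ^ (Fintype.card F / 2 + (p ^ k + 1)) = b} ⊆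
      {y | y ^ (p ^ k + 1) = b / 2} ∪ {y | y ^ (p ^ k + 1) = -(b / 2)} := by
    intro x hx
    obtain ⟨ε, hε, h⟩ := exists_pow_card_div_two_add_eq hF x (p ^ k).add_one_pos
    rw [Set.mem_ofPred_eq, h] at hx
    rw [Set.mem_union, Set.mem_ofPred_eq, Set.mem_ofPred_eq, eq_div_iff (Ring.two_ne_zero hF),
      neg_div', eq_div_iff (Ring.two_ne_zero hF)]
    rcases hε with rfl | rfl
    · left; linear_combination hx
    · right; linear_combination -hx
  calc _ ≤ _ := Set.ncard_le_ncard hcover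
    _ ≤ 2 + 2 := (Set.ncard_union_le _ _).trans <| add_le_add
      (ncard_pow_pow_add_one_eq_le_two hcard hquot _)
      (ncard_pow_pow_add_one_eq_le_two hcard hquot _)

end FiniteField

theorem ncard_add_pow_add_pow_eq_le {K : Type*} [Field K] [Finite K] {a : K} (ha : a ≠ 0)
    (d : ℕ) (b : K) :
    {x : K | (x + a) ^ d + x ^ d = b}.ncard ≤ {y : K | (y + 1) ^ d + y ^ d = b / a ^ d}.ncard := by
  refine Set.ncard_le_ncard_of_injOn (· / a) (fun x hx => ?_)
    fun _ _ _ _ h => (div_left_inj' ha).mp h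
  rw [Set.mem_ofPred_eq, eq_div_iff (pow_ne_zero _ ha), add_mul, ← mul_pow, ← mul_pow,
    add_mul, one_mul, div_mul_cancel₀ _ ha]
  exact hx

theorem stmt_15_general (p n k : ℕ) (hp : p.Prime) (hodd : Odd p)
    (hquot : Odd (n / Nat.gcd n k))
    (d : ℕ) (hd : d = (p ^ n - 1) / 2 + p ^ k + 1)
    (F : Type*) [Field F] [Fintype F] (hcard : Fintype.card F = p ^ n)
    (a b : F) :
    {x : F | (x + a) ^ d + x ^ d = b}.ncard ≤ 6 := by
  have := Fact.mk hp
  have := charP_of_card_eq_prime_pow hcard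
  have hd' : d = Fintype.card F / 2 + (p ^ k + 1) := by
    have := Nat.odd_iff.mp (hodd.pow : Odd (p ^ n))
    rw [hd, hcard]; omega
  rw [hd']
  rcases eq_or_ne a 0 with rfl | ha
  · simpa using (FiniteField.ncard_pow_add_pow_eq_le_four hcard hquot hodd b).trans (by norm_num)
  · exact (ncard_add_pow_add_pow_eq_le ha _ b).trans
      (FiniteField.ncard_add_one_pow_add_pow_eq_le_six hcard hquot hodd _)

/-- Theorem 3.6 (Theorem `thme`), case `p^n ≡ 1 (mod 4)`, `c = -1`: for
`d = (p^n-1)/2 + p^k + 1` with `n/gcd(n,k)` odd, one has `₋₁Δ_f ≤ 6`. -/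
theorem stmt_15 (p n k : ℕ) (hp : p.Prime) (hodd : Odd p)
    (hn0 : 0 < n) (hk0 : 0 < k) (hquot : Odd (n / Nat.gcd n k))
    (hmod : p ^ n % 4 = 1) (d : ℕ) (hd : d = (p ^ n - 1) / 2 + p ^ k + 1)
    (F : Type*) [Field F] [Fintype F] (hcard : Fintype.card F = p ^ n)
    (a b : F) :
    {x : F | (x + a) ^ d + x ^ d = b}.ncard ≤ 6 :=
  stmt_15_general p n k hp hodd hquot d hd F hcard a b
end

section
/- Let p be an odd prime and n, k positive integers such that n/gcd(n,k) is odd and p^n ≡ 1 (mod 4), and set d = (p^n−1)/2 + p^k + 1. Then the power function f(x)=x^d on F_{p^n} satisfies _1Δ_f ≤ 3: for every a ∈ F_{p^n} with a ≠ 0 and every b ∈ F_{p^n}, the equation (x+a)^d − x^d = b has at most 3 solutions x ∈ F_{p^n}. -/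
/-!
Write `χ` for the quadratic character of `F`, `q = p ^ n` and `s = p ^ k + 1`. Since
`d = (q - 1) / 2 + s`, we have `x ^ d = χ(x) x ^ s`, so a solution satisfies
`χ(x + a) (x + a) ^ s - χ(x) x ^ s = b`.

The condition on `n / gcd(n, k)` ensures that `x ↦ x ^ (p ^ k)` and `x ↦ x ^ (p ^ (2 k))` have the
same fixed points. Hence `y ^ s = z ^ s` forces `y = ± z`, and `w ↦ w ^ (p ^ k) a + w a ^ (p ^ k)`
is injective for `a ≠ 0`.

A solution is determined by the sign of `χ(x + a) - χ(x)`, which takes three values. Let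
`ρ(x) = -a - x`; as `q ≡ 1 (mod 4)`, `-1` is a square, so `ρ` swaps `χ(x)` and `χ(x + a)`.
If the sign is `0`, then `(x + a) ^ s - x ^ s = χ(x) b`. The left side is
`x ^ (p ^ k) a + x a ^ (p ^ k) + a ^ s`, an injective function of `x` that `ρ` negates, so two such
solutions with equal `χ(x)` coincide, and two with opposite `χ(x)` would be exchanged by `ρ`, which
preserves `χ(x)` here. If the sign is `ε = ± 1`, then `(x + a) ^ s + x ^ s = ε b`. The left side is
`2 (x + a / 2) ^ s + 2 (a / 2) ^ s`, so `x` is determined up to `ρ`, which reverses the sign.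
-/

open Function

theorem Nat.gcd_two_mul_dvd_of_odd_div_gcd {n k : ℕ} (h : Odd (n / n.gcd k)) :
    (2 * k).gcd n ∣ k := by
  have hn : n.gcd k * (n / n.gcd k) = n := Nat.mul_div_cancel' (Nat.gcd_dvd_left n k)
  have h2g : (2 * k).gcd n ∣ 2 * n.gcd k := by
    rw [← Nat.gcd_mul_left]
    exact Nat.dvd_gcd ((Nat.gcd_dvd_right _ _).mul_left 2) (Nat.gcd_dvd_left _ _)
  have hg : (n.gcd k * 2).gcd (n.gcd k * (n / n.gcd k)) = n.gcd k := by
    rw [Nat.gcd_mul_left, Nat.coprime_two_left.mpr h, mul_one]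
  rw [hn, mul_comm] at hg
  exact (hg ▸ Nat.dvd_gcd h2g (Nat.gcd_dvd_right _ _)).trans (Nat.gcd_dvd_right n k)

theorem eq_zero_or_eq_of_sign_sub_eq {u v ε : ℤ} (hu : u = 0 ∨ u = 1 ∨ u = -1)
    (hv : v = 0 ∨ v = 1 ∨ v = -1) (hε : ε = 1 ∨ ε = -1) (h : (u - v).sign = ε) :
    (u = 0 ∨ u = ε) ∧ (v = 0 ∨ v = -ε) := by
  rcases hε with rfl | rfl
  · rw [Int.sign_eq_one_iff_pos] at h; omega
  · rw [Int.sign_eq_neg_one_iff_neg] at h; omega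

section Frobenius

variable {R : Type*} [CommRing R] {p : ℕ} [ExpChar R p]

theorem add_pow_pow_add_one (k : ℕ) (x y : R) :
    (x + y) ^ (p ^ k + 1) = x ^ (p ^ k + 1) + (x ^ p ^ k * y + x * y ^ p ^ k) + y ^ (p ^ k + 1) := by
  rw [pow_succ, pow_succ, pow_succ, add_pow_expChar_pow]
  ring

theorem add_pow_pow_add_one_add_sub_pow (k : ℕ) (u c : R) :
    (u + c) ^ (p ^ k + 1) + (u - c) ^ (p ^ k + 1) = 2 * (u ^ (p ^ k + 1) + c ^ (p ^ k + 1)) := by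
  rw [pow_succ, pow_succ, pow_succ, pow_succ, add_pow_expChar_pow, sub_pow_expChar_pow]
  ring

end Frobenius

theorem pow_pow_eq_self_of_pow_pow_two_mul_eq_self {F : Type*} [Field F] [Fintype F] {p n k : ℕ}
    [ExpChar F p] (hcard : Fintype.card F = p ^ n) (hnk : Odd (n / n.gcd k)) {r : F}
    (hr : r ^ p ^ (2 * k) = r) : r ^ p ^ k = r := by
  have h2k : IsPeriodicPt (frobenius F p) (2 * k) r := by
    rwa [IsPeriodicPt, IsFixedPt, iterate_frobenius]
  have hn : IsPeriodicPt (frobenius F p) n r := by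
    rw [IsPeriodicPt, IsFixedPt, iterate_frobenius, ← hcard, FiniteField.pow_card]
  have hk := (h2k.gcd hn).trans_dvd (Nat.gcd_two_mul_dvd_of_odd_div_gcd hnk)
  rwa [IsPeriodicPt, IsFixedPt, iterate_frobenius] at hk

section SameFixedPoints

variable {F : Type*} [Field F] {p k : ℕ}

theorem eq_or_eq_neg_of_pow_pow_add_one_eq (hfix : ∀ r : F, r ^ p ^ (2 * k) = r → r ^ p ^ k = r)
    {y z : F} (h : y ^ (p ^ k + 1) = z ^ (p ^ k + 1)) : y = z ∨ y = -z := by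
  rcases eq_or_ne z 0 with rfl | hz
  · left
    simpa using h
  have hr : (y / z) ^ p ^ k * (y / z) = 1 := by
    rw [← pow_succ, div_pow, h, div_self (pow_ne_zero _ hz)]
  have hinv : (y / z) ^ p ^ k = (y / z)⁻¹ := eq_inv_of_mul_eq_one_left hr
  have h2k : (y / z) ^ p ^ (2 * k) = y / z := by
    rw [two_mul, pow_add, pow_mul, hinv, inv_pow, hinv, inv_inv]
  rwa [hfix _ h2k, mul_self_eq_one_iff, div_eq_one_iff_eq hz, div_eq_iff hz, neg_one_mul] at hr

variable [ExpChar F p]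

theorem eq_zero_of_pow_pow_mul_add_mul_pow_pow_eq_zero (h2 : (2 : F) ≠ 0)
    (hfix : ∀ r : F, r ^ p ^ (2 * k) = r → r ^ p ^ k = r) {a w : F} (ha : a ≠ 0)
    (h : w ^ p ^ k * a + w * a ^ p ^ k = 0) : w = 0 := by
  have hr : (w / a) ^ p ^ k = -(w / a) := by
    rw [div_pow, ← neg_div, div_eq_div_iff (pow_ne_zero _ ha) ha]
    linear_combination h
  have h2k : (w / a) ^ p ^ (2 * k) = w / a := by
    rw [two_mul, pow_add, pow_mul, hr, neg_pow, neg_one_pow_expChar_pow, hr]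
    ring
  have h2r : 2 * (w / a) = 0 := by linear_combination hr - hfix _ h2k
  simpa [h2, ha] using h2r

theorem add_pow_pow_add_one_sub_pow_injective (h2 : (2 : F) ≠ 0)
    (hfix : ∀ r : F, r ^ p ^ (2 * k) = r → r ^ p ^ k = r) {a : F} (ha : a ≠ 0) :
    Injective fun x : F => (x + a) ^ (p ^ k + 1) - x ^ (p ^ k + 1) := by
  intro x y hxy
  rw [← sub_eq_zero]
  refine eq_zero_of_pow_pow_mul_add_mul_pow_pow_eq_zero h2 hfix ha ?_
  simp only [add_pow_pow_add_one] at hxy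
  rw [sub_pow_expChar_pow]
  linear_combination hxy

theorem add_eq_neg_of_add_pow_sub_pow_eq_neg (h2 : (2 : F) ≠ 0)
    (hfix : ∀ r : F, r ^ p ^ (2 * k) = r → r ^ p ^ k = r) {a x y : F} (ha : a ≠ 0)
    (h : (x + a) ^ (p ^ k + 1) - x ^ (p ^ k + 1) = -((y + a) ^ (p ^ k + 1) - y ^ (p ^ k + 1))) :
    x + y = -a := by
  rw [← sub_eq_zero, sub_neg_eq_add]
  refine eq_zero_of_pow_pow_mul_add_mul_pow_pow_eq_zero h2 hfix ha ?_
  simp only [add_pow_pow_add_one] at h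
  rw [add_pow_expChar_pow, add_pow_expChar_pow]
  linear_combination h

theorem eq_or_add_eq_neg_of_add_pow_add_pow_eq (h2 : (2 : F) ≠ 0)
    (hfix : ∀ r : F, r ^ p ^ (2 * k) = r → r ^ p ^ k = r) {a x y : F}
    (h : (x + a) ^ (p ^ k + 1) + x ^ (p ^ k + 1) = (y + a) ^ (p ^ k + 1) + y ^ (p ^ k + 1)) :
    x = y ∨ x + y = -a := by
  have : NeZero (2 : F) := ⟨h2⟩
  have hmid : ∀ z : F, (z + a) ^ (p ^ k + 1) + z ^ (p ^ k + 1)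
      = 2 * ((z + a / 2) ^ (p ^ k + 1) + (a / 2) ^ (p ^ k + 1)) := fun z => by
    rw [← add_pow_pow_add_one_add_sub_pow, add_assoc, add_halves, add_sub_cancel_right]
  rw [hmid, hmid, mul_right_inj' h2, add_left_inj] at h
  refine (eq_or_eq_neg_of_pow_pow_add_one_eq hfix h).imp add_right_cancel fun h => ?_
  linear_combination h + (add_halves a).symm

end SameFixedPoints

section QuadraticChar

theorem FiniteField.ringChar_ne_two_of_card_mod_four {F : Type*} [Field F] [Fintype F]
    (h4 : Fintype.card F % 4 = 1) : ringChar F ≠ 2 := by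
  rw [Ne, FiniteField.even_card_iff_char_two]
  omega

variable {F : Type*} [Field F] [Fintype F] [DecidableEq F]

theorem quadraticChar_neg_of_card_mod_four (h4 : Fintype.card F % 4 = 1) (x : F) :
    quadraticChar F (-x) = quadraticChar F x := by
  have hsq : IsSquare (-1 : F) := FiniteField.isSquare_neg_one_iff.mpr (by omega)
  rw [neg_eq_neg_one_mul, map_mul, (quadraticChar_one_iff_isSquare (by simp)).mpr hsq, one_mul]

theorem pow_card_div_two_add (hF : ringChar F ≠ 2) (x : F) (m : ℕ) :
    x ^ (Fintype.card F / 2 + m) = quadraticChar F x * x ^ m := by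
  rw [pow_add, quadraticChar_eq_pow_of_char_ne_two' hF]

theorem quadraticChar_mul_pow_of_eq_zero_or_eq {z : F} {ε : ℤ} {m : ℕ} (hm : m ≠ 0)
    (h : quadraticChar F z = 0 ∨ quadraticChar F z = ε) :
    (quadraticChar F z : F) * z ^ m = ε * z ^ m := by
  rcases h with h | h
  · rw [quadraticChar_eq_zero_iff.mp h, zero_pow hm, mul_zero, mul_zero]
  · rw [h]

end QuadraticChar

section Count

variable {F : Type*} [Field F] [Fintype F] [DecidableEq F] {p k : ℕ} [ExpChar F p]

theorem eq_of_sign_quadraticChar_sub_eq_zero (h4 : Fintype.card F % 4 = 1)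
    (hfix : ∀ r : F, r ^ p ^ (2 * k) = r → r ^ p ^ k = r) {a b x y : F} (ha : a ≠ 0)
    (hx : (quadraticChar F (x + a) : F) * (x + a) ^ (p ^ k + 1)
      - quadraticChar F x * x ^ (p ^ k + 1) = b)
    (hy : (quadraticChar F (y + a) : F) * (y + a) ^ (p ^ k + 1)
      - quadraticChar F y * y ^ (p ^ k + 1) = b)
    (hxs : (quadraticChar F (x + a) - quadraticChar F x).sign = 0)
    (hys : (quadraticChar F (y + a) - quadraticChar F y).sign = 0) : x = y := by
  have h2 : (2 : F) ≠ 0 := Ring.two_ne_zero (FiniteField.ringChar_ne_two_of_card_mod_four h4)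
  have hsolve : ∀ z : F, (quadraticChar F (z + a) : F) * (z + a) ^ (p ^ k + 1)
      - quadraticChar F z * z ^ (p ^ k + 1) = b →
      (quadraticChar F (z + a) - quadraticChar F z).sign = 0 →
      quadraticChar F (z + a) = quadraticChar F z ∧ quadraticChar F z ≠ 0 ∧
      (z + a) ^ (p ^ k + 1) - z ^ (p ^ k + 1) = quadraticChar F z * b := by
    intro z hz hzs
    have hza : quadraticChar F (z + a) = quadraticChar F z := by
      rwa [Int.sign_eq_zero_iff_zero, sub_eq_zero] at hzs
    have hz0 : z ≠ 0 := by
      rintro rfl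
      rw [zero_add, MulChar.map_zero, quadraticChar_eq_zero_iff] at hza
      exact ha hza
    have hsq : (quadraticChar F z : F) ^ 2 = 1 := by
      rw [← Int.cast_pow, quadraticChar_sq_one hz0, Int.cast_one]
    rw [hza] at hz
    refine ⟨hza, quadraticChar_eq_zero_iff.not.mpr hz0, ?_⟩
    linear_combination (quadraticChar F z : F) * hz
      - ((z + a) ^ (p ^ k + 1) - z ^ (p ^ k + 1)) * hsq
  obtain ⟨hxa, hx0, hQx⟩ := hsolve x hx hxs
  obtain ⟨-, hy0, hQy⟩ := hsolve y hy hys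
  by_cases hxy : quadraticChar F x = quadraticChar F y
  · exact add_pow_pow_add_one_sub_pow_injective h2 hfix ha (by dsimp only; rw [hQx, hQy, hxy])
  have hneg : quadraticChar F x = -quadraticChar F y := by
    have := quadraticChar_isQuadratic F x
    have := quadraticChar_isQuadratic F y
    omega
  have hsum := add_eq_neg_of_add_pow_sub_pow_eq_neg (x := x) (y := y) h2 hfix ha
    (by rw [hQx, hQy, hneg]; push_cast; ring)
  refine absurd ?_ hxy
  rw [← hxa, show x + a = -y by linear_combination hsum, quadraticChar_neg_of_card_mod_four h4]

theorem eq_of_sign_quadraticChar_sub_eq (h4 : Fintype.card F % 4 = 1)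
    (hfix : ∀ r : F, r ^ p ^ (2 * k) = r → r ^ p ^ k = r) {a b x y : F} {ε : ℤ}
    (hε : ε = 1 ∨ ε = -1)
    (hx : (quadraticChar F (x + a) : F) * (x + a) ^ (p ^ k + 1)
      - quadraticChar F x * x ^ (p ^ k + 1) = b)
    (hy : (quadraticChar F (y + a) : F) * (y + a) ^ (p ^ k + 1)
      - quadraticChar F y * y ^ (p ^ k + 1) = b)
    (hxs : (quadraticChar F (x + a) - quadraticChar F x).sign = ε)
    (hys : (quadraticChar F (y + a) - quadraticChar F y).sign = ε) : x = y := by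
  have h2 : (2 : F) ≠ 0 := Ring.two_ne_zero (FiniteField.ringChar_ne_two_of_card_mod_four h4)
  have hsq : (ε : F) ^ 2 = 1 := by rcases hε with rfl | rfl <;> norm_num
  have hsolve : ∀ z : F, (quadraticChar F (z + a) : F) * (z + a) ^ (p ^ k + 1)
      - quadraticChar F z * z ^ (p ^ k + 1) = b →
      (quadraticChar F (z + a) - quadraticChar F z).sign = ε →
      (z + a) ^ (p ^ k + 1) + z ^ (p ^ k + 1) = ε * b := by
    intro z hz hzs
    obtain ⟨hza, hzv⟩ := eq_zero_or_eq_of_sign_sub_eq (quadraticChar_isQuadratic F (z + a))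
      (quadraticChar_isQuadratic F z) hε hzs
    rw [quadraticChar_mul_pow_of_eq_zero_or_eq (Nat.add_one_ne_zero _) hza,
      quadraticChar_mul_pow_of_eq_zero_or_eq (Nat.add_one_ne_zero _) hzv] at hz
    push_cast at hz
    linear_combination (ε : F) * hz - ((z + a) ^ (p ^ k + 1) + z ^ (p ^ k + 1)) * hsq
  rcases eq_or_add_eq_neg_of_add_pow_add_pow_eq h2 hfix
      ((hsolve x hx hxs).trans (hsolve y hy hys).symm) with h | hsum
  · exact h
  rw [show y + a = -x by linear_combination hsum, show y = -(x + a) by linear_combination hsum,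
    quadraticChar_neg_of_card_mod_four h4, quadraticChar_neg_of_card_mod_four h4, ← neg_sub,
    Int.sign_neg, hxs] at hys
  omega

theorem injOn_sign_quadraticChar_sub (h4 : Fintype.card F % 4 = 1)
    (hfix : ∀ r : F, r ^ p ^ (2 * k) = r → r ^ p ^ k = r) {a : F} (ha : a ≠ 0) (b : F) :
    Set.InjOn (fun x => (quadraticChar F (x + a) - quadraticChar F x).sign)
      {x | (quadraticChar F (x + a) : F) * (x + a) ^ (p ^ k + 1)
        - quadraticChar F x * x ^ (p ^ k + 1) = b} := by
  intro x hx y hy hxy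
  dsimp only at hxy
  obtain h | h | h := Int.sign_trichotomy (quadraticChar F (x + a) - quadraticChar F x)
  · exact eq_of_sign_quadraticChar_sub_eq h4 hfix (.inl rfl) hx hy h (hxy ▸ h)
  · exact eq_of_sign_quadraticChar_sub_eq_zero h4 hfix ha hx hy h (hxy ▸ h)
  · exact eq_of_sign_quadraticChar_sub_eq h4 hfix (.inr rfl) hx hy h (hxy ▸ h)

end Count

theorem ncard_setOf_add_pow_sub_pow_eq_le_three {F : Type*} [Field F] [Fintype F] {p k : ℕ}
    [ExpChar F p] (h4 : Fintype.card F % 4 = 1)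
    (hfix : ∀ r : F, r ^ p ^ (2 * k) = r → r ^ p ^ k = r) {a : F} (ha : a ≠ 0) (b : F) :
    {x : F | (x + a) ^ (Fintype.card F / 2 + (p ^ k + 1))
      - x ^ (Fintype.card F / 2 + (p ^ k + 1)) = b}.ncard ≤ 3 := by
  classical
  simp only [pow_card_div_two_add (FiniteField.ringChar_ne_two_of_card_mod_four h4)]
  refine (Set.ncard_le_ncard_of_injOn _ ?_ (injOn_sign_quadraticChar_sub h4 hfix ha b)
    (Set.toFinite {1, 0, -1})).trans (by simp)
  exact fun x _ => Int.sign_trichotomy _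

theorem stmt_16_general (p n k : ℕ) (hp : p.Prime)
    (hquot : Odd (n / Nat.gcd n k))
    (hmod : p ^ n % 4 = 1) (d : ℕ) (hd : d = (p ^ n - 1) / 2 + p ^ k + 1)
    (F : Type*) [Field F] [Fintype F] (hcard : Fintype.card F = p ^ n)
    (a b : F) (ha : a ≠ 0) :
    {x : F | (x + a) ^ d - x ^ d = b}.ncard ≤ 3 := by
  have : Fact p.Prime := ⟨hp⟩
  have : CharP F p := charP_of_card_eq_prime_pow hcard
  have hd' : d = Fintype.card F / 2 + (p ^ k + 1) := by omega
  rw [hd']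
  exact ncard_setOf_add_pow_sub_pow_eq_le_three (hcard ▸ hmod)
    (fun _ => pow_pow_eq_self_of_pow_pow_two_mul_eq_self hcard hquot) ha b

/-- Theorem 3.6 (Theorem `thme`), case `p^n ≡ 1 (mod 4)`, `c = 1`: for
`d = (p^n-1)/2 + p^k + 1` with `n/gcd(n,k)` odd, one has `₁Δ_f ≤ 3`. -/
theorem stmt_16 (p n k : ℕ) (hp : p.Prime) (hodd : Odd p)
    (hn0 : 0 < n) (hk0 : 0 < k) (hquot : Odd (n / Nat.gcd n k))
    (hmod : p ^ n % 4 = 1) (d : ℕ) (hd : d = (p ^ n - 1) / 2 + p ^ k + 1)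
    (F : Type*) [Field F] [Fintype F] (hcard : Fintype.card F = p ^ n)
    (a b : F) (ha : a ≠ 0) :
    {x : F | (x + a) ^ d - x ^ d = b}.ncard ≤ 3 :=
  stmt_16_general p n k hp hquot hmod d hd F hcard a b ha
end
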